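/- arXiv:math/0005053 — 6 statements merged into one kernel-verified Lean document; each statement's English description precedes it below -/
import Mathlib

section
/- Let 3 ≤ m ≤ n. If m ≤ 5, or m = 6 and n ≤ 8, or (m,n) = (7,7), then D has a winning strategy in Dukego on the m×n board even when G has the first move (hence regardless of who moves first). -/
/-!
Formalization of Dukego (standard version).

A square is a pair (row, column), 1-indexed: row 1 is the southernmost row,
row m the northernmost; column 1 is the westernmost column, column n the
easternmost.  The board is m×n (m rows, n columns).
-/

/-- A square of the (generalized) board: (row, column), 1-indexed. -/
abbrev Square : Type := ℕ × ℕ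

/-- The square `s` lies on the m×n board. -/
def onBoard (m n : ℕ) (s : Square) : Prop :=
  1 ≤ s.1 ∧ s.1 ≤ m ∧ 1 ≤ s.2 ∧ s.2 ≤ n

/-- The square `s` is an edge square of the m×n board. -/
def isEdge (m n : ℕ) (s : Square) : Prop :=
  onBoard m n s ∧ (s.1 = 1 ∨ s.1 = m ∨ s.2 = 1 ∨ s.2 = n)

/-- Two squares are orthogonally adjacent (one step north, south, east or west). -/
def Adjacent (s t : Square) : Prop :=
  (s.1 = t.1 ∧ (s.2 = t.2 + 1 ∨ t.2 = s.2 + 1)) ∨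
  (s.2 = t.2 ∧ (s.1 = t.1 + 1 ∨ t.1 = s.1 + 1))

/-- The Duke's starting square: the central square of the m×n board; if m
(resp. n) is even, the southernmost (resp. easternmost) of the central
rows (resp. columns) is chosen. -/
def startSquare (m n : ℕ) : Square := ((m + 1) / 2, n / 2 + 1)

/-- A position of (standard) Dukego: the Duke's square together with the set of
squares occupied by G's black stones. -/
structure Pos where
  duke : Square
  stones : Set Square

/-- A legal move of the Duke on the m×n board: one square vertically or
horizontally, staying on the board, onto a square not occupied by a stone. -/
def DukeMove (m n : ℕ) (p q : Pos) : Prop :=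
  Adjacent p.duke q.duke ∧ onBoard m n q.duke ∧ q.duke ∉ p.stones ∧
    q.stones = p.stones

/-- A legal move of G on the m×n board: place a black stone on an empty square
of the board not occupied by the Duke. -/
def GMove (m n : ℕ) (p q : Pos) : Prop :=
  ∃ s, onBoard m n s ∧ s ∉ p.stones ∧ s ≠ p.duke ∧
    q.duke = p.duke ∧ q.stones = insert s p.stones

/-- `DWins m n t p`: with the m×n board in position `p`, and with it being
D's turn exactly when `t = true`, the player D (moving the Duke) can force a
win, i.e. force the Duke to reach an edge square of the board. -/
inductive DWins (m n : ℕ) : Bool → Pos → Prop where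
  /-- The Duke has reached an edge square: D has won. -/
  | edge (t : Bool) (p : Pos) (h : isEdge m n p.duke) : DWins m n t p
  /-- It is D's turn and some legal Duke move leads to a D-winning position. -/
  | dturn (p q : Pos) (hm : DukeMove m n p q) (hw : DWins m n false q) :
      DWins m n true p
  /-- It is G's turn and every legal G move leads to a D-winning position. -/
  | gturn (p : Pos) (h : ∀ q, GMove m n p q → DWins m n true q) :
      DWins m n false p

/-- `GWins m n t p`: with the m×n board in position `p`, and with it being
D's turn exactly when `t = true`, the player G (placing black stones) can force
a win, i.e. force a situation where, on D's turn, the Duke (not being on an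
edge square) has no legal move.  (When it is D's turn, the Duke must not be on
an edge square and every Duke move, if any, must lead to a G-winning position;
in particular a stuck Duke off the edge is an immediate win for G.) -/
inductive GWins (m n : ℕ) : Bool → Pos → Prop where
  | dturn (p : Pos) (he : ¬ isEdge m n p.duke)
      (h : ∀ q, DukeMove m n p q → GWins m n false q) : GWins m n true p
  | gturn (p q : Pos) (he : ¬ isEdge m n p.duke) (hm : GMove m n p q)
      (hw : GWins m n true q) : GWins m n false p

/-- The starting position: the Duke on its starting square, no stones played. -/
def startPos (m n : ℕ) : Pos := ⟨startSquare m n, ∅⟩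

/-- A well-formed position: the Duke is on the board, not on a stone, and all
stones are on the board. -/
def Wellformed (m n : ℕ) (p : Pos) : Prop :=
  onBoard m n p.duke ∧ p.duke ∉ p.stones ∧ ∀ s ∈ p.stones, onBoard m n s


lemma adj_of (a b a' b' : ℕ)
    (h : (a = a' ∧ (b = b' + 1 ∨ b' = b + 1)) ∨ (b = b' ∧ (a = a' + 1 ∨ a' = a + 1))) :
    Adjacent (a, b) (a', b') := h

lemma edge_of (m n : ℕ) (t : Bool) (a b : ℕ) (S : Set Square)
    (h1 : 1 ≤ a) (h2 : a ≤ m) (h3 : 1 ≤ b) (h4 : b ≤ n)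
    (h5 : a = 1 ∨ a = m ∨ b = 1 ∨ b = n) :
    DWins m n t ⟨(a, b), S⟩ :=
  DWins.edge _ _ ⟨⟨h1, h2, h3, h4⟩, h5⟩

/-- Helper: make a Duke move to square `(a,b)` from position `q`. -/
lemma dstep (m n : ℕ) (q : Pos) (a b : ℕ) (ht : Adjacent q.duke (a, b))
    (h1 : 1 ≤ a) (h2 : a ≤ m) (h3 : 1 ≤ b) (h4 : b ≤ n)
    (hs : (a, b) ∉ q.stones)
    (hw : DWins m n false ⟨(a, b), q.stones⟩) : DWins m n true q :=
  DWins.dturn q ⟨(a, b), q.stones⟩ ⟨ht, ⟨h1, h2, h3, h4⟩, hs, rfl⟩ hw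

/-- Run leftward along row 2 to the west edge. -/
lemma runL (m n : ℕ) (hm : 2 ≤ m) :
    ∀ c, 1 ≤ c → c ≤ n → ∀ S : Set Square,
      (∀ s ∈ S, ¬(s.1 = 1 ∧ s.2 ≤ c) ∧ ¬(s.1 = 2 ∧ s.2 < c)) →
      DWins m n false ⟨(2, c), S⟩ := by
  intro c
  induction c with
  | zero => omega
  | succ k ih =>
    intro h1 h2 S hS
    rcases Nat.eq_zero_or_pos k with hk | hk
    · subst hk
      exact edge_of m n _ 2 1 S (by omega) hm (by omega) (by omega) (by omega)
    · apply DWins.gturn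
      rintro q ⟨s, hsb, hsS, hsd, hqd, hqs⟩
      by_cases hs1 : s = (1, k + 1)
      · -- move left to (2, k)
        apply dstep m n q 2 k (by rw [hqd]; exact adj_of _ _ _ _ (by omega))
          (by omega) hm hk (by omega)
        · rw [hqs]
          simp only [Set.mem_insert_iff, Prod.mk.injEq, hs1]
          rintro (⟨h, h'⟩ | h)
          · omega
          · exact (hS _ h).2 ⟨rfl, by omega⟩
        · rw [hqs, hs1]
          apply ih (by omega) (by omega)
          rintro s' (h | h)
          · subst h
            exact ⟨fun hh => by simp at hh, fun hh => by simp at hh⟩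
          · exact ⟨fun hh => (hS _ h).1 ⟨hh.1, by omega⟩,
              fun hh => (hS _ h).2 ⟨hh.1, by omega⟩⟩
      · -- drop to (1, k+1): edge
        apply dstep m n q 1 (k + 1) (by rw [hqd]; exact adj_of _ _ _ _ (by omega))
          (by omega) (by omega) (by omega) h2
        · rw [hqs]
          rintro (h | h)
          · exact hs1 h.symm
          · exact (hS _ h).1 ⟨rfl, le_refl _⟩
        · exact edge_of m n _ 1 (k + 1) _ (by omega) (by omega) (by omega) h2 (by omega)

/-- Run rightward along row 2 to the east edge. -/
lemma runR (m n : ℕ) (hm : 2 ≤ m) :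
    ∀ k c, 1 ≤ c → n = c + k → ∀ S : Set Square,
      (∀ s ∈ S, ¬(s.1 = 1 ∧ c ≤ s.2) ∧ ¬(s.1 = 2 ∧ c < s.2)) →
      DWins m n false ⟨(2, c), S⟩ := by
  intro k
  induction k with
  | zero =>
    intro c h1 h2 S hS
    exact edge_of m n _ 2 c S (by omega) hm h1 (by omega) (by omega)
  | succ k ih =>
    intro c h1 h2 S hS
    apply DWins.gturn
    rintro q ⟨s, hsb, hsS, hsd, hqd, hqs⟩
    by_cases hs1 : s = (1, c)
    · -- move right to (2, c+1)
      apply dstep m n q 2 (c + 1) (by rw [hqd]; exact adj_of _ _ _ _ (by omega))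
        (by omega) hm (by omega) (by omega)
      · rw [hqs]
        simp only [Set.mem_insert_iff, Prod.mk.injEq, hs1]
        rintro (⟨h, h'⟩ | h)
        · omega
        · exact (hS _ h).2 ⟨rfl, by omega⟩
      · rw [hqs, hs1]
        apply ih (c + 1) (by omega) (by omega)
        rintro s' (h | h)
        · subst h
          exact ⟨fun hh => by simp at hh, fun hh => by simp at hh⟩
        · exact ⟨fun hh => (hS _ h).1 ⟨hh.1, by omega⟩,
            fun hh => (hS _ h).2 ⟨hh.1, by omega⟩⟩
    · -- drop to (1, c): edge
      apply dstep m n q 1 c (by rw [hqd]; exact adj_of _ _ _ _ (by omega))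
        (by omega) (by omega) h1 (by omega)
      · rw [hqs]
        rintro (h | h)
        · exact hs1 h.symm
        · exact (hS _ h).1 ⟨rfl, le_refl _⟩
      · exact edge_of m n _ 1 c _ (by omega) (by omega) h1 (by omega) (by omega)

/-- Duke on (2,c), threat (1,c), left side clear: D wins with G to move. -/
lemma lemC_L (m n c : ℕ) (S : Set Square) (hm : 2 ≤ m) (hc : 2 ≤ c) (hcn : c ≤ n)
    (h1 : (1, c) ∉ S) (hS : ∀ s ∈ S, ¬(s.1 ≤ 2 ∧ s.2 ≤ c - 1)) :
    DWins m n false ⟨(2, c), S⟩ := by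
  apply DWins.gturn
  rintro q ⟨s, hsb, hsS, hsd, hqd, hqs⟩
  by_cases hs1 : s = (1, c)
  · -- move left to (2, c-1) and run
    apply dstep m n q 2 (c - 1) (by rw [hqd]; exact adj_of _ _ _ _ (by omega))
      (by omega) hm (by omega) (by omega)
    · rw [hqs, hs1]
      simp only [Set.mem_insert_iff, Prod.mk.injEq]
      rintro (⟨h, h'⟩ | h)
      · omega
      · exact hS _ h ⟨by omega, by omega⟩
    · rw [hqs, hs1]
      apply runL m n hm (c - 1) (by omega) (by omega)
      rintro s' (h | h)
      · subst h
        exact ⟨fun hh => by simp at hh; omega, fun hh => by simp at hh⟩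
      · exact ⟨fun hh => hS _ h ⟨by omega, by omega⟩,
          fun hh => hS _ h ⟨by omega, by omega⟩⟩
  · -- drop to (1, c): edge
    apply dstep m n q 1 c (by rw [hqd]; exact adj_of _ _ _ _ (by omega))
      (by omega) (by omega) (by omega) hcn
    · rw [hqs]
      rintro (h | h)
      · exact hs1 h.symm
      · exact h1 h
    · exact edge_of m n _ 1 c _ (by omega) (by omega) (by omega) hcn (by omega)

/-- Duke on (2,c), threat (1,c), right side clear: D wins with G to move. -/
lemma lemC_R (m n c : ℕ) (S : Set Square) (hm : 2 ≤ m) (hc : 1 ≤ c) (hcn : c + 1 ≤ n)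
    (h1 : (1, c) ∉ S) (hS : ∀ s ∈ S, ¬(s.1 ≤ 2 ∧ c + 1 ≤ s.2)) :
    DWins m n false ⟨(2, c), S⟩ := by
  apply DWins.gturn
  rintro q ⟨s, hsb, hsS, hsd, hqd, hqs⟩
  by_cases hs1 : s = (1, c)
  · -- move right to (2, c+1) and run
    apply dstep m n q 2 (c + 1) (by rw [hqd]; exact adj_of _ _ _ _ (by omega))
      (by omega) hm (by omega) hcn
    · rw [hqs, hs1]
      simp only [Set.mem_insert_iff, Prod.mk.injEq]
      rintro (⟨h, h'⟩ | h)
      · omega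
      · exact hS _ h ⟨by omega, by omega⟩
    · rw [hqs, hs1]
      apply runR m n hm (n - (c + 1)) (c + 1) (by omega) (by omega)
      rintro s' (h | h)
      · subst h
        exact ⟨fun hh => by simp at hh, fun hh => by simp at hh⟩
      · exact ⟨fun hh => hS _ h ⟨by omega, by omega⟩,
          fun hh => hS _ h ⟨by omega, by omega⟩⟩
  · -- drop to (1, c): edge
    apply dstep m n q 1 c (by rw [hqd]; exact adj_of _ _ _ _ (by omega))
      (by omega) (by omega) hc (by omega)
    · rw [hqs]
      rintro (h | h)
      · exact hs1 h.symm
      · exact h1 h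
    · exact edge_of m n _ 1 c _ (by omega) (by omega) hc (by omega) (by omega)

/-- Duke on (2,c), both sides clear (threat square (1,c) may be occupied). -/
lemma lemC2 (m n c : ℕ) (S : Set Square) (hm : 2 ≤ m) (hc : 2 ≤ c) (hcn : c + 1 ≤ n)
    (hS : ∀ s ∈ S, s.1 ≤ 2 → s.2 = c) :
    DWins m n false ⟨(2, c), S⟩ := by
  apply DWins.gturn
  rintro q ⟨s, hsb, hsS, hsd, hqd, hqs⟩
  by_cases hsR : s.1 ≤ 2 ∧ c + 1 ≤ s.2
  · -- right side poisoned by s; s is not (1,c); use drop or go left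
    by_cases h1 : (1, c) ∈ S
    · -- go left to (2, c-1) and run left
      apply dstep m n q 2 (c - 1) (by rw [hqd]; exact adj_of _ _ _ _ (by omega))
        (by omega) hm (by omega) (by omega)
      · rw [hqs]
        simp only [Set.mem_insert_iff, Prod.mk.injEq]
        rintro (⟨h, h'⟩ | h)
        · omega
        · have := hS _ h (by omega); omega
      · rw [hqs]
        apply runL m n hm (c - 1) (by omega) (by omega)
        rintro s' (h | h)
        · subst h
          exact ⟨fun hh => by omega, fun hh => by omega⟩
        · exact ⟨fun hh => by have := hS _ h (by omega); omega,
            fun hh => by have := hS _ h (by omega); omega⟩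
    · -- drop to (1, c): edge
      apply dstep m n q 1 c (by rw [hqd]; exact adj_of _ _ _ _ (by omega))
        (by omega) (by omega) (by omega) (by omega)
      · rw [hqs]
        rintro (h | h)
        · have h2 : c + 1 ≤ c := by rw [← h] at hsR; exact hsR.2
          omega
        · exact h1 h
      · exact edge_of m n _ 1 c _ (by omega) (by omega) (by omega) (by omega) (by omega)
  · -- go right to (2, c+1) and run right
    apply dstep m n q 2 (c + 1) (by rw [hqd]; exact adj_of _ _ _ _ (by omega))
      (by omega) hm (by omega) hcn
    · rw [hqs]
      simp only [Set.mem_insert_iff, Prod.mk.injEq]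
      rintro (⟨h, h'⟩ | h)
      · exact hsR (by omega)
      · have := hS _ h (by omega); omega
    · rw [hqs]
      apply runR m n hm (n - (c + 1)) (c + 1) (by omega) (by omega)
      rintro s' (h | h)
      · subst h
        exact ⟨fun hh => hsR (by omega), fun hh => hsR (by omega)⟩
      · exact ⟨fun hh => by have := hS _ h (by omega); omega,
          fun hh => by have := hS _ h (by omega); omega⟩

/-- Transport of D-winning positions along a board isomorphism. -/
lemma transport (m n m' n' : ℕ) (σ : Square → Square)
    (Hb : ∀ s, onBoard m n s → onBoard m' n' (σ s))
    (Hinj : ∀ a b, onBoard m n a → onBoard m n b → σ a = σ b → a = b)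
    (Hsurj : ∀ s', onBoard m' n' s' → ∃ s, onBoard m n s ∧ σ s = s')
    (Hadj : ∀ a b, onBoard m n a → onBoard m n b → Adjacent a b → Adjacent (σ a) (σ b))
    (Hedge : ∀ s, onBoard m n s → isEdge m n s → isEdge m' n' (σ s)) :
    ∀ t p, DWins m n t p → Wellformed m n p →
      DWins m' n' t ⟨σ p.duke, σ '' p.stones⟩ := by
  intro t p hw
  induction hw with
  | edge t p h =>
    intro hwf
    exact DWins.edge _ _ (Hedge _ hwf.1 h)
  | dturn p q hmv hw ih =>
    intro hwf
    obtain ⟨hadj, hqb, hqs, hst⟩ := hmv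
    have hwfq : Wellformed m n q :=
      ⟨hqb, by rw [hst]; exact hqs, by rw [hst]; exact hwf.2.2⟩
    apply DWins.dturn _ ⟨σ q.duke, σ '' q.stones⟩
    · refine ⟨Hadj _ _ hwf.1 hqb hadj, Hb _ hqb, ?_, by rw [hst]⟩
      rintro ⟨x, hxS, hx⟩
      exact hqs (Hinj x q.duke (hwf.2.2 x hxS) hqb hx ▸ hxS)
    · exact ih hwfq
  | gturn p h ih =>
    intro hwf
    apply DWins.gturn
    rintro q' ⟨s', hs'b, hs'S, hs'd, hq'd, hq's⟩
    obtain ⟨s, hsb, hss⟩ := Hsurj s' hs'b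
    have hsS : s ∉ p.stones := fun hc => hs'S ⟨s, hc, hss⟩
    have hsd : s ≠ p.duke := fun hc => hs'd (by rw [← hss, hc])
    have hgm : GMove m n p ⟨p.duke, insert s p.stones⟩ := ⟨s, hsb, hsS, hsd, rfl, rfl⟩
    have hwfq : Wellformed m n ⟨p.duke, insert s p.stones⟩ := by
      refine ⟨hwf.1, ?_, ?_⟩
      · rintro (hc | hc)
        · exact hsd hc.symm
        · exact hwf.2.1 hc
      · rintro x (hx | hx)
        · exact hx ▸ hsb
        · exact hwf.2.2 x hx
    have hres := ih _ hgm hwfq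
    rw [show (σ '' (⟨p.duke, insert s p.stones⟩ : Pos).stones) =
        insert s' (σ '' p.stones) by
      simp only [Set.image_insert_eq, hss]] at hres
    have hq : q' = ⟨σ p.duke, insert s' (σ '' p.stones)⟩ := by
      cases q'
      simp only [Pos.mk.injEq]
      exact ⟨hq'd, hq's⟩
    rw [hq]
    exact hres

/-- Duke on (r, n-1), threat (r,n), upper side of east columns clear. -/
lemma colCR_up (m n r : ℕ) (S : Set Square) (hn : 2 ≤ n) (hr : 1 ≤ r) (hrm : r + 1 ≤ m)
    (hSb : ∀ s ∈ S, onBoard m n s)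
    (h1 : (r, n) ∉ S) (h2 : (r, n - 1) ∉ S)
    (hS : ∀ s ∈ S, ¬(r + 1 ≤ s.1 ∧ n - 1 ≤ s.2)) :
    DWins m n false ⟨(r, n - 1), S⟩ := by
  classical
  set σ : Square → Square := fun s => (s.2, n + 1 - s.1) with hσ
  set τ : Square → Square := fun s => (n + 1 - s.2, s.1) with hτ
  have hsrc : DWins n m false ⟨(2, r), τ '' S⟩ := by
    apply lemC_R n m r (τ '' S) hn hr hrm
    · rintro ⟨x, hx, hxe⟩
      obtain ⟨x1, x2⟩ := x
      have hb := hSb _ hx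
      simp only [hτ, Prod.mk.injEq, true_and, and_true] at hxe
      obtain ⟨he1, he2⟩ := hxe
      have : x2 = n := by simp only [onBoard] at hb; omega
      subst this; subst he2
      exact h1 hx
    · rintro s ⟨x, hx, rfl⟩ ⟨ha, hb⟩
      obtain ⟨x1, x2⟩ := x
      have hob := hSb _ hx
      simp only [onBoard] at hob
      simp only [hτ] at ha hb
      exact hS _ hx ⟨by omega, by omega⟩
  have hwf : Wellformed n m ⟨(2, r), τ '' S⟩ := by
    refine ⟨show onBoard n m (2, r) from ⟨by omega, hn, hr, by omega⟩, ?_, ?_⟩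
    · rintro ⟨x, hx, hxe⟩
      obtain ⟨x1, x2⟩ := x
      have hob := hSb _ hx
      simp only [onBoard] at hob
      simp only [hτ, Prod.mk.injEq, true_and, and_true] at hxe
      have : x1 = r ∧ x2 = n - 1 := by omega
      obtain ⟨rfl, rfl⟩ := this
      exact h2 hx
    · rintro x ⟨y, hy, rfl⟩
      obtain ⟨y1, y2⟩ := y
      have hob := hSb _ hy
      simp only [onBoard] at hob
      show onBoard n m (τ (y1, y2))
      simp only [onBoard, hτ]
      exact ⟨by omega, by omega, by omega, by omega⟩
  have key := transport n m m n σ ?_ ?_ ?_ ?_ ?_ false ⟨(2, r), τ '' S⟩ hsrc hwf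
  · have himg : σ '' (τ '' S) = S := by
      ext x
      constructor
      · rintro ⟨y, ⟨z, hz, rfl⟩, rfl⟩
        obtain ⟨z1, z2⟩ := z
        have hob := hSb _ hz
        simp only [onBoard] at hob
        have : σ (τ (z1, z2)) = (z1, z2) := by
          simp only [hσ, hτ, Prod.mk.injEq, true_and, and_true]
          omega
        rw [this]
        exact hz
      · intro hx
        refine ⟨τ x, ⟨x, hx, rfl⟩, ?_⟩
        obtain ⟨x1, x2⟩ := x
        have hob := hSb _ hx
        simp only [onBoard] at hob
        simp only [hσ, hτ, Prod.mk.injEq, true_and, and_true]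
        omega
    have hduke : σ ((2 : ℕ), r) = (r, n - 1) := by
      simp only [hσ, Prod.mk.injEq, true_and, and_true]
      omega
    simp only [hduke, himg] at key
    exact key
  · rintro ⟨x1, x2⟩ hob
    simp only [onBoard, hσ] at hob ⊢
    omega
  · rintro ⟨x1, x2⟩ ⟨y1, y2⟩ ha hb he
    simp only [onBoard] at ha hb
    simp only [hσ, Prod.mk.injEq, true_and, and_true] at he ⊢
    omega
  · rintro ⟨x1, x2⟩ hob
    refine ⟨τ (x1, x2), ?_, ?_⟩
    · simp only [onBoard, hτ] at hob ⊢
      omega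
    · simp only [onBoard] at hob
      simp only [hσ, hτ, Prod.mk.injEq, true_and, and_true]
      omega
  · rintro ⟨x1, x2⟩ ⟨y1, y2⟩ ha hb hadj
    simp only [onBoard] at ha hb
    simp only [Adjacent, hσ] at hadj ⊢
    omega
  · rintro ⟨x1, x2⟩ hob he
    simp only [onBoard] at hob
    simp only [isEdge, onBoard, hσ] at he ⊢
    omega

/-- Duke on (m-1, c), threat (m,c), left side of top rows clear. -/
lemma lemCtop_L (m n c : ℕ) (S : Set Square) (hm : 2 ≤ m) (hc : 2 ≤ c) (hcn : c ≤ n)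
    (hSb : ∀ s ∈ S, onBoard m n s)
    (h1 : (m, c) ∉ S) (h2 : (m - 1, c) ∉ S)
    (hS : ∀ s ∈ S, ¬(m - 1 ≤ s.1 ∧ s.2 ≤ c - 1)) :
    DWins m n false ⟨(m - 1, c), S⟩ := by
  classical
  set σ : Square → Square := fun s => (m + 1 - s.1, s.2) with hσ
  have hsrc : DWins m n false ⟨(2, c), σ '' S⟩ := by
    apply lemC_L m n c (σ '' S) hm hc hcn
    · rintro ⟨x, hx, hxe⟩
      obtain ⟨x1, x2⟩ := x
      have hob := hSb _ hx
      simp only [onBoard] at hob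
      simp only [hσ, Prod.mk.injEq, true_and, and_true] at hxe
      have : x1 = m ∧ x2 = c := by omega
      obtain ⟨rfl, rfl⟩ := this
      exact h1 hx
    · rintro s ⟨x, hx, rfl⟩ ⟨ha, hb⟩
      obtain ⟨x1, x2⟩ := x
      have hob := hSb _ hx
      simp only [onBoard] at hob
      simp only [hσ] at ha hb
      exact hS _ hx ⟨by omega, by omega⟩
  have hwf : Wellformed m n ⟨(2, c), σ '' S⟩ := by
    refine ⟨show onBoard m n (2, c) from ⟨by omega, hm, by omega, hcn⟩, ?_, ?_⟩
    · rintro ⟨x, hx, hxe⟩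
      obtain ⟨x1, x2⟩ := x
      have hob := hSb _ hx
      simp only [onBoard] at hob
      simp only [hσ, Prod.mk.injEq, true_and, and_true] at hxe
      have : x1 = m - 1 ∧ x2 = c := by omega
      obtain ⟨rfl, rfl⟩ := this
      exact h2 hx
    · rintro x ⟨y, hy, rfl⟩
      obtain ⟨y1, y2⟩ := y
      have hob := hSb _ hy
      simp only [onBoard] at hob
      show onBoard m n (σ (y1, y2))
      simp only [onBoard, hσ]
      exact ⟨by omega, by omega, by omega, by omega⟩
  have key := transport m n m n σ ?_ ?_ ?_ ?_ ?_ false ⟨(2, c), σ '' S⟩ hsrc hwf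
  · have himg : σ '' (σ '' S) = S := by
      ext x
      constructor
      · rintro ⟨y, ⟨z, hz, rfl⟩, rfl⟩
        obtain ⟨z1, z2⟩ := z
        have hob := hSb _ hz
        simp only [onBoard] at hob
        have : σ (σ (z1, z2)) = (z1, z2) := by
          simp only [hσ, Prod.mk.injEq, true_and, and_true]
          omega
        rw [this]
        exact hz
      · intro hx
        refine ⟨σ x, ⟨x, hx, rfl⟩, ?_⟩
        obtain ⟨x1, x2⟩ := x
        have hob := hSb _ hx
        simp only [onBoard] at hob
        simp only [hσ, Prod.mk.injEq, true_and, and_true]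
        omega
    have hduke : σ ((2 : ℕ), c) = (m - 1, c) := by
      simp only [hσ, Prod.mk.injEq, true_and, and_true]
      omega
    simp only [hduke, himg] at key
    exact key
  · rintro ⟨x1, x2⟩ hob
    simp only [onBoard, hσ] at hob ⊢
    omega
  · rintro ⟨x1, x2⟩ ⟨y1, y2⟩ ha hb he
    simp only [onBoard] at ha hb
    simp only [hσ, Prod.mk.injEq, true_and, and_true] at he ⊢
    omega
  · rintro ⟨x1, x2⟩ hob
    refine ⟨σ (x1, x2), ?_, ?_⟩
    · simp only [onBoard, hσ] at hob ⊢
      omega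
    · simp only [onBoard] at hob
      simp only [hσ, Prod.mk.injEq, true_and, and_true]
      omega
  · rintro ⟨x1, x2⟩ ⟨y1, y2⟩ ha hb hadj
    simp only [onBoard] at ha hb
    simp only [Adjacent, hσ] at hadj ⊢
    omega
  · rintro ⟨x1, x2⟩ hob he
    simp only [onBoard] at hob
    simp only [isEdge, onBoard, hσ] at he ⊢
    omega

/-- Southeast corner strategy: Duke on (3, n-3), G to move, with all stones
away from the bottom rows and the east columns. -/
lemma lemD23 (m n c : ℕ) (S : Set Square) (hm : 4 ≤ m) (hc : 2 ≤ c) (hn : n = c + 3)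
    (hSb : ∀ s ∈ S, onBoard m n s)
    (hS : ∀ s ∈ S, ¬(s.1 ≤ 2 ∨ (s.1 = 3 ∧ c + 1 ≤ s.2) ∨ (4 ≤ s.1 ∧ c + 2 ≤ s.2))) :
    DWins m n false ⟨(3, c), S⟩ := by
  apply DWins.gturn
  rintro q ⟨s, hsb, hsS, hsd, hqd, hqs⟩
  by_cases hkey : s = (1, c) ∨ s = (2, c)
  · -- bottom threat blocked: move east to (3, c+1)
    have hs12 : s.1 ≤ 2 ∧ s.2 = c := by
      rcases hkey with rfl | rfl <;> exact ⟨by omega, rfl⟩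
    apply dstep m n q 3 (c + 1) (by rw [hqd]; exact adj_of _ _ _ _ (by omega))
      (by omega) (by omega) (by omega) (by omega)
    · rw [hqs]
      rintro (h | h)
      · rw [← h] at hs12; omega
      · exact hS _ h (Or.inr (Or.inl ⟨rfl, by omega⟩))
    · rw [hqs]
      apply DWins.gturn
      rintro q2 ⟨s2, hs2b, hs2S, hs2d, hq2d, hq2s⟩
      by_cases hkey2 : s2.1 ≤ 2 ∧ c + 1 ≤ s2.2
      · -- east low zone blocked: move east again to (3, c+2) and use the NE column
        apply dstep m n q2 3 (c + 2) (by rw [hq2d]; exact adj_of _ _ _ _ (by omega))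
          (by omega) (by omega) (by omega) (by omega)
        · rw [hq2s]
          rintro (h | h)
          · rw [← h] at hkey2; exact absurd hkey2.1 (by omega)
          · rcases h with h | h
            · rw [← h] at hs12; omega
            · exact hS _ h (Or.inr (Or.inl ⟨rfl, by omega⟩))
        · rw [hq2s]
          have key := colCR_up m n 3 (insert s2 (insert s S)) (by omega) (by omega) hm
            ?_ ?_ ?_ ?_
          · rw [show n - 1 = c + 2 by omega] at key
            exact key
          · rintro x (rfl | rfl | hx)
            · exact hs2b
            · exact hsb
            · exact hSb _ hx
          · rintro (h | h | h)
            · rw [← h] at hkey2; exact absurd hkey2.1 (by omega)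
            · rw [← h] at hs12; omega
            · exact hS _ h (Or.inr (Or.inl ⟨rfl, by omega⟩))
          · rw [show n - 1 = c + 2 by omega]
            rintro (h | h | h)
            · rw [← h] at hkey2; exact absurd hkey2.1 (by omega)
            · rw [← h] at hs12; omega
            · exact hS _ h (Or.inr (Or.inl ⟨rfl, by omega⟩))
          · rintro x (rfl | rfl | hx) ⟨ha, hb⟩
            · exact absurd hkey2.1 (by omega)
            · omega
            · exact hS _ hx (Or.inr (Or.inr ⟨by omega, by omega⟩))
      · -- drop to (2, c+1) and use lemC_R
        apply dstep m n q2 2 (c + 1) (by rw [hq2d]; exact adj_of _ _ _ _ (by omega))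
          (by omega) (by omega) (by omega) (by omega)
        · rw [hq2s]
          rintro (h | h)
          · exact hkey2 (by rw [← h]; exact ⟨by omega, by omega⟩)
          · rcases h with h | h
            · rw [← h] at hs12; omega
            · exact hS _ h (Or.inl (by omega))
        · rw [hq2s]
          apply lemC_R m n (c + 1) _ (by omega) (by omega) (by omega)
          · rintro (h | h | h)
            · exact hkey2 (by rw [← h]; exact ⟨by omega, by omega⟩)
            · rw [← h] at hs12; omega
            · exact hS _ h (Or.inl (by omega))
          · rintro x (rfl | rfl | hx) ⟨ha, hb⟩
            · exact hkey2 ⟨ha, by omega⟩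
            · omega
            · exact hS _ hx (Or.inl ha)
  · -- bottom threat live: drop to (2, c)
    push_neg at hkey
    apply dstep m n q 2 c (by rw [hqd]; exact adj_of _ _ _ _ (by omega))
      (by omega) (by omega) (by omega) (by omega)
    · rw [hqs]
      rintro (h | h)
      · exact hkey.2 h.symm
      · exact hS _ h (Or.inl (by omega))
    · rw [hqs]
      by_cases hside : s.1 ≤ 2 ∧ s.2 ≤ c - 1
      · apply lemC_R m n c _ (by omega) (by omega) (by omega)
        · rintro (h | h)
          · exact hkey.1 h.symm
          · exact hS _ h (Or.inl (by omega))
        · rintro x (rfl | hx) ⟨ha, hb⟩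
          · omega
          · exact hS _ hx (Or.inl ha)
      · apply lemC_L m n c _ (by omega) hc (by omega)
        · rintro (h | h)
          · exact hkey.1 h.symm
          · exact hS _ h (Or.inl (by omega))
        · rintro x (rfl | hx)
          · exact hside
          · intro ⟨ha, hb⟩
            exact hS _ hx (Or.inl ha)

/-- 6×6-style corner: Duke on (3, n-2), empty board, G to move. -/
lemma lemD22 (m n c : ℕ) (hm : 4 ≤ m) (hc : 2 ≤ c) (hn : n = c + 2) :
    DWins m n false ⟨(3, c), (∅ : Set Square)⟩ := by
  apply DWins.gturn
  rintro q ⟨s, hsb, hsS, hsd, hqd, hqs⟩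
  by_cases hkey : s = (1, c) ∨ s = (2, c)
  · -- bottom blocked: move east to (3, c+1) = (3, n-1), run up the east columns
    have hs12 : s.1 ≤ 2 ∧ s.2 = c := by
      rcases hkey with rfl | rfl <;> exact ⟨by omega, rfl⟩
    apply dstep m n q 3 (c + 1) (by rw [hqd]; exact adj_of _ _ _ _ (by omega))
      (by omega) (by omega) (by omega) (by omega)
    · rw [hqs]
      rintro (h | h)
      · rw [← h] at hs12; omega
      · exact absurd h (Set.notMem_empty _)
    · rw [hqs]
      have key := colCR_up m n 3 (insert s ∅) (by omega) (by omega) hm ?_ ?_ ?_ ?_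
      · rw [show n - 1 = c + 1 by omega] at key
        exact key
      · rintro x (rfl | h)
        · exact hsb
        · exact absurd h (Set.notMem_empty _)
      · rintro (h | h)
        · rw [← h] at hs12; omega
        · exact absurd h (Set.notMem_empty _)
      · rw [show n - 1 = c + 1 by omega]
        rintro (h | h)
        · rw [← h] at hs12; omega
        · exact absurd h (Set.notMem_empty _)
      · rintro x (rfl | h)
        · rintro ⟨ha, hb⟩; omega
        · exact absurd h (Set.notMem_empty _)
  · -- bottom threat live: drop to (2, c)
    push_neg at hkey
    apply dstep m n q 2 c (by rw [hqd]; exact adj_of _ _ _ _ (by omega))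
      (by omega) (by omega) (by omega) (by omega)
    · rw [hqs]
      rintro (h | h)
      · exact hkey.2 h.symm
      · exact absurd h (Set.notMem_empty _)
    · rw [hqs]
      by_cases hside : s.1 ≤ 2 ∧ s.2 ≤ c - 1
      · apply lemC_R m n c _ (by omega) (by omega) (by omega)
        · rintro (h | h)
          · exact hkey.1 h.symm
          · exact absurd h (Set.notMem_empty _)
        · rintro x (rfl | h)
          · rintro ⟨ha, hb⟩; omega
          · exact absurd h (Set.notMem_empty _)
      · apply lemC_L m n c _ (by omega) hc (by omega)
        · rintro (h | h)
          · exact hkey.1 h.symm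
          · exact absurd h (Set.notMem_empty _)
        · rintro x (rfl | h)
          · exact hside
          · exact absurd h (Set.notMem_empty _)

/-- 5×n: Duke on (3, c), empty board, G to move. -/
lemma lemB5 (n c : ℕ) (hc : 2 ≤ c) (hcn : c + 1 ≤ n) :
    DWins 5 n false ⟨(3, c), (∅ : Set Square)⟩ := by
  apply DWins.gturn
  rintro q ⟨s, hsb, hsS, hsd, hqd, hqs⟩
  by_cases h2 : s = (2, c)
  · -- go up to (4, c) and use the top
    apply dstep 5 n q 4 c (by rw [hqd]; exact adj_of _ _ _ _ (by omega))
      (by omega) (by omega) (by omega) (by omega)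
    · rw [hqs, h2]
      rintro (h | h)
      · exact absurd h (by simp)
      · exact absurd h (Set.notMem_empty _)
    · rw [hqs, h2]
      have key := lemCtop_L 5 n c (insert (2, c) ∅) (by omega) hc (by omega) ?_ ?_ ?_ ?_
      · exact key
      · rintro x (rfl | h)
        · exact ⟨by omega, by omega, by omega, by omega⟩
        · exact absurd h (Set.notMem_empty _)
      · rintro (h | h)
        · exact absurd h (by simp)
        · exact absurd h (Set.notMem_empty _)
      · rintro (h | h)
        · have : (5 : ℕ) - 1 = 4 := rfl
          rw [this] at h
          exact absurd h (by simp)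
        · exact absurd h (Set.notMem_empty _)
      · rintro x (rfl | h)
        · rintro ⟨ha, hb⟩; omega
        · exact absurd h (Set.notMem_empty _)
  · by_cases h1 : s = (1, c)
    · -- drop to (2, c): both sides free
      apply dstep 5 n q 2 c (by rw [hqd]; exact adj_of _ _ _ _ (by omega))
        (by omega) (by omega) (by omega) (by omega)
      · rw [hqs, h1]
        rintro (h | h)
        · exact absurd h (by simp)
        · exact absurd h (Set.notMem_empty _)
      · rw [hqs, h1]
        apply lemC2 5 n c _ (by omega) hc hcn
        rintro x (rfl | h)
        · intro _; rfl
        · exact absurd h (Set.notMem_empty _)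
    · -- drop to (2, c): threat square free
      apply dstep 5 n q 2 c (by rw [hqd]; exact adj_of _ _ _ _ (by omega))
        (by omega) (by omega) (by omega) (by omega)
      · rw [hqs]
        rintro (h | h)
        · exact h2 h.symm
        · exact absurd h (Set.notMem_empty _)
      · rw [hqs]
        by_cases hside : s.1 ≤ 2 ∧ s.2 ≤ c - 1
        · apply lemC_R 5 n c _ (by omega) (by omega) (by omega)
          · rintro (h | h)
            · exact h1 h.symm
            · exact absurd h (Set.notMem_empty _)
          · rintro x (rfl | h)
            · rintro ⟨ha, hb⟩; omega
            · exact absurd h (Set.notMem_empty _)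
        · apply lemC_L 5 n c _ (by omega) hc (by omega)
          · rintro (h | h)
            · exact h1 h.symm
            · exact absurd h (Set.notMem_empty _)
          · rintro x (rfl | h)
            · exact hside
            · exact absurd h (Set.notMem_empty _)

/-- Transported version of `lemD23` on the 7×7 board under a symmetry σ,
for a single stone at (a,b). -/
lemma lemD23sym (σ : Square → Square)
    (Hb : ∀ s, onBoard 7 7 s → onBoard 7 7 (σ s))
    (Hinv : ∀ s, onBoard 7 7 s → σ (σ s) = s)
    (Hadj : ∀ a b, onBoard 7 7 a → onBoard 7 7 b → Adjacent a b → Adjacent (σ a) (σ b))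
    (Hedge : ∀ s, onBoard 7 7 s → isEdge 7 7 s → isEdge 7 7 (σ s))
    (a b : ℕ) (hab : onBoard 7 7 ((a : ℕ), (b : ℕ)))
    (hne : σ (a, b) ≠ (3, 4))
    (hS : ¬((σ (a, b)).1 ≤ 2 ∨ ((σ (a, b)).1 = 3 ∧ 5 ≤ (σ (a, b)).2) ∨
        (4 ≤ (σ (a, b)).1 ∧ 6 ≤ (σ (a, b)).2))) :
    DWins 7 7 false ⟨σ (3, 4), insert ((a : ℕ), (b : ℕ)) ∅⟩ := by
  have hσb := Hb _ hab
  have hsrc : DWins 7 7 false ⟨(3, 4), insert (σ (a, b)) ∅⟩ := by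
    apply lemD23 7 7 4 _ (by omega) (by omega) rfl
    · rintro x (rfl | h)
      · exact hσb
      · exact absurd h (Set.notMem_empty _)
    · rintro x (rfl | h)
      · exact hS
      · exact absurd h (Set.notMem_empty _)
  have hwf : Wellformed 7 7 ⟨(3, 4), insert (σ (a, b)) ∅⟩ := by
    refine ⟨show onBoard 7 7 (3, 4) from ⟨by omega, by omega, by omega, by omega⟩, ?_, ?_⟩
    · rintro (h | h)
      · exact hne h.symm
      · exact absurd h (Set.notMem_empty _)
    · rintro x (rfl | h)
      · exact hσb
      · exact absurd h (Set.notMem_empty _)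
  have Hinj : ∀ x y, onBoard 7 7 x → onBoard 7 7 y → σ x = σ y → x = y := by
    intro x y hx hy hxy
    rw [← Hinv x hx, hxy, Hinv y hy]
  have Hsurj : ∀ s', onBoard 7 7 s' → ∃ s, onBoard 7 7 s ∧ σ s = s' := by
    intro s' hs'
    exact ⟨σ s', Hb _ hs', Hinv _ hs'⟩
  have key := transport 7 7 7 7 σ Hb Hinj Hsurj Hadj Hedge false
    ⟨(3, 4), insert (σ (a, b)) ∅⟩ hsrc hwf
  rw [show (σ '' (⟨(3, 4), insert (σ (a, b)) ∅⟩ : Pos).stones) = insert ((a : ℕ), (b : ℕ)) ∅ by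
    rw [show (⟨(3, 4), insert (σ (a, b)) ∅⟩ : Pos).stones = insert (σ (a, b)) ∅ from rfl,
      Set.image_insert_eq, Set.image_empty, Hinv _ hab]] at key
  exact key

/-- The 7×7 board: Duke at the centre, empty board, G to move. -/
lemma lem77 : DWins 7 7 false ⟨(4, 4), (∅ : Set Square)⟩ := by
  apply DWins.gturn
  rintro q ⟨s, hsb, hsS, hsd, hqd, hqs⟩
  obtain ⟨a, b⟩ := s
  have hb4 : 1 ≤ a ∧ a ≤ 7 ∧ 1 ≤ b ∧ b ≤ 7 := hsb
  obtain ⟨ha1, ha7, hb1, hb7⟩ := hb4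
  by_cases ha : a ≤ 4
  · -- use a northern corner strategy, from (5,4)
    apply dstep 7 7 q 5 4 (by rw [hqd]; exact adj_of _ _ _ _ (by omega))
      (by omega) (by omega) (by omega) (by omega)
    · rw [hqs]
      rintro (h | h)
      · injection h with h1 h2; omega
      · exact absurd h (Set.notMem_empty _)
    · rw [hqs]
      by_cases hb : 3 ≤ b
      · -- NE: σ = (8-i, 8-j)
        have key := lemD23sym (fun s => (8 - s.1, 8 - s.2)) ?_ ?_ ?_ ?_ a b hsb
          (by
            show (((8 - a : ℕ), (8 - b : ℕ)) : Square) ≠ ((3 : ℕ), (4 : ℕ))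
            simp only [ne_eq, Prod.mk.injEq]
            omega)
          (by
            show ¬(8 - a ≤ 2 ∨ (8 - a = 3 ∧ 5 ≤ 8 - b) ∨ (4 ≤ 8 - a ∧ 6 ≤ 8 - b))
            omega)
        · exact key
        · rintro ⟨x1, x2⟩ hx
          simp only [onBoard] at hx ⊢
          omega
        · rintro ⟨x1, x2⟩ hx
          simp only [onBoard] at hx
          show (((8 - (8 - x1) : ℕ), (8 - (8 - x2) : ℕ)) : Square) = ((x1 : ℕ), (x2 : ℕ))
          simp only [Prod.mk.injEq]
          omega
        · rintro ⟨x1, x2⟩ ⟨y1, y2⟩ hx hy hadj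
          simp only [onBoard] at hx hy
          simp only [Adjacent] at hadj ⊢
          omega
        · rintro ⟨x1, x2⟩ hx he
          simp only [onBoard] at hx
          simp only [isEdge, onBoard] at he ⊢
          omega
      · -- NW: σ = (8-i, j)
        have key := lemD23sym (fun s => (8 - s.1, s.2)) ?_ ?_ ?_ ?_ a b hsb
          (by
            show (((8 - a : ℕ), (b : ℕ)) : Square) ≠ ((3 : ℕ), (4 : ℕ))
            simp only [ne_eq, Prod.mk.injEq]
            omega)
          (by
            show ¬(8 - a ≤ 2 ∨ (8 - a = 3 ∧ 5 ≤ b) ∨ (4 ≤ 8 - a ∧ 6 ≤ b))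
            omega)
        · exact key
        · rintro ⟨x1, x2⟩ hx
          simp only [onBoard] at hx ⊢
          omega
        · rintro ⟨x1, x2⟩ hx
          simp only [onBoard] at hx
          show (((8 - (8 - x1) : ℕ), (x2 : ℕ)) : Square) = ((x1 : ℕ), (x2 : ℕ))
          simp only [Prod.mk.injEq, and_true, true_and]
          omega
        · rintro ⟨x1, x2⟩ ⟨y1, y2⟩ hx hy hadj
          simp only [onBoard] at hx hy
          simp only [Adjacent] at hadj ⊢
          omega
        · rintro ⟨x1, x2⟩ hx he
          simp only [onBoard] at hx
          simp only [isEdge, onBoard] at he ⊢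
          omega
  · -- use a southern corner strategy, from (3,4)
    apply dstep 7 7 q 3 4 (by rw [hqd]; exact adj_of _ _ _ _ (by omega))
      (by omega) (by omega) (by omega) (by omega)
    · rw [hqs]
      rintro (h | h)
      · injection h with h1 h2; omega
      · exact absurd h (Set.notMem_empty _)
    · rw [hqs]
      by_cases hb : 3 ≤ b
      · -- SW: σ = (i, 8-j)
        have key := lemD23sym (fun s => (s.1, 8 - s.2)) ?_ ?_ ?_ ?_ a b hsb
          (by
            show (((a : ℕ), (8 - b : ℕ)) : Square) ≠ ((3 : ℕ), (4 : ℕ))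
            simp only [ne_eq, Prod.mk.injEq]
            omega)
          (by
            show ¬(a ≤ 2 ∨ (a = 3 ∧ 5 ≤ 8 - b) ∨ (4 ≤ a ∧ 6 ≤ 8 - b))
            omega)
        · exact key
        · rintro ⟨x1, x2⟩ hx
          simp only [onBoard] at hx ⊢
          omega
        · rintro ⟨x1, x2⟩ hx
          simp only [onBoard] at hx
          show (((x1 : ℕ), (8 - (8 - x2) : ℕ)) : Square) = ((x1 : ℕ), (x2 : ℕ))
          simp only [Prod.mk.injEq, and_true, true_and]
          omega
        · rintro ⟨x1, x2⟩ ⟨y1, y2⟩ hx hy hadj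
          simp only [onBoard] at hx hy
          simp only [Adjacent] at hadj ⊢
          omega
        · rintro ⟨x1, x2⟩ hx he
          simp only [onBoard] at hx
          simp only [isEdge, onBoard] at he ⊢
          omega
      · -- SE: direct
        apply lemD23 7 7 4 _ (by omega) (by omega) rfl
        · rintro x (rfl | h)
          · exact hsb
          · exact absurd h (Set.notMem_empty _)
        · rintro x (rfl | h)
          · omega
          · exact absurd h (Set.notMem_empty _)

/-- for 3 ≤ m ≤ n with m ≤ 5, or m = 6 and n ≤ 8, or
(m,n) = (7,7), D has a winning strategy in Dukego on the m×n board even when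
G has the first move, hence regardless of who moves first. -/
theorem dukego_D_wins (m n : ℕ) (hm : 3 ≤ m) (hmn : m ≤ n)
    (h : m ≤ 5 ∨ (m = 6 ∧ n ≤ 8) ∨ (m = 7 ∧ n = 7)) :
    ∀ t : Bool, DWins m n t (startPos m n) := by
  intro t
  have hE : ∀ (P : Square → Prop), ∀ s ∈ (∅ : Set Square), P s :=
    fun P s h => absurd h (Set.notMem_empty s)
  have hcase : m = 3 ∨ m = 4 ∨ m = 5 ∨ (m = 6 ∧ (n = 6 ∨ n = 7 ∨ n = 8)) ∨
      (m = 7 ∧ n = 7) := by omega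
  rcases hcase with rfl | rfl | rfl | ⟨rfl, hn⟩ | ⟨rfl, rfl⟩
  · -- m = 3 : Duke starts on (2, n/2+1)
    cases t
    · exact lemC_L 3 n (n / 2 + 1) ∅ (by omega) (by omega) (by omega)
        (Set.notMem_empty _) (hE _)
    · apply dstep 3 n (startPos 3 n) 1 (n / 2 + 1)
        (adj_of _ _ _ _ (by omega)) (by omega) (by omega) (by omega) (by omega)
        (Set.notMem_empty _)
      exact edge_of 3 n false 1 (n / 2 + 1) _ (by omega) (by omega) (by omega)
        (by omega) (by omega)
  · -- m = 4
    cases t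
    · exact lemC_L 4 n (n / 2 + 1) ∅ (by omega) (by omega) (by omega)
        (Set.notMem_empty _) (hE _)
    · apply dstep 4 n (startPos 4 n) 1 (n / 2 + 1)
        (adj_of _ _ _ _ (by omega)) (by omega) (by omega) (by omega) (by omega)
        (Set.notMem_empty _)
      exact edge_of 4 n false 1 (n / 2 + 1) _ (by omega) (by omega) (by omega)
        (by omega) (by omega)
  · -- m = 5
    cases t
    · exact lemB5 n (n / 2 + 1) (by omega) (by omega)
    · apply dstep 5 n (startPos 5 n) 2 (n / 2 + 1)
        (adj_of _ _ _ _ (by omega)) (by omega) (by omega) (by omega) (by omega)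
        (Set.notMem_empty _)
      exact lemC_L 5 n (n / 2 + 1) ∅ (by omega) (by omega) (by omega)
        (Set.notMem_empty _) (hE _)
  · -- m = 6, n ∈ {6, 7, 8}
    cases t
    · rcases hn with rfl | rfl | rfl
      · exact lemD22 6 6 4 (by omega) (by omega) (by omega)
      · exact lemD23 6 7 4 ∅ (by omega) (by omega) (by omega) (hE _) (hE _)
      · exact lemD23 6 8 5 ∅ (by omega) (by omega) (by omega) (hE _) (hE _)
    · have h2 : n / 2 + 1 ≤ n - 1 := by omega
      apply dstep 6 n (startPos 6 n) 2 (n / 2 + 1)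
        (adj_of _ _ _ _ (by omega)) (by omega) (by omega) (by omega) (by omega)
        (Set.notMem_empty _)
      exact lemC_L 6 n (n / 2 + 1) ∅ (by omega) (by omega) (by omega)
        (Set.notMem_empty _) (hE _)
  · -- m = 7, n = 7
    cases t
    · exact lem77
    · apply dstep 7 7 (startPos 7 7) 3 4
        (adj_of _ _ _ _ (by omega)) (by omega) (by omega) (by omega) (by omega)
        (Set.notMem_empty _)
      exact lemD23 7 7 4 ∅ (by omega) (by omega) (by omega) (hE _) (hE _)
end

section
/- Let 7 ≤ m ≤ n with n ≥ 9. Then G has a winning strategy in Dukego on the m×n board even when D has the first move (hence regardless of who moves first). -/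
/-! ### Auxiliary development for G's winning strategy -/

namespace DukegoAux

/-- Row coordinate in a (possibly vertically flipped) frame. -/
def rr (m : ℕ) (e : Bool) (i : ℕ) : ℕ := if e then m + 1 - i else i

/-- Column coordinate in a (possibly horizontally flipped) frame. -/
def cc (n : ℕ) (f : Bool) (j : ℕ) : ℕ := if f then n + 1 - j else j

/-- Stones of `S`, viewed in the frame `(e, f)`. -/
def Tst (m n : ℕ) (e f : Bool) (S : Set Square) (i j : ℕ) : Prop :=
  (rr m e i, cc n f j) ∈ S

/-- a stone on row 2 (in frame coordinates) with column in `[a,b]`. -/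
def RB (T : ℕ → ℕ → Prop) (a b : ℕ) : Prop := ∃ j, a ≤ j ∧ j ≤ b ∧ T 2 j

/-- a stone on column 2 (in frame coordinates) with row in `[a,b]`. -/
def RL (T : ℕ → ℕ → Prop) (a b : ℕ) : Prop := ∃ i, a ≤ i ∧ i ≤ b ∧ T i 2

def X1 (m : ℕ) (T : ℕ → ℕ → Prop) : Prop := T (m-1) 2 ∨ RL T 4 (m-2)
def X2 (n : ℕ) (T : ℕ → ℕ → Prop) : Prop := T 2 (n-1) ∨ RB T 4 (n-2)
def LC (m : ℕ) (T : ℕ → ℕ → Prop) : Prop := T 3 2 ∨ (T 2 2 ∧ X1 m T)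
def RC (n : ℕ) (T : ℕ → ℕ → Prop) : Prop := T 2 3 ∨ (T 2 2 ∧ X2 n T)

/-- The local (per-frame) invariant, with `(r,c)` the Duke's square in frame
coordinates and `T` the stones in frame coordinates. -/
def LI (m n r c : ℕ) (T : ℕ → ℕ → Prop) : Prop :=
  (¬(r = 2 ∧ c = 2)) ∧
  (r = 2 → T 1 c ∧ (T 2 2 ∨ RB T 3 (c-1)) ∧ (T 2 (n-1) ∨ RB T (c+1) (n-2))) ∧
  (c = 2 → T r 1 ∧ (T 2 2 ∨ RL T 3 (r-1)) ∧ (T (m-1) 2 ∨ RL T (r+1) (m-2))) ∧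
  (r = 3 ∧ 4 ≤ c ∧ c ≤ n-3 →
      T 2 c ∨ ((T 2 2 ∨ RB T 3 (c-1)) ∧ (T 2 (n-1) ∨ RB T (c+1) (n-2)))) ∧
  (c = 3 ∧ 4 ≤ r ∧ r ≤ m-3 →
      T r 2 ∨ ((T 2 2 ∨ RL T 3 (r-1)) ∧ (T (m-1) 2 ∨ RL T (r+1) (m-2)))) ∧
  (r = 3 ∧ c = 3 → LC m T ∧ RC n T) ∧
  ((r = 4 ∧ c = 3) ∨ (r = 3 ∧ c = 4) → LC m T ∨ RC n T ∨ (X1 m T ∧ X2 n T)) ∧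
  ((r = 4 ∧ c = 4) ∨ (r = 5 ∧ c = 3) →
      T 2 2 ∨ LC m T ∨ RC n T ∨ T (m-1) 2 ∨ RL T 5 (m-2)) ∧
  (r = 3 ∧ c = 5 → T 2 2 ∨ LC m T ∨ RC n T ∨ T 2 (n-1) ∨ RB T 5 (n-2))

/-- The global invariant. -/
def Inv (m n : ℕ) (p : Pos) : Prop :=
  p.duke ∉ p.stones ∧
  2 ≤ p.duke.1 ∧ p.duke.1 ≤ m-1 ∧ 2 ≤ p.duke.2 ∧ p.duke.2 ≤ n-1 ∧
  ∀ e f : Bool, LI m n (rr m e p.duke.1) (cc n f p.duke.2) (Tst m n e f p.stones)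

section Mono

variable {m n : ℕ} {T T' : ℕ → ℕ → Prop}

/-- bounded pointwise implication -/
def PImp (m n : ℕ) (T T' : ℕ → ℕ → Prop) : Prop :=
  ∀ i j, i ≤ m → j ≤ n → T i j → T' i j

lemma RB_mono (hmn : 7 ≤ m ∧ 9 ≤ n) (hT : PImp m n T T') {a b : ℕ} (hb : b ≤ n) :
    RB T a b → RB T' a b :=
  fun ⟨j, h1, h2, h3⟩ => ⟨j, h1, h2, hT 2 j (by omega) (by omega) h3⟩

lemma RL_mono (hmn : 7 ≤ m ∧ 9 ≤ n) (hT : PImp m n T T') {a b : ℕ} (hb : b ≤ m) :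
    RL T a b → RL T' a b :=
  fun ⟨i, h1, h2, h3⟩ => ⟨i, h1, h2, hT i 2 (by omega) (by omega) h3⟩

lemma X1_mono (hmn : 7 ≤ m ∧ 9 ≤ n) (hT : PImp m n T T') : X1 m T → X1 m T' :=
  fun h => h.imp (hT _ _ (by omega) (by omega)) (RL_mono hmn hT (by omega))

lemma X2_mono (hmn : 7 ≤ m ∧ 9 ≤ n) (hT : PImp m n T T') : X2 n T → X2 n T' :=
  fun h => h.imp (hT _ _ (by omega) (by omega)) (RB_mono hmn hT (by omega))

lemma LC_mono (hmn : 7 ≤ m ∧ 9 ≤ n) (hT : PImp m n T T') : LC m T → LC m T' :=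
  fun h => h.imp (hT _ _ (by omega) (by omega))
    (fun h' => ⟨hT _ _ (by omega) (by omega) h'.1, X1_mono hmn hT h'.2⟩)

lemma RC_mono (hmn : 7 ≤ m ∧ 9 ≤ n) (hT : PImp m n T T') : RC n T → RC n T' :=
  fun h => h.imp (hT _ _ (by omega) (by omega))
    (fun h' => ⟨hT _ _ (by omega) (by omega) h'.1, X2_mono hmn hT h'.2⟩)

lemma LI_mono (hmn : 7 ≤ m ∧ 9 ≤ n) (hT : PImp m n T T') {r c : ℕ}
    (hr : r ≤ m) (hc : c ≤ n) : LI m n r c T → LI m n r c T' := by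
  intro h
  obtain ⟨h0, h2, h3, h4, h5, h6, h7, h8, h9⟩ := h
  refine ⟨h0, ?_, ?_, ?_, ?_, ?_, ?_, ?_, ?_⟩
  · exact fun hr' => ⟨hT _ _ (by omega) (by omega) (h2 hr').1,
      (h2 hr').2.1.imp (hT _ _ (by omega) (by omega)) (RB_mono hmn hT (by omega)),
      (h2 hr').2.2.imp (hT _ _ (by omega) (by omega)) (RB_mono hmn hT (by omega))⟩
  · exact fun hc' => ⟨hT _ _ (by omega) (by omega) (h3 hc').1,
      (h3 hc').2.1.imp (hT _ _ (by omega) (by omega)) (RL_mono hmn hT (by omega)),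
      (h3 hc').2.2.imp (hT _ _ (by omega) (by omega)) (RL_mono hmn hT (by omega))⟩
  · exact fun hg => (h4 hg).imp (hT _ _ (by omega) (by omega))
      (fun hh => ⟨hh.1.imp (hT _ _ (by omega) (by omega)) (RB_mono hmn hT (by omega)),
        hh.2.imp (hT _ _ (by omega) (by omega)) (RB_mono hmn hT (by omega))⟩)
  · exact fun hg => (h5 hg).imp (hT _ _ (by omega) (by omega))
      (fun hh => ⟨hh.1.imp (hT _ _ (by omega) (by omega)) (RL_mono hmn hT (by omega)),
        hh.2.imp (hT _ _ (by omega) (by omega)) (RL_mono hmn hT (by omega))⟩)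
  · exact fun hg => ⟨LC_mono hmn hT (h6 hg).1, RC_mono hmn hT (h6 hg).2⟩
  · exact fun hg => (h7 hg).imp (LC_mono hmn hT)
      (fun hh => hh.imp (RC_mono hmn hT) (fun h2 => ⟨X1_mono hmn hT h2.1, X2_mono hmn hT h2.2⟩))
  · exact fun hg => (h8 hg).imp (hT _ _ (by omega) (by omega)) (fun hh => hh.imp (LC_mono hmn hT)
      (fun hh => hh.imp (RC_mono hmn hT)
        (fun hh => hh.imp (hT _ _ (by omega) (by omega)) (RL_mono hmn hT (by omega)))))
  · exact fun hg => (h9 hg).imp (hT _ _ (by omega) (by omega)) (fun hh => hh.imp (LC_mono hmn hT)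
      (fun hh => hh.imp (RC_mono hmn hT)
        (fun hh => hh.imp (hT _ _ (by omega) (by omega)) (RB_mono hmn hT (by omega)))))

lemma LI_congr (hmn : 7 ≤ m ∧ 9 ≤ n) (hT : ∀ i j, i ≤ m → j ≤ n → (T i j ↔ T' i j)) {r c : ℕ}
    (hr : r ≤ m) (hc : c ≤ n) : LI m n r c T → LI m n r c T' :=
  LI_mono hmn (fun i j hi hj h => (hT i j hi hj).1 h) hr hc

end Mono

lemma Tst_insert_mono {m n : ℕ} {e f : Bool} {S : Set Square} (u : Square) :
    PImp m n (Tst m n e f S) (Tst m n e f (insert u S)) :=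
  fun _ _ _ _ h => Set.mem_insert_iff.2 (Or.inr h)

lemma rr_le {m : ℕ} (e : Bool) {i : ℕ} (h1 : 1 ≤ i) (h : i ≤ m) : rr m e i ≤ m := by
  unfold rr; split <;> omega

lemma cc_le {n : ℕ} (f : Bool) {j : ℕ} (h1 : 1 ≤ j) (h : j ≤ n) : cc n f j ≤ n := by
  unfold cc; split <;> omega

/-- Adding a stone (not on the Duke) preserves the invariant. -/
lemma Inv_insert {m n : ℕ} (hm : 7 ≤ m) (hn : 9 ≤ n) {p : Pos} (h : Inv m n p) {u : Square} (hu : u ≠ p.duke) :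
    Inv m n ⟨p.duke, insert u p.stones⟩ := by
  obtain ⟨h0, h1, h2, h3, h4, h5⟩ := h
  refine ⟨?_, h1, h2, h3, h4, fun e f => ?_⟩
  · simp only [Set.mem_insert_iff]
    rintro (rfl | hmem)
    · exact hu rfl
    · exact h0 hmem
  · show LI m n (rr m e p.duke.1) (cc n f p.duke.2) (Tst m n e f (insert u p.stones))
    exact LI_mono ⟨hm, hn⟩ (Tst_insert_mono u)
      (rr_le e (by omega) (by omega)) (cc_le f (by omega) (by omega)) (h5 e f)

end DukegoAux

namespace DukegoAux

lemma rr_comp {m : ℕ} (e e0 : Bool) {i : ℕ} (h : i ≤ m+1) :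
    rr m e0 (rr m e i) = rr m (xor e e0) i := by
  unfold rr; cases e <;> cases e0 <;> simp <;> omega

lemma cc_comp {n : ℕ} (f f0 : Bool) {j : ℕ} (h : j ≤ n+1) :
    cc n f0 (cc n f j) = cc n (xor f f0) j := by
  unfold cc; cases f <;> cases f0 <;> simp <;> omega

/-- Vacuous local invariant: no clause fires. -/
lemma LI_N {m n r c : ℕ} {T : ℕ → ℕ → Prop}
    (H : r ≠ 2 ∧ c ≠ 2 ∧ ¬(r = 3 ∧ 4 ≤ c ∧ c ≤ n-3) ∧ ¬(c = 3 ∧ 4 ≤ r ∧ r ≤ m-3) ∧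
      ¬(r = 3 ∧ c = 3) ∧ ¬(r = 4 ∧ c = 3) ∧ ¬(r = 3 ∧ c = 4) ∧ ¬(r = 4 ∧ c = 4) ∧
      ¬(r = 5 ∧ c = 3) ∧ ¬(r = 3 ∧ c = 5)) :
    LI m n r c T := by
  obtain ⟨a1, a2, a3, a4, a5, a6, a7, a8, a9, a10⟩ := H
  refine ⟨?_, ?_, ?_, ?_, ?_, ?_, ?_, ?_, ?_⟩ <;> intro hg
  · exact a1 hg.1
  · exact absurd hg a1
  · exact absurd hg a2
  · exact absurd hg a3
  · exact absurd hg a4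
  · exact absurd hg a5
  · exact hg.elim (fun h => absurd h a6) (fun h => absurd h a7)
  · exact hg.elim (fun h => absurd h a8) (fun h => absurd h a9)
  · exact absurd hg a10

/-- A good reply for G: a legal stone that re-establishes all local invariants. -/
def Good (m n : ℕ) (T : ℕ → ℕ → Prop) (r' c' a b : ℕ) : Prop :=
  1 ≤ a ∧ a ≤ m ∧ 1 ≤ b ∧ b ≤ n ∧ ¬ T a b ∧ ¬(a = r' ∧ b = c') ∧
  ∀ e f : Bool, LI m n (rr m e r') (cc n f c')
    (fun i j => (rr m e i = a ∧ cc n f j = b) ∨ T (rr m e i) (cc n f j))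

/-- Hypothesis bundle for the key preservation argument (in normalized frame). -/
structure KeyCtx (m n : ℕ) (T : ℕ → ℕ → Prop) (r c r' c' : ℕ) : Prop where
  hm : 7 ≤ m
  hn : 9 ≤ n
  hLI : ∀ e f : Bool, LI m n (rr m e r) (cc n f c) (fun i j => T (rr m e i) (cc n f j))
  hs1 : 2 ≤ r
  hs2 : r ≤ m-1
  hs3 : 2 ≤ c
  hs4 : c ≤ n-1
  ht1 : 2 ≤ r'
  ht2 : r' ≤ m-1
  ht3 : 2 ≤ c'
  ht4 : c' ≤ n-1
  hTd : ¬ T r c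
  hT' : ¬ T r' c'
  hadj : (r = r' ∧ (c = c'+1 ∨ c' = c+1)) ∨ (c = c' ∧ (r = r'+1 ∨ r' = r+1))
  hnr : 2*r' ≤ m+1
  hnc : 2*c' ≤ n+1

end DukegoAux

namespace DukegoAux

section Constructors

variable {m n : ℕ} {T : ℕ → ℕ → Prop}

lemma LI_SB {c : ℕ} (hm : 7 ≤ m) (hn : 9 ≤ n) (hlo : 4 ≤ c) (hhi : c ≤ n-3)
    (hmain : T 2 c ∨ ((T 2 2 ∨ RB T 3 (c-1)) ∧ (T 2 (n-1) ∨ RB T (c+1) (n-2))))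
    (h8 : c = 4 → LC m T ∨ RC n T ∨ (X1 m T ∧ X2 n T))
    (h10 : c = 5 → T 2 2 ∨ LC m T ∨ RC n T ∨ T 2 (n-1) ∨ RB T 5 (n-2)) :
    LI m n 3 c T := by
  refine ⟨by omega, fun h => absurd h (by omega), fun h => absurd h (by omega),
    fun _ => hmain, fun h => absurd h (by omega), fun h => absurd h (by omega),
    fun h => ?_, fun h => absurd h (by omega), fun h => h10 h.2⟩
  rcases h with ⟨h1, -⟩ | ⟨-, h2⟩
  · exact absurd h1 (by omega)
  · exact h8 h2

lemma LI_SL {r : ℕ} (hm : 7 ≤ m) (hn : 9 ≤ n) (hlo : 4 ≤ r) (hhi : r ≤ m-3)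
    (hmain : T r 2 ∨ ((T 2 2 ∨ RL T 3 (r-1)) ∧ (T (m-1) 2 ∨ RL T (r+1) (m-2))))
    (h7 : r = 4 → LC m T ∨ RC n T ∨ (X1 m T ∧ X2 n T))
    (h9 : r = 5 → T 2 2 ∨ LC m T ∨ RC n T ∨ T (m-1) 2 ∨ RL T 5 (m-2)) :
    LI m n r 3 T := by
  refine ⟨by omega, fun h => absurd h (by omega), fun h => absurd h (by omega),
    fun h => absurd h (by omega), fun _ => hmain, fun h => absurd h (by omega),
    fun h => ?_, fun h => ?_, fun h => absurd h (by omega)⟩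
  · rcases h with ⟨h1, -⟩ | ⟨h1, -⟩
    · exact h7 h1
    · exact absurd h1 (by omega)
  · rcases h with ⟨-, h1⟩ | ⟨h1, -⟩
    · exact absurd h1 (by omega)
    · exact h9 h1

lemma LI_RB {c : ℕ} (hm : 7 ≤ m) (hn : 9 ≤ n) (hlo : 3 ≤ c) (hhi : c ≤ n-2)
    (hsh : T 1 c) (hL : T 2 2 ∨ RB T 3 (c-1)) (hR : T 2 (n-1) ∨ RB T (c+1) (n-2)) :
    LI m n 2 c T := by
  refine ⟨by omega, fun _ => ⟨hsh, hL, hR⟩, fun h => absurd h (by omega),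
    fun h => absurd h (by omega), fun h => absurd h (by omega), fun h => absurd h (by omega),
    fun h => absurd h (by omega), fun h => absurd h (by omega), fun h => absurd h (by omega)⟩

lemma LI_RL {r : ℕ} (hm : 7 ≤ m) (hn : 9 ≤ n) (hlo : 3 ≤ r) (hhi : r ≤ m-2)
    (hsh : T r 1) (hL : T 2 2 ∨ RL T 3 (r-1)) (hR : T (m-1) 2 ∨ RL T (r+1) (m-2)) :
    LI m n r 2 T := by
  refine ⟨by omega, fun h => absurd h (by omega), fun _ => ⟨hsh, hL, hR⟩,
    fun h => absurd h (by omega), fun h => absurd h (by omega), fun h => absurd h (by omega),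
    fun h => absurd h (by omega), fun h => absurd h (by omega), fun h => absurd h (by omega)⟩

lemma LI_C44 (hm : 7 ≤ m) (hn : 9 ≤ n)
    (hb : T 2 2 ∨ LC m T ∨ RC n T ∨ T (m-1) 2 ∨ RL T 5 (m-2)) : LI m n 4 4 T := by
  refine ⟨by omega, fun h => absurd h (by omega), fun h => absurd h (by omega),
    fun h => absurd h (by omega), fun h => absurd h (by omega), fun h => absurd h (by omega),
    fun h => absurd h (by omega), fun _ => hb, fun h => absurd h (by omega)⟩

lemma LI_C53 (hm : 7 ≤ m) (hn : 9 ≤ n) (hm9 : 9 ≤ m)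
    (hmain : T 5 2 ∨ ((T 2 2 ∨ RL T 3 4) ∧ (T (m-1) 2 ∨ RL T 6 (m-2))))
    (hb : T 2 2 ∨ LC m T ∨ RC n T ∨ T (m-1) 2 ∨ RL T 5 (m-2)) : LI m n 5 3 T := by
  refine ⟨by omega, fun h => absurd h (by omega), fun h => absurd h (by omega),
    fun h => absurd h (by omega), fun _ => hmain, fun h => absurd h (by omega),
    fun h => absurd h (by omega), fun _ => hb, fun h => absurd h (by omega)⟩

lemma LI_53g (hm : 7 ≤ m) (hn : 9 ≤ n)
    (hmain : 5 ≤ m-3 → T 5 2 ∨ ((T 2 2 ∨ RL T 3 4) ∧ (T (m-1) 2 ∨ RL T 6 (m-2))))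
    (hb : T 2 2 ∨ LC m T ∨ RC n T ∨ T (m-1) 2 ∨ RL T 5 (m-2)) : LI m n 5 3 T := by
  refine ⟨by omega, fun h => absurd h (by omega), fun h => absurd h (by omega),
    fun h => absurd h (by omega), fun h => hmain h.2.2, fun h => absurd h (by omega),
    fun h => absurd h (by omega), fun _ => hb, fun h => absurd h (by omega)⟩

lemma LI_C33 (hm : 7 ≤ m) (hn : 9 ≤ n) (hLC : LC m T) (hRC : RC n T) : LI m n 3 3 T := by
  refine ⟨by omega, fun h => absurd h (by omega), fun h => absurd h (by omega),
    fun h => absurd h (by omega), fun h => absurd h (by omega), fun _ => ⟨hLC, hRC⟩,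
    fun h => absurd h (by omega), fun h => absurd h (by omega), fun h => absurd h (by omega)⟩

lemma LI_C43 (hm : 7 ≤ m) (hn : 9 ≤ n)
    (hmain : T 4 2 ∨ ((T 2 2 ∨ RL T 3 3) ∧ (T (m-1) 2 ∨ RL T 5 (m-2))))
    (hb : LC m T ∨ RC n T ∨ (X1 m T ∧ X2 n T)) : LI m n 4 3 T := by
  refine ⟨by omega, fun h => absurd h (by omega), fun h => absurd h (by omega),
    fun h => absurd h (by omega), fun _ => hmain, fun h => absurd h (by omega),
    fun h => ?_, fun h => absurd h (by omega), fun h => absurd h (by omega)⟩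
  exact hb

lemma LI_C34 (hm : 7 ≤ m) (hn : 9 ≤ n)
    (hmain : T 2 4 ∨ ((T 2 2 ∨ RB T 3 3) ∧ (T 2 (n-1) ∨ RB T 5 (n-2))))
    (hb : LC m T ∨ RC n T ∨ (X1 m T ∧ X2 n T)) : LI m n 3 4 T := by
  refine ⟨by omega, fun h => absurd h (by omega), fun h => absurd h (by omega),
    fun _ => hmain, fun h => absurd h (by omega), fun h => absurd h (by omega),
    fun h => ?_, fun h => absurd h (by omega), fun h => absurd h (by omega)⟩
  exact hb

end Constructors

end DukegoAux

namespace DukegoAux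

section Lifts

variable {T T' G : ℕ → ℕ → Prop}

lemma RB_lift (h : ∀ i j, T i j → T' i j) {a b : ℕ} : RB T a b → RB T' a b :=
  fun ⟨j, h1, h2, h3⟩ => ⟨j, h1, h2, h _ _ h3⟩

lemma RL_lift (h : ∀ i j, T i j → T' i j) {a b : ℕ} : RL T a b → RL T' a b :=
  fun ⟨i, h1, h2, h3⟩ => ⟨i, h1, h2, h _ _ h3⟩

lemma X1_lift {m : ℕ} (h : ∀ i j, T i j → T' i j) : X1 m T → X1 m T' :=
  fun hx => hx.imp (h _ _) (RL_lift h)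

lemma X2_lift {n : ℕ} (h : ∀ i j, T i j → T' i j) : X2 n T → X2 n T' :=
  fun hx => hx.imp (h _ _) (RB_lift h)

lemma LC_lift {m : ℕ} (h : ∀ i j, T i j → T' i j) : LC m T → LC m T' :=
  fun hx => hx.imp (h _ _) (fun hh => ⟨h _ _ hh.1, X1_lift h hh.2⟩)

lemma RC_lift {n : ℕ} (h : ∀ i j, T i j → T' i j) : RC n T → RC n T' :=
  fun hx => hx.imp (h _ _) (fun hh => ⟨h _ _ hh.1, X2_lift h hh.2⟩)

/-- convert a bottom-row stone range to the horizontally flipped frame -/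
lemma RB_flipTo {n a b a' b' : ℕ}
    (hG : ∀ j, 1 ≤ j → j ≤ n → T 2 j → G 2 (n+1-j))
    (h : RB T a b) (h1 : 1 ≤ a) (hb : b ≤ n) (ha' : a' = n+1-b) (hb' : b' = n+1-a) :
    RB G a' b' := by
  obtain ⟨j, hj1, hj2, hj3⟩ := h
  exact ⟨n+1-j, by omega, by omega, hG j (by omega) (by omega) hj3⟩

/-- convert a left-column stone range to the vertically flipped frame -/
lemma RL_flipTo {m a b a' b' : ℕ}
    (hG : ∀ i, 1 ≤ i → i ≤ m → T i 2 → G (m+1-i) 2)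
    (h : RL T a b) (h1 : 1 ≤ a) (hb : b ≤ m) (ha' : a' = m+1-b) (hb' : b' = m+1-a) :
    RL G a' b' := by
  obtain ⟨i, hi1, hi2, hi3⟩ := h
  exact ⟨m+1-i, by omega, by omega, hG i (by omega) (by omega) hi3⟩

/-- Mirror a bottom-row stone range into a horizontally flipped goal predicate. -/
lemma RB_flipMem {n a b a' b' : ℕ} {T : ℕ → ℕ → Prop} {P : ℕ → ℕ → Prop}
    (h : RB T a b) (h1 : 1 ≤ a) (hb : b ≤ n) (ha' : a' = n+1-b) (hb' : b' = n+1-a) :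
    RB (fun i j => P i j ∨ T i (n+1-j)) a' b' := by
  obtain ⟨j, hj1, hj2, hj3⟩ := h
  refine ⟨n+1-j, by omega, by omega, Or.inr ?_⟩
  rw [show n+1-(n+1-j) = j from by omega]
  exact hj3

/-- Mirror a left-column stone range into a vertically flipped goal predicate. -/
lemma RL_flipMem {m a b a' b' : ℕ} {T : ℕ → ℕ → Prop} {P : ℕ → ℕ → Prop}
    (h : RL T a b) (h1 : 1 ≤ a) (hb : b ≤ m) (ha' : a' = m+1-b) (hb' : b' = m+1-a) :
    RL (fun i j => P i j ∨ T (m+1-i) j) a' b' := by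
  obtain ⟨i, hi1, hi2, hi3⟩ := h
  refine ⟨m+1-i, by omega, by omega, Or.inr ?_⟩
  rw [show m+1-(m+1-i) = i from by omega]
  exact hi3

/-- `LC` gives the (5,3)-special bundle in the vertically flipped frame. -/
lemma bundle_flip {m n : ℕ} {W : ℕ → ℕ → Prop} (hm : 7 ≤ m)
    (hLC : LC m W) :
    (fun i j => W (m+1-i) j) 2 2 ∨ LC m (fun i j => W (m+1-i) j) ∨
      RC n (fun i j => W (m+1-i) j) ∨ (fun i j => W (m+1-i) j) (m-1) 2 ∨
      RL (fun i j => W (m+1-i) j) 5 (m-2) := by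
  rcases hLC with h32 | ⟨hk, -⟩
  · refine Or.inr (Or.inr (Or.inr (Or.inr ⟨m-2, by omega, le_rfl, ?_⟩)))
    show W (m+1-(m-2)) 2
    rw [show m+1-(m-2) = 3 from by omega]; exact h32
  · refine Or.inr (Or.inr (Or.inr (Or.inl ?_)))
    show W (m+1-(m-1)) 2
    rw [show m+1-(m-1) = 2 from by omega]; exact hk

end Lifts

end DukegoAux

namespace DukegoAux

/-- Mirror a bottom-row range of the augmented predicate horizontally. -/
lemma RB_flip2 {n a b a' b' a0 b0 : ℕ} {T : ℕ → ℕ → Prop}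
    (h : RB (fun i j => (i = a0 ∧ j = b0) ∨ T i j) a b) (h1 : 1 ≤ a) (hb : b ≤ n)
    (ha' : a' = n+1-b) (hb' : b' = n+1-a) :
    RB (fun i j => (i = a0 ∧ n+1-j = b0) ∨ T i (n+1-j)) a' b' := by
  obtain ⟨j, hj1, hj2, hj3⟩ := h
  refine ⟨n+1-j, by omega, by omega, ?_⟩
  rcases hj3 with ⟨hi, hj⟩ | hj
  · exact Or.inl ⟨hi, by omega⟩
  · right; rw [show n+1-(n+1-j) = j from by omega]; exact hj

/-- Mirror a left-column range of the augmented predicate vertically. -/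
lemma RL_flip2 {m a b a' b' a0 b0 : ℕ} {T : ℕ → ℕ → Prop}
    (h : RL (fun i j => (i = a0 ∧ j = b0) ∨ T i j) a b) (h1 : 1 ≤ a) (hb : b ≤ m)
    (ha' : a' = m+1-b) (hb' : b' = m+1-a) :
    RL (fun i j => (m+1-i = a0 ∧ j = b0) ∨ T (m+1-i) j) a' b' := by
  obtain ⟨i, hi1, hi2, hi3⟩ := h
  refine ⟨m+1-i, by omega, by omega, ?_⟩
  rcases hi3 with ⟨hi, hj⟩ | hj
  · refine Or.inl ⟨by omega, hj⟩
  · right; rw [show m+1-(m+1-i) = i from by omega]; exact hj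

end DukegoAux

namespace DukegoAux

section KeyCases

variable {m n : ℕ} {T : ℕ → ℕ → Prop} {r c r' c' : ℕ}

lemma keyRB (K : KeyCtx m n T r c r' c') (h2 : r' = 2) : ∃ a b, Good m n T r' c' a b := by
  obtain ⟨hm, hn, hLI, hs1, hs2, hs3, hs4, ht1, ht2, ht3, ht4, hTd, hT', hadj, hnr, hnc⟩ := K
  subst h2
  have P : LI m n r c T := by simpa [rr, cc] using hLI false false
  have hc2 : 3 ≤ c' := by
    rcases Nat.lt_or_ge c' 3 with hlt | h
    · exfalso
      have hc'2 : c' = 2 := by omega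
      rcases hadj with ⟨hr2, hcb⟩ | ⟨hcc, hrb⟩
      · have hc3 : c = 3 := by omega
        obtain ⟨-, hL, -⟩ := P.2.1 (by omega)
        rcases hL with hk | ⟨j, hj1, hj2, hj3⟩
        · exact hT' (by rw [hc'2]; exact hk)
        · omega
      · have hr3 : r = 3 := by omega
        obtain ⟨-, hL, -⟩ := P.2.2.1 (by omega)
        rcases hL with hk | ⟨i, hi1, hi2, hi3⟩
        · exact hT' (by rw [hc'2]; exact hk)
        · omega
    · exact h
  -- establish the two half-conditions
  have hLR : (T 2 2 ∨ RB T 3 (c'-1)) ∧ (T 2 (n-1) ∨ RB T (c'+1) (n-2)) := by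
    rcases hadj with ⟨hr2, hcb⟩ | ⟨hcc, hrb⟩
    · -- ring slide
      obtain ⟨-, hL, hR⟩ := P.2.1 (by omega)
      rcases hcb with hc1 | hc1
      · constructor
        · rcases hL with hk | ⟨j, hj1, hj2, hj3⟩
          · exact Or.inl hk
          · refine Or.inr ⟨j, hj1, ?_, hj3⟩
            have : j ≠ c' := fun hh => hT' (by rw [← hh]; exact hj3)
            omega
        · rcases hR with hk | ⟨j, hj1, hj2, hj3⟩
          · exact Or.inl hk
          · exact Or.inr ⟨j, by omega, hj2, hj3⟩
      · constructor
        · rcases hL with hk | ⟨j, hj1, hj2, hj3⟩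
          · exact Or.inl hk
          · exact Or.inr ⟨j, hj1, by omega, hj3⟩
        · rcases hR with hk | ⟨j, hj1, hj2, hj3⟩
          · exact Or.inl hk
          · refine Or.inr ⟨j, ?_, hj2, hj3⟩
            have : j ≠ c' := fun hh => hT' (by rw [← hh]; exact hj3)
            omega
    · -- came down from row 3
      have hr3 : r = 3 := by omega
      by_cases hc3 : c' = 3
      · -- source (3,3)
        have h6 := P.2.2.2.2.2.1 ⟨by omega, by omega⟩
        rcases h6.2 with h23 | ⟨hk, hx2⟩
        · exact absurd (show T 2 c' from by rw [hc3]; exact h23) hT'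
        · refine ⟨Or.inl hk, ?_⟩
          rcases hx2 with hx | ⟨j, hj1, hj2, hj3⟩
          · exact Or.inl hx
          · exact Or.inr ⟨j, by omega, hj2, hj3⟩
      · -- source (3,c'), c' ≥ 4
        have h4 := P.2.2.2.1 ⟨by omega, by omega, by omega⟩
        rcases h4 with hgate | hfac
        · exact absurd (show T 2 c' from by rw [← hcc]; exact hgate) hT'
        · rw [hcc] at hfac; exact hfac
  obtain ⟨hL, hR⟩ := hLR
  have main : ∀ a0 b0 : ℕ, (T 1 c' ∨ (a0 = 1 ∧ b0 = c')) →
      ∀ e f : Bool, LI m n (rr m e 2) (cc n f c')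
        (fun i j => (rr m e i = a0 ∧ cc n f j = b0) ∨ T (rr m e i) (cc n f j)) := by
    intro a0 b0 hsh e f
    cases e <;> cases f
    · show LI m n 2 c' (fun i j => (i = a0 ∧ j = b0) ∨ T i j)
      refine LI_RB hm hn (by omega) (by omega) ?_
        (hL.imp Or.inr (RB_lift (fun _ _ => Or.inr)))
        (hR.imp Or.inr (RB_lift (fun _ _ => Or.inr)))
      rcases hsh with hsh | ⟨ha, hb⟩
      · exact Or.inr hsh
      · exact Or.inl ⟨ha.symm, hb.symm⟩
    · show LI m n 2 (n+1-c') (fun i j => (i = a0 ∧ n+1-j = b0) ∨ T i (n+1-j))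
      refine LI_RB hm hn (by omega) (by omega) ?_ ?_ ?_
      · rcases hsh with hsh | ⟨ha, hb⟩
        · exact Or.inr (by rw [show n+1-(n+1-c') = c' from by omega]; exact hsh)
        · exact Or.inl ⟨ha.symm, by omega⟩
      · refine hR.imp (fun hk => Or.inr ?_)
          (fun hrb => RB_flipMem hrb (by omega) (by omega) (by omega) (by omega))
        rw [show n+1-2 = n-1 from by omega]; exact hk
      · refine hL.imp (fun hk => Or.inr ?_)
          (fun hrb => RB_flipMem hrb (by omega) (by omega) (by omega) (by omega))
        rw [show n+1-(n-1) = 2 from by omega]; exact hk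
    · exact LI_N (by unfold rr cc; simp; omega)
    · exact LI_N (by unfold rr cc; simp; omega)
  by_cases hsh : T 1 c'
  · refine ⟨r, c, by omega, by omega, by omega, by omega, hTd, ?_, ?_⟩
    · rcases hadj with ⟨h5, h6⟩ | ⟨h5, h6⟩ <;> omega
    · exact main r c (Or.inl hsh)
  · refine ⟨1, c', by omega, by omega, by omega, by omega, hsh, by omega, ?_⟩
    exact main 1 c' (Or.inr ⟨rfl, rfl⟩)

lemma keyRL (K : KeyCtx m n T r c r' c') (h2 : c' = 2) (h3 : r' ≠ 2) :
    ∃ a b, Good m n T r' c' a b := by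
  obtain ⟨hm, hn, hLI, hs1, hs2, hs3, hs4, ht1, ht2, ht3, ht4, hTd, hT', hadj, hnr, hnc⟩ := K
  subst h2
  have P : LI m n r c T := by simpa [rr, cc] using hLI false false
  have hr3 : 3 ≤ r' := by omega
  have hLR : (T 2 2 ∨ RL T 3 (r'-1)) ∧ (T (m-1) 2 ∨ RL T (r'+1) (m-2)) := by
    rcases hadj with ⟨hrr, hcb⟩ | ⟨hcc, hrb⟩
    · -- horizontal arrival from (r',3)
      have hc3 : c = 3 := by omega
      by_cases hr'3 : r' = 3
      · have h6 := P.2.2.2.2.2.1 ⟨by omega, by omega⟩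
        rcases h6.1 with h32 | ⟨hk, hx1⟩
        · exact absurd (show T r' 2 from by rw [hr'3]; exact h32) hT'
        · refine ⟨Or.inl hk, ?_⟩
          rcases hx1 with hx | ⟨i, hi1, hi2, hi3⟩
          · exact Or.inl hx
          · exact Or.inr ⟨i, by omega, hi2, hi3⟩
      · have h5 := P.2.2.2.2.1 ⟨by omega, by omega, by omega⟩
        rcases h5 with hgate | hfac
        · exact absurd (show T r' 2 from by rw [← hrr]; exact hgate) hT'
        · rw [hrr] at hfac; exact hfac
    · -- vertical slide
      have hc2 : c = 2 := by omega
      obtain ⟨-, hL, hR⟩ := P.2.2.1 hc2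
      have hrne : ¬(r = 2) := fun hh => P.1 ⟨hh, hc2⟩
      rcases hrb with hr1 | hr1
      · constructor
        · rcases hL with hk | ⟨i, hi1, hi2, hi3⟩
          · exact Or.inl hk
          · refine Or.inr ⟨i, hi1, ?_, hi3⟩
            have : i ≠ r' := fun hh => hT' (by rw [← hh]; exact hi3)
            omega
        · rcases hR with hk | ⟨i, hi1, hi2, hi3⟩
          · exact Or.inl hk
          · exact Or.inr ⟨i, by omega, hi2, hi3⟩
      · constructor
        · rcases hL with hk | ⟨i, hi1, hi2, hi3⟩
          · exact Or.inl hk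
          · exact Or.inr ⟨i, hi1, by omega, hi3⟩
        · rcases hR with hk | ⟨i, hi1, hi2, hi3⟩
          · exact Or.inl hk
          · refine Or.inr ⟨i, ?_, hi2, hi3⟩
            have : i ≠ r' := fun hh => hT' (by rw [← hh]; exact hi3)
            omega
  obtain ⟨hL, hR⟩ := hLR
  have main : ∀ a0 b0 : ℕ, (T r' 1 ∨ (a0 = r' ∧ b0 = 1)) →
      ∀ e f : Bool, LI m n (rr m e r') (cc n f 2)
        (fun i j => (rr m e i = a0 ∧ cc n f j = b0) ∨ T (rr m e i) (cc n f j)) := by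
    intro a0 b0 hsh e f
    cases e <;> cases f
    · show LI m n r' 2 (fun i j => (i = a0 ∧ j = b0) ∨ T i j)
      refine LI_RL hm hn (by omega) (by omega) ?_
        (hL.imp Or.inr (RL_lift (fun _ _ => Or.inr)))
        (hR.imp Or.inr (RL_lift (fun _ _ => Or.inr)))
      rcases hsh with hsh | ⟨ha, hb⟩
      · exact Or.inr hsh
      · exact Or.inl ⟨ha.symm, hb.symm⟩
    · exact LI_N (by unfold rr cc; simp; omega)
    · show LI m n (m+1-r') 2 (fun i j => (m+1-i = a0 ∧ j = b0) ∨ T (m+1-i) j)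
      refine LI_RL hm hn (by omega) (by omega) ?_ ?_ ?_
      · rcases hsh with hsh | ⟨ha, hb⟩
        · exact Or.inr (by rw [show m+1-(m+1-r') = r' from by omega]; exact hsh)
        · exact Or.inl ⟨by omega, hb.symm⟩
      · refine hR.imp (fun hk => Or.inr ?_)
          (fun hrb => RL_flipMem hrb (by omega) (by omega) (by omega) (by omega))
        rw [show m+1-2 = m-1 from by omega]; exact hk
      · refine hL.imp (fun hk => Or.inr ?_)
          (fun hrb => RL_flipMem hrb (by omega) (by omega) (by omega) (by omega))
        rw [show m+1-(m-1) = 2 from by omega]; exact hk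
    · exact LI_N (by unfold rr cc; simp; omega)
  by_cases hsh : T r' 1
  · refine ⟨r, c, by omega, by omega, by omega, by omega, hTd, ?_, ?_⟩
    · rcases hadj with ⟨h5, h6⟩ | ⟨h5, h6⟩ <;> omega
    · exact main r c (Or.inl hsh)
  · refine ⟨r', 1, by omega, by omega, by omega, by omega, hsh, by omega, ?_⟩
    exact main r' 1 (Or.inr ⟨rfl, rfl⟩)

lemma keyC33 (K : KeyCtx m n T r c r' c') (h2 : r' = 3) (h3 : c' = 3) :
    ∃ a b, Good m n T r' c' a b := by
  obtain ⟨hm, hn, hLI, hs1, hs2, hs3, hs4, ht1, ht2, ht3, ht4, hTd, hT', hadj, hnr, hnc⟩ := K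
  subst h2; subst h3
  have P : LI m n r c T := by simpa [rr, cc] using hLI false false
  have fin : ∀ a0 b0 : ℕ, 1 ≤ a0 → a0 ≤ m → 1 ≤ b0 → b0 ≤ n → ¬ T a0 b0 →
      ¬(a0 = 3 ∧ b0 = 3) →
      LC m (fun i j => (i = a0 ∧ j = b0) ∨ T i j) →
      RC n (fun i j => (i = a0 ∧ j = b0) ∨ T i j) →
      ∃ a b, Good m n T 3 3 a b := by
    intro a0 b0 k1 k2 k3 k4 k5 k6 hLC hRC
    refine ⟨a0, b0, k1, k2, k3, k4, k5, k6, ?_⟩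
    intro e f
    cases e <;> cases f
    · exact LI_C33 hm hn hLC hRC
    · exact LI_N (by unfold rr cc; simp; omega)
    · show LI m n (m+1-3) 3 (fun i j => (m+1-i = a0 ∧ j = b0) ∨ T (m+1-i) j)
      by_cases hm7 : m = 7
      · subst hm7
        exact LI_53g (by omega) hn (fun h => absurd h (by omega))
          (bundle_flip (by omega) hLC)
      · exact LI_N (by omega)
    · exact LI_N (by unfold rr cc; simp; omega)
  have hne : ¬(r = 3 ∧ c = 3) := by
    rcases hadj with ⟨h5, h6⟩ | ⟨h5, h6⟩ <;> omega
  have useHB : (LC m T ∨ RC n T ∨ (X1 m T ∧ X2 n T)) → ∃ a b, Good m n T 3 3 a b := by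
    intro hb
    rcases hb with hLC | hRC | ⟨hx1, hx2⟩
    · by_cases h23 : T 2 3
      · exact fin r c (by omega) (by omega) (by omega) (by omega) hTd hne
          (LC_lift (fun _ _ => Or.inr) hLC) (Or.inl (Or.inr h23))
      · exact fin 2 3 (by omega) (by omega) (by omega) (by omega) h23 (by omega)
          (LC_lift (fun _ _ => Or.inr) hLC) (Or.inl (Or.inl ⟨rfl, rfl⟩))
    · by_cases h32 : T 3 2
      · exact fin r c (by omega) (by omega) (by omega) (by omega) hTd hne
          (Or.inl (Or.inr h32)) (RC_lift (fun _ _ => Or.inr) hRC)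
      · exact fin 3 2 (by omega) (by omega) (by omega) (by omega) h32 (by omega)
          (Or.inl (Or.inl ⟨rfl, rfl⟩)) (RC_lift (fun _ _ => Or.inr) hRC)
    · by_cases hk : T 2 2
      · exact fin r c (by omega) (by omega) (by omega) (by omega) hTd hne
          (Or.inr ⟨Or.inr hk, X1_lift (fun _ _ => Or.inr) hx1⟩)
          (Or.inr ⟨Or.inr hk, X2_lift (fun _ _ => Or.inr) hx2⟩)
      · exact fin 2 2 (by omega) (by omega) (by omega) (by omega) hk (by omega)
          (Or.inr ⟨Or.inl ⟨rfl, rfl⟩, X1_lift (fun _ _ => Or.inr) hx1⟩)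
          (Or.inr ⟨Or.inl ⟨rfl, rfl⟩, X2_lift (fun _ _ => Or.inr) hx2⟩)
  rcases hadj with ⟨hrr, hcb⟩ | ⟨hcc, hrb⟩
  · rcases hcb with hc1 | hc1
    · -- source (3,4)
      exact useHB (P.2.2.2.2.2.2.1 (Or.inr ⟨by omega, by omega⟩))
    · -- source (3,2)
      obtain ⟨-, hL2, hR2⟩ := P.2.2.1 (by omega)
      have hk : T 2 2 := by
        rcases hL2 with hk | ⟨i, hi1, hi2, hi3⟩
        · exact hk
        · omega
      have hx1 : X1 m T := by
        rcases hR2 with hx | ⟨i, hi1, hi2, hi3⟩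
        · exact Or.inl hx
        · exact Or.inr ⟨i, by omega, hi2, hi3⟩
      by_cases h23 : T 2 3
      · exact fin r c (by omega) (by omega) (by omega) (by omega) hTd hne
          (Or.inr ⟨Or.inr hk, X1_lift (fun _ _ => Or.inr) hx1⟩) (Or.inl (Or.inr h23))
      · exact fin 2 3 (by omega) (by omega) (by omega) (by omega) h23 (by omega)
          (Or.inr ⟨Or.inr hk, X1_lift (fun _ _ => Or.inr) hx1⟩) (Or.inl (Or.inl ⟨rfl, rfl⟩))
  · rcases hrb with hr1 | hr1
    · -- source (4,3)
      exact useHB (P.2.2.2.2.2.2.1 (Or.inl ⟨by omega, by omega⟩))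
    · -- source (2,3)
      obtain ⟨-, hL, hR⟩ := P.2.1 (by omega)
      have hk : T 2 2 := by
        rcases hL with hk | ⟨j, hj1, hj2, hj3⟩
        · exact hk
        · omega
      have hx2 : X2 n T := by
        rcases hR with hx | ⟨j, hj1, hj2, hj3⟩
        · exact Or.inl hx
        · exact Or.inr ⟨j, by omega, hj2, hj3⟩
      by_cases h32 : T 3 2
      · exact fin r c (by omega) (by omega) (by omega) (by omega) hTd hne
          (Or.inl (Or.inr h32)) (Or.inr ⟨Or.inr hk, X2_lift (fun _ _ => Or.inr) hx2⟩)
      · exact fin 3 2 (by omega) (by omega) (by omega) (by omega) h32 (by omega)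
          (Or.inl (Or.inl ⟨rfl, rfl⟩)) (Or.inr ⟨Or.inr hk, X2_lift (fun _ _ => Or.inr) hx2⟩)

lemma keyC34 (K : KeyCtx m n T r c r' c') (h2 : r' = 3) (h3 : c' = 4) :
    ∃ a b, Good m n T r' c' a b := by
  obtain ⟨hm, hn, hLI, hs1, hs2, hs3, hs4, ht1, ht2, ht3, ht4, hTd, hT', hadj, hnr, hnc⟩ := K
  subst h2; subst h3
  have P : LI m n r c T := by simpa [rr, cc] using hLI false false
  have fin : ∀ a0 b0 : ℕ, 1 ≤ a0 → a0 ≤ m → 1 ≤ b0 → b0 ≤ n → ¬ T a0 b0 →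
      ¬(a0 = 3 ∧ b0 = 4) →
      ((fun i j => (i = a0 ∧ j = b0) ∨ T i j) 2 4 ∨
        (((fun i j => (i = a0 ∧ j = b0) ∨ T i j) 2 2 ∨
            RB (fun i j => (i = a0 ∧ j = b0) ∨ T i j) 3 3) ∧
          ((fun i j => (i = a0 ∧ j = b0) ∨ T i j) 2 (n-1) ∨
            RB (fun i j => (i = a0 ∧ j = b0) ∨ T i j) 5 (n-2)))) →
      (LC m (fun i j => (i = a0 ∧ j = b0) ∨ T i j) ∨
        RC n (fun i j => (i = a0 ∧ j = b0) ∨ T i j) ∨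
        (X1 m (fun i j => (i = a0 ∧ j = b0) ∨ T i j) ∧
          X2 n (fun i j => (i = a0 ∧ j = b0) ∨ T i j))) →
      ∃ a b, Good m n T 3 4 a b := by
    intro a0 b0 k1 k2 k3 k4 k5 k6 hD1 hD2
    refine ⟨a0, b0, k1, k2, k3, k4, k5, k6, ?_⟩
    intro e f
    cases e <;> cases f
    · exact LI_C34 hm hn hD1 hD2
    · show LI m n 3 (n+1-4) (fun i j => (i = a0 ∧ n+1-j = b0) ∨ T i (n+1-j))
      refine LI_SB hm hn (by omega) (by omega) ?_
        (fun h => absurd h (by omega)) (fun h => absurd h (by omega))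
      rcases hD1 with hg | ⟨hF1, hF2⟩
      · left
        rcases hg with ⟨h1, h2⟩ | hg
        · exact Or.inl ⟨h1, by omega⟩
        · right; rw [show n+1-(n+1-4) = 4 from by omega]; exact hg
      · right
        constructor
        · rcases hF2 with hk | hrb
          · left
            rcases hk with ⟨h1, h2⟩ | hk
            · exact Or.inl ⟨h1, by omega⟩
            · right; rw [show n+1-2 = n-1 from by omega]; exact hk
          · exact Or.inr (RB_flip2 hrb (by omega) (by omega) (by omega) (by omega))
        · rcases hF1 with hk | hrb
          · left
            rcases hk with ⟨h1, h2⟩ | hk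
            · exact Or.inl ⟨h1, by omega⟩
            · right; rw [show n+1-(n-1) = 2 from by omega]; exact hk
          · exact Or.inr (RB_flip2 hrb (by omega) (by omega) (by omega) (by omega))
    · exact LI_N (by unfold rr cc; simp; omega)
    · exact LI_N (by unfold rr cc; simp; omega)
  have hne : ¬(r = 3 ∧ c = 4) := by
    rcases hadj with ⟨h5, h6⟩ | ⟨h5, h6⟩ <;> omega
  -- gate helper: choose (2,4) or the vacated square
  have gate : ∀ (hD2T : LC m T ∨ RC n T ∨ (X1 m T ∧ X2 n T)), ∃ a b, Good m n T 3 4 a b := by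
    intro hD2T
    by_cases hg : T 2 4
    · exact fin r c (by omega) (by omega) (by omega) (by omega) hTd hne
        (Or.inl (Or.inr hg))
        (hD2T.imp (LC_lift (fun _ _ => Or.inr)) (fun h => h.imp (RC_lift (fun _ _ => Or.inr))
          (fun h => ⟨X1_lift (fun _ _ => Or.inr) h.1, X2_lift (fun _ _ => Or.inr) h.2⟩)))
    · exact fin 2 4 (by omega) (by omega) (by omega) (by omega) hg (by omega)
        (Or.inl (Or.inl ⟨rfl, rfl⟩))
        (hD2T.imp (LC_lift (fun _ _ => Or.inr)) (fun h => h.imp (RC_lift (fun _ _ => Or.inr))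
          (fun h => ⟨X1_lift (fun _ _ => Or.inr) h.1, X2_lift (fun _ _ => Or.inr) h.2⟩)))
  -- kbl-with-gate helper
  have gatek : T 2 2 → ∃ a b, Good m n T 3 4 a b := by
    intro hk
    by_cases hg : T 2 4
    · exact fin r c (by omega) (by omega) (by omega) (by omega) hTd hne
        (Or.inl (Or.inr hg))
        (Or.inr (Or.inl (Or.inr ⟨Or.inr hk, Or.inr ⟨4, le_rfl, by omega, Or.inr hg⟩⟩)))
    · exact fin 2 4 (by omega) (by omega) (by omega) (by omega) hg (by omega)
        (Or.inl (Or.inl ⟨rfl, rfl⟩))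
        (Or.inr (Or.inl (Or.inr ⟨Or.inr hk, Or.inr ⟨4, le_rfl, by omega, Or.inl ⟨rfl, rfl⟩⟩⟩)))
  -- (2,3)-style helper: for kbr / far-right-stone cases
  have gate23 : (T 2 (n-1) ∨ RB T 5 (n-2)) → ∃ a b, Good m n T 3 4 a b := by
    intro hRversion
    by_cases h23 : T 2 3
    · exact fin r c (by omega) (by omega) (by omega) (by omega) hTd hne
        (Or.inr ⟨Or.inr ⟨3, le_rfl, le_rfl, Or.inr h23⟩,
          hRversion.imp Or.inr (RB_lift (fun _ _ => Or.inr))⟩)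
        (Or.inr (Or.inl (Or.inl (Or.inr h23))))
    · exact fin 2 3 (by omega) (by omega) (by omega) (by omega) h23 (by omega)
        (Or.inr ⟨Or.inr ⟨3, le_rfl, le_rfl, Or.inl ⟨rfl, rfl⟩⟩,
          hRversion.imp Or.inr (RB_lift (fun _ _ => Or.inr))⟩)
        (Or.inr (Or.inl (Or.inl (Or.inl ⟨rfl, rfl⟩))))
  -- ktl/X1-with-gate helper
  have gateX1 : X1 m T → ∃ a b, Good m n T 3 4 a b := by
    intro hx1
    by_cases hg : T 2 4
    · exact fin r c (by omega) (by omega) (by omega) (by omega) hTd hne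
        (Or.inl (Or.inr hg))
        (Or.inr (Or.inr ⟨X1_lift (fun _ _ => Or.inr) hx1,
          Or.inr ⟨4, le_rfl, by omega, Or.inr hg⟩⟩))
    · exact fin 2 4 (by omega) (by omega) (by omega) (by omega) hg (by omega)
        (Or.inl (Or.inl ⟨rfl, rfl⟩))
        (Or.inr (Or.inr ⟨X1_lift (fun _ _ => Or.inr) hx1,
          Or.inr ⟨4, le_rfl, by omega, Or.inl ⟨rfl, rfl⟩⟩⟩))
  rcases hadj with ⟨hrr, hcb⟩ | ⟨hcc, hrb⟩
  · rcases hcb with hc1 | hc1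
    · -- source (3,5)
      have B := P.2.2.2.2.2.2.2.2 ⟨by omega, by omega⟩
      rcases B with hk | hLC | hRC | hkbr | hrb5
      · exact gatek hk
      · exact gate (Or.inl hLC)
      · exact gate (Or.inr (Or.inl hRC))
      · exact gate23 (Or.inl hkbr)
      · exact gate23 (Or.inr hrb5)
    · -- source (3,3)
      have h6 := P.2.2.2.2.2.1 ⟨by omega, by omega⟩
      exact gate (Or.inr (Or.inl h6.2))
  · rcases hrb with hr1 | hr1
    · -- source (4,4)
      have B := P.2.2.2.2.2.2.2.1 (Or.inl ⟨by omega, by omega⟩)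
      rcases B with hk | hLC | hRC | hktl | hrl5
      · exact gatek hk
      · exact gate (Or.inl hLC)
      · exact gate (Or.inr (Or.inl hRC))
      · exact gateX1 (Or.inl hktl)
      · refine gateX1 (Or.inr ?_)
        obtain ⟨i, hi1, hi2, hi3⟩ := hrl5
        exact ⟨i, by omega, hi2, hi3⟩
    · -- source (2,4)
      obtain ⟨-, hL, hR⟩ := P.2.1 (by omega)
      rw [hcc] at hL hR
      rcases hL with hk | hrb3
      · exact gatek hk
      · -- a stone at (2,3)
        have h23 : T 2 3 := by
          obtain ⟨j, hj1, hj2, hj3⟩ := hrb3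
          have : j = 3 := by omega
          rwa [this] at hj3
        exact fin r c (by omega) (by omega) (by omega) (by omega) hTd hne
          (Or.inr ⟨Or.inr ⟨3, le_rfl, le_rfl, Or.inr h23⟩,
            hR.imp Or.inr (RB_lift (fun _ _ => Or.inr))⟩)
          (Or.inr (Or.inl (Or.inl (Or.inr h23))))

lemma keyC35 (K : KeyCtx m n T r c r' c') (h2 : r' = 3) (h3 : c' = 5) :
    ∃ a b, Good m n T r' c' a b := by
  obtain ⟨hm, hn, hLI, hs1, hs2, hs3, hs4, ht1, ht2, ht3, ht4, hTd, hT', hadj, hnr, hnc⟩ := K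
  subst h2; subst h3
  by_cases hg : T 2 5
  · refine ⟨r, c, by omega, by omega, by omega, by omega, hTd, ?_, ?_⟩
    · rcases hadj with ⟨h5, h6⟩ | ⟨h5, h6⟩ <;> omega
    · intro e f
      cases e <;> cases f <;> simp only [rr, cc] <;> simp
      · refine LI_SB hm hn (by omega) (by omega) (Or.inl (Or.inr hg))
          (fun h => absurd h (by omega)) (fun _ => ?_)
        exact Or.inr (Or.inr (Or.inr (Or.inr ⟨5, le_rfl, by omega, Or.inr hg⟩)))
      · refine LI_SB hm hn (by omega) (by omega) (Or.inl (Or.inr ?_))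
          (fun h => absurd h (by omega)) (fun h5 => ?_)
        · rw [show n+1-(n-4) = 5 from by omega]; exact hg
        · refine Or.inr (Or.inr (Or.inr (Or.inr ⟨5, le_rfl, by omega, Or.inr ?_⟩)))
          rw [show n+1-5 = 5 from by omega]; exact hg
      · exact LI_N (by omega)
      · exact LI_N (by omega)
  · refine ⟨2, 5, by omega, by omega, by omega, by omega, hg, by omega, ?_⟩
    intro e f
    cases e <;> cases f <;> simp only [rr, cc] <;> simp
    · refine LI_SB hm hn (by omega) (by omega) (Or.inl (Or.inl ⟨rfl, rfl⟩))
        (fun h => absurd h (by omega)) (fun _ => ?_)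
      exact Or.inr (Or.inr (Or.inr (Or.inr ⟨5, le_rfl, by omega, Or.inl ⟨rfl, rfl⟩⟩)))
    · refine LI_SB hm hn (by omega) (by omega) (Or.inl (Or.inl ⟨rfl, by omega⟩))
        (fun h => absurd h (by omega)) (fun h5 => ?_)
      exact Or.inr (Or.inr (Or.inr (Or.inr ⟨5, le_rfl, by omega, Or.inl ⟨rfl, by omega⟩⟩)))
    · exact LI_N (by omega)
    · exact LI_N (by omega)

lemma keySB (K : KeyCtx m n T r c r' c') (h2 : r' = 3) (h3 : 6 ≤ c') :
    ∃ a b, Good m n T r' c' a b := by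
  obtain ⟨hm, hn, hLI, hs1, hs2, hs3, hs4, ht1, ht2, ht3, ht4, hTd, hT', hadj, hnr, hnc⟩ := K
  subst h2
  by_cases hg : T 2 c'
  · refine ⟨r, c, by omega, by omega, by omega, by omega, hTd, ?_, ?_⟩
    · rcases hadj with ⟨h5, h6⟩ | ⟨h5, h6⟩ <;> omega
    · intro e f
      cases e <;> cases f <;> simp only [rr, cc] <;> simp
      · exact LI_SB hm hn (by omega) (by omega) (Or.inl (Or.inr hg))
          (fun h => absurd h (by omega)) (fun h => absurd h (by omega))
      · refine LI_SB hm hn (by omega) (by omega) (Or.inl (Or.inr ?_))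
          (fun h => absurd h (by omega)) (fun h => absurd h (by omega))
        rw [show n+1-(n+1-c') = c' from by omega]; exact hg
      · exact LI_N (by omega)
      · exact LI_N (by omega)
  · refine ⟨2, c', by omega, by omega, by omega, by omega, hg, by omega, ?_⟩
    intro e f
    cases e <;> cases f <;> simp only [rr, cc] <;> simp
    · exact LI_SB hm hn (by omega) (by omega) (Or.inl (Or.inl ⟨rfl, rfl⟩))
        (fun h => absurd h (by omega)) (fun h => absurd h (by omega))
    · exact LI_SB hm hn (by omega) (by omega) (Or.inl (Or.inl ⟨rfl, by omega⟩))
        (fun h => absurd h (by omega)) (fun h => absurd h (by omega))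
    · exact LI_N (by omega)
    · exact LI_N (by omega)

set_option maxHeartbeats 2000000 in
lemma keyC43 (K : KeyCtx m n T r c r' c') (h2 : r' = 4) (h3 : c' = 3) :
    ∃ a b, Good m n T r' c' a b := by
  obtain ⟨hm, hn, hLI, hs1, hs2, hs3, hs4, ht1, ht2, ht3, ht4, hTd, hT', hadj, hnr, hnc⟩ := K
  subst h2; subst h3
  have P : LI m n r c T := by simpa [rr, cc] using hLI false false
  have Q : LI m n (m+1-r) c (fun i j => T (m+1-i) j) := by
    simpa [rr, cc] using hLI true false
  have hne : ¬(r = 4 ∧ c = 3) := by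
    rcases hadj with ⟨h5, h6⟩ | ⟨h5, h6⟩ <;> omega
  have fin : ∀ a0 b0 : ℕ, 1 ≤ a0 → a0 ≤ m → 1 ≤ b0 → b0 ≤ n → ¬ T a0 b0 →
      ¬(a0 = 4 ∧ b0 = 3) →
      ((fun i j => (i = a0 ∧ j = b0) ∨ T i j) 4 2 ∨
        (((fun i j => (i = a0 ∧ j = b0) ∨ T i j) 2 2 ∨
            RL (fun i j => (i = a0 ∧ j = b0) ∨ T i j) 3 3) ∧
          ((fun i j => (i = a0 ∧ j = b0) ∨ T i j) (m-1) 2 ∨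
            RL (fun i j => (i = a0 ∧ j = b0) ∨ T i j) 5 (m-2)))) →
      (LC m (fun i j => (i = a0 ∧ j = b0) ∨ T i j) ∨
        RC n (fun i j => (i = a0 ∧ j = b0) ∨ T i j) ∨
        (X1 m (fun i j => (i = a0 ∧ j = b0) ∨ T i j) ∧
          X2 n (fun i j => (i = a0 ∧ j = b0) ∨ T i j))) →
      (m = 7 → (LC m (fun i j => (m+1-i = a0 ∧ j = b0) ∨ T (m+1-i) j) ∨
        RC n (fun i j => (m+1-i = a0 ∧ j = b0) ∨ T (m+1-i) j) ∨
        (X1 m (fun i j => (m+1-i = a0 ∧ j = b0) ∨ T (m+1-i) j) ∧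
          X2 n (fun i j => (m+1-i = a0 ∧ j = b0) ∨ T (m+1-i) j)))) →
      (m = 8 → ((fun i j => (m+1-i = a0 ∧ j = b0) ∨ T (m+1-i) j) 2 2 ∨
        LC m (fun i j => (m+1-i = a0 ∧ j = b0) ∨ T (m+1-i) j) ∨
        RC n (fun i j => (m+1-i = a0 ∧ j = b0) ∨ T (m+1-i) j) ∨
        (fun i j => (m+1-i = a0 ∧ j = b0) ∨ T (m+1-i) j) (m-1) 2 ∨
        RL (fun i j => (m+1-i = a0 ∧ j = b0) ∨ T (m+1-i) j) 5 (m-2))) →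
      ∃ a b, Good m n T 4 3 a b := by
    intro a0 b0 k1 k2 k3 k4 k5 k6 hD1 hD2 hD4 hD5
    have hD1m : (fun i j => (m+1-i = a0 ∧ j = b0) ∨ T (m+1-i) j) (m-3) 2 ∨
        (((fun i j => (m+1-i = a0 ∧ j = b0) ∨ T (m+1-i) j) 2 2 ∨
            RL (fun i j => (m+1-i = a0 ∧ j = b0) ∨ T (m+1-i) j) 3 (m-4)) ∧
          ((fun i j => (m+1-i = a0 ∧ j = b0) ∨ T (m+1-i) j) (m-1) 2 ∨
            RL (fun i j => (m+1-i = a0 ∧ j = b0) ∨ T (m+1-i) j) (m-2) (m-2))) := by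
      rcases hD1 with hg | ⟨hF1, hF2⟩
      · left
        rcases hg with ⟨h1, h2⟩ | hg
        · exact Or.inl ⟨by omega, h2⟩
        · right; rw [show m+1-(m-3) = 4 from by omega]; exact hg
      · right
        constructor
        · rcases hF2 with hk | hrl
          · left
            rcases hk with ⟨h1, h2⟩ | hk
            · exact Or.inl ⟨by omega, h2⟩
            · right; rw [show m+1-2 = m-1 from by omega]; exact hk
          · exact Or.inr (RL_flip2 hrl (by omega) (by omega) (by omega) (by omega))
        · rcases hF1 with hk | hrl
          · left
            rcases hk with ⟨h1, h2⟩ | hk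
            · exact Or.inl ⟨by omega, h2⟩
            · right; rw [show m+1-(m-1) = 2 from by omega]; exact hk
          · exact Or.inr (RL_flip2 hrl (by omega) (by omega) (by omega) (by omega))
    refine ⟨a0, b0, k1, k2, k3, k4, k5, k6, ?_⟩
    intro e f
    cases e <;> cases f
    · exact LI_C43 hm hn hD1 hD2
    · exact LI_N (by unfold rr cc; simp; omega)
    · show LI m n (m+1-4) 3 (fun i j => (m+1-i = a0 ∧ j = b0) ∨ T (m+1-i) j)
      by_cases hm7 : m = 7
      · subst hm7
        exact LI_C43 (by omega) hn hD1m (hD4 rfl)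
      · by_cases hm8 : m = 8
        · subst hm8
          exact LI_53g (by omega) hn (fun _ => hD1m) (hD5 rfl)
        · refine LI_SL hm hn (by omega) (by omega) ?_
            (fun h => absurd h (by omega)) (fun h => absurd h (by omega))
          rcases hD1m with hg | ⟨hF1, hF2⟩
          · exact Or.inl hg
          · refine Or.inr ⟨?_, ?_⟩
            · rcases hF1 with hk | ⟨i, hi1, hi2, hi3⟩
              · exact Or.inl hk
              · exact Or.inr ⟨i, hi1, by omega, hi3⟩
            · rcases hF2 with hk | ⟨i, hi1, hi2, hi3⟩
              · exact Or.inl hk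
              · exact Or.inr ⟨i, by omega, hi2, hi3⟩
    · exact LI_N (by unfold rr cc; simp; omega)
  -- builders for the flipped special bundles
  have D4of52 : ∀ a0 b0 : ℕ, ((a0 = 5 ∧ b0 = 2) ∨ T 5 2) → m = 7 →
      (LC m (fun i j => (m+1-i = a0 ∧ j = b0) ∨ T (m+1-i) j) ∨
        RC n (fun i j => (m+1-i = a0 ∧ j = b0) ∨ T (m+1-i) j) ∨
        (X1 m (fun i j => (m+1-i = a0 ∧ j = b0) ∨ T (m+1-i) j) ∧
          X2 n (fun i j => (m+1-i = a0 ∧ j = b0) ∨ T (m+1-i) j))) := by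
    intro a0 b0 h hm7
    refine Or.inl (Or.inl ?_)
    rcases h with ⟨h1, h2⟩ | h
    · exact Or.inl ⟨by omega, by omega⟩
    · right; rw [show m+1-3 = 5 from by omega]; exact h
  have D4ofktl : ∀ a0 b0 : ℕ, T (m-1) 2 →
      (((a0 = 3 ∨ a0 = 4) ∧ b0 = 2) ∨ T 3 2 ∨ T 4 2 ∨ T 2 2) → m = 7 →
      (LC m (fun i j => (m+1-i = a0 ∧ j = b0) ∨ T (m+1-i) j) ∨
        RC n (fun i j => (m+1-i = a0 ∧ j = b0) ∨ T (m+1-i) j) ∨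
        (X1 m (fun i j => (m+1-i = a0 ∧ j = b0) ∨ T (m+1-i) j) ∧
          X2 n (fun i j => (m+1-i = a0 ∧ j = b0) ∨ T (m+1-i) j))) := by
    intro a0 b0 hktl hx hm7
    refine Or.inl (Or.inr ⟨Or.inr (by rw [show m+1-2 = m-1 from by omega]; exact hktl), ?_⟩)
    rcases hx with ⟨h1, h2⟩ | h32 | h42 | hk
    · rcases h1 with h1 | h1
      · exact Or.inr ⟨5, by omega, by omega, Or.inl ⟨by omega, by omega⟩⟩
      · exact Or.inr ⟨4, by omega, by omega, Or.inl ⟨by omega, by omega⟩⟩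
    · exact Or.inr ⟨5, by omega, by omega, Or.inr (by rw [show m+1-5 = 3 from by omega]; exact h32)⟩
    · exact Or.inr ⟨4, by omega, by omega, Or.inr (by rw [show m+1-4 = 4 from by omega]; exact h42)⟩
    · exact Or.inl (Or.inr (by rw [show m+1-(m-1) = 2 from by omega]; exact hk))
  have D5of : ∀ a0 b0 : ℕ,
      (((a0 = 3 ∨ a0 = 4) ∧ b0 = 2) ∨ T 3 2 ∨ T 4 2 ∨ T 2 2 ∨ T (m-1) 2) → m = 8 →
      ((fun i j => (m+1-i = a0 ∧ j = b0) ∨ T (m+1-i) j) 2 2 ∨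
        LC m (fun i j => (m+1-i = a0 ∧ j = b0) ∨ T (m+1-i) j) ∨
        RC n (fun i j => (m+1-i = a0 ∧ j = b0) ∨ T (m+1-i) j) ∨
        (fun i j => (m+1-i = a0 ∧ j = b0) ∨ T (m+1-i) j) (m-1) 2 ∨
        RL (fun i j => (m+1-i = a0 ∧ j = b0) ∨ T (m+1-i) j) 5 (m-2)) := by
    intro a0 b0 hx hm8
    rcases hx with ⟨h1, h2⟩ | h32 | h42 | hk | hktl
    · rcases h1 with h1 | h1
      · exact Or.inr (Or.inr (Or.inr (Or.inr ⟨6, by omega, by omega, Or.inl ⟨by omega, by omega⟩⟩)))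
      · exact Or.inr (Or.inr (Or.inr (Or.inr ⟨5, by omega, by omega, Or.inl ⟨by omega, by omega⟩⟩)))
    · exact Or.inr (Or.inr (Or.inr (Or.inr ⟨6, by omega, by omega,
        Or.inr (by rw [show m+1-6 = 3 from by omega]; exact h32)⟩)))
    · exact Or.inr (Or.inr (Or.inr (Or.inr ⟨5, by omega, by omega,
        Or.inr (by rw [show m+1-5 = 4 from by omega]; exact h42)⟩)))
    · exact Or.inr (Or.inr (Or.inr (Or.inl
        (Or.inr (by rw [show m+1-(m-1) = 2 from by omega]; exact hk)))))
    · exact Or.inl (Or.inr (by rw [show m+1-2 = m-1 from by omega]; exact hktl))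
  -- universal handlers
  by_cases h32 : T 3 2
  · by_cases h52 : T 5 2
    · exact fin r c (by omega) (by omega) (by omega) (by omega) hTd hne
        (Or.inr ⟨Or.inr ⟨3, le_rfl, le_rfl, Or.inr h32⟩, Or.inr ⟨5, le_rfl, by omega, Or.inr h52⟩⟩)
        (Or.inl (Or.inl (Or.inr h32)))
        (D4of52 r c (Or.inr h52)) (D5of r c (Or.inr (Or.inl h32)))
    · exact fin 5 2 (by omega) (by omega) (by omega) (by omega) h52 (by omega)
        (Or.inr ⟨Or.inr ⟨3, le_rfl, le_rfl, Or.inr h32⟩, Or.inr ⟨5, le_rfl, by omega, Or.inl ⟨rfl, rfl⟩⟩⟩)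
        (Or.inl (Or.inl (Or.inr h32)))
        (D4of52 5 2 (Or.inl ⟨rfl, rfl⟩)) (D5of 5 2 (Or.inr (Or.inl h32)))
  by_cases hk : T 2 2
  · by_cases h52 : T 5 2
    · exact fin r c (by omega) (by omega) (by omega) (by omega) hTd hne
        (Or.inr ⟨Or.inl (Or.inr hk), Or.inr ⟨5, le_rfl, by omega, Or.inr h52⟩⟩)
        (Or.inl (Or.inr ⟨Or.inr hk, Or.inr ⟨5, by omega, by omega, Or.inr h52⟩⟩))
        (D4of52 r c (Or.inr h52)) (D5of r c (Or.inr (Or.inr (Or.inr (Or.inl hk)))))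
    · exact fin 5 2 (by omega) (by omega) (by omega) (by omega) h52 (by omega)
        (Or.inr ⟨Or.inl (Or.inr hk), Or.inr ⟨5, le_rfl, by omega, Or.inl ⟨rfl, rfl⟩⟩⟩)
        (Or.inl (Or.inr ⟨Or.inr hk, Or.inr ⟨5, by omega, by omega, Or.inl ⟨rfl, rfl⟩⟩⟩))
        (D4of52 5 2 (Or.inl ⟨rfl, rfl⟩)) (D5of 5 2 (Or.inr (Or.inr (Or.inr (Or.inl hk)))))
  by_cases hktl : T (m-1) 2
  · -- place (3,2) (it is free since ¬h32)
    exact fin 3 2 (by omega) (by omega) (by omega) (by omega) h32 (by omega)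
      (Or.inr ⟨Or.inr ⟨3, le_rfl, le_rfl, Or.inl ⟨rfl, rfl⟩⟩, Or.inl (Or.inr hktl)⟩)
      (Or.inl (Or.inl (Or.inl ⟨rfl, rfl⟩)))
      (D4ofktl 3 2 hktl (Or.inl ⟨Or.inl rfl, rfl⟩)) (D5of 3 2 (Or.inl ⟨Or.inl rfl, rfl⟩))
  -- now ¬(3,2), ¬(2,2), ¬(m-1,2): use the arrival structure
  have hRCgo : T 2 3 →
      ((m = 7 → (LC m (fun i j => T (m+1-i) j) ∨ RC n (fun i j => T (m+1-i) j) ∨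
        (X1 m (fun i j => T (m+1-i) j) ∧ X2 n (fun i j => T (m+1-i) j)))) ∨ T 5 2) →
      ∃ a b, Good m n T 4 3 a b := by
    intro hg23 hQ7
    have hD2' : ∀ a0 b0 : ℕ, (LC m (fun i j => (i = a0 ∧ j = b0) ∨ T i j) ∨
        RC n (fun i j => (i = a0 ∧ j = b0) ∨ T i j) ∨
        (X1 m (fun i j => (i = a0 ∧ j = b0) ∨ T i j) ∧
          X2 n (fun i j => (i = a0 ∧ j = b0) ∨ T i j))) :=
      fun a0 b0 => Or.inr (Or.inl (Or.inl (Or.inr hg23)))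
    have hD4' : ∀ a0 b0 : ℕ, m = 7 →
        (LC m (fun i j => (m+1-i = a0 ∧ j = b0) ∨ T (m+1-i) j) ∨
          RC n (fun i j => (m+1-i = a0 ∧ j = b0) ∨ T (m+1-i) j) ∨
          (X1 m (fun i j => (m+1-i = a0 ∧ j = b0) ∨ T (m+1-i) j) ∧
            X2 n (fun i j => (m+1-i = a0 ∧ j = b0) ∨ T (m+1-i) j))) := by
      intro a0 b0 hm7
      rcases hQ7 with hQ | h52
      · rcases hQ hm7 with hLCf | hRCf | ⟨hx1f, hx2f⟩
        · exact Or.inl (LC_lift (fun _ _ => Or.inr) hLCf)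
        · exact Or.inr (Or.inl (RC_lift (fun _ _ => Or.inr) hRCf))
        · exact Or.inr (Or.inr ⟨X1_lift (fun _ _ => Or.inr) hx1f,
            X2_lift (fun _ _ => Or.inr) hx2f⟩)
      · exact D4of52 a0 b0 (Or.inr h52) hm7
    by_cases h42 : T 4 2
    · exact fin r c (by omega) (by omega) (by omega) (by omega) hTd hne
        (Or.inl (Or.inr h42)) (hD2' r c) (hD4' r c)
        (D5of r c (Or.inr (Or.inr (Or.inl h42))))
    · exact fin 4 2 (by omega) (by omega) (by omega) (by omega) h42 (by omega)
        (Or.inl (Or.inl ⟨rfl, rfl⟩)) (hD2' 4 2) (hD4' 4 2)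
        (D5of 4 2 (Or.inl ⟨Or.inr rfl, rfl⟩))
  have hRL5go : RL T 5 (m-2) → ∃ a b, Good m n T 4 3 a b := by
    intro hrl
    obtain ⟨i, hi1, hi2, hi3⟩ := hrl
    exact fin 3 2 (by omega) (by omega) (by omega) (by omega) h32 (by omega)
      (Or.inr ⟨Or.inr ⟨3, le_rfl, le_rfl, Or.inl ⟨rfl, rfl⟩⟩, Or.inr ⟨i, hi1, hi2, Or.inr hi3⟩⟩)
      (Or.inl (Or.inl (Or.inl ⟨rfl, rfl⟩)))
      (fun hm7 => D4of52 3 2 (Or.inr (by rwa [show i = 5 from by omega] at hi3)) hm7)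
      (D5of 3 2 (Or.inl ⟨Or.inl rfl, rfl⟩))
  rcases hadj with ⟨hrr, hcb⟩ | ⟨hcc, hrb⟩
  · rcases hcb with hc1 | hc1
    · -- source (4,4)
      have B := P.2.2.2.2.2.2.2.1 (Or.inl ⟨by omega, by omega⟩)
      rcases B with hk' | hLC | hRC | hktl' | hrl5
      · exact absurd hk' hk
      · rcases hLC with h' | ⟨h', -⟩
        · exact absurd h' h32
        · exact absurd h' hk
      · rcases hRC with hg23 | ⟨h', -⟩
        · refine hRCgo hg23 ?_
          by_cases h52 : T 5 2
          · exact Or.inr h52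
          · refine Or.inl (fun hm7 => ?_)
            have QB := Q.2.2.2.2.2.2.2.1 (Or.inl ⟨by omega, by omega⟩)
            rcases QB with hf | hf | hf | hf | hf
            · exact absurd (by rwa [show m+1-2 = m-1 from by omega] at hf) hktl
            · rcases hf with hf | ⟨hf, -⟩
              · exact absurd (by rwa [show m+1-3 = 5 from by omega] at hf) h52
              · exact absurd (by rwa [show m+1-2 = m-1 from by omega] at hf) hktl
            · exact Or.inr (Or.inl hf)
            · exact absurd (by rwa [show m+1-(m-1) = 2 from by omega] at hf) hk
            · obtain ⟨i, hi1, hi2, hi3⟩ := hf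
              have : i = 5 := by omega
              subst this
              exact absurd (by rwa [show m+1-5 = 3 from by omega] at hi3) h32
        · exact absurd h' hk
      · exact absurd hktl' hktl
      · exact hRL5go hrl5
    · -- source (4,2)
      obtain ⟨-, hL, -⟩ := P.2.2.1 (by omega)
      exfalso
      rcases hL with h' | ⟨i, hi1, hi2, hi3⟩
      · exact hk h'
      · have : i = 3 := by omega
        subst this
        exact h32 hi3
  · rcases hrb with hr1 | hr1
    · -- source (5,3)
      have B := P.2.2.2.2.2.2.2.1 (Or.inr ⟨by omega, by omega⟩)
      have hQ7 : m = 7 → (LC m (fun i j => T (m+1-i) j) ∨ RC n (fun i j => T (m+1-i) j) ∨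
          (X1 m (fun i j => T (m+1-i) j) ∧ X2 n (fun i j => T (m+1-i) j))) := by
        intro hm7
        have QC := Q.2.2.2.2.2.1 ⟨by omega, by omega⟩
        exact Or.inl QC.1
      rcases B with hk' | hLC | hRC | hktl' | hrl5
      · exact absurd hk' hk
      · rcases hLC with h' | ⟨h', -⟩
        · exact absurd h' h32
        · exact absurd h' hk
      · rcases hRC with hg23 | ⟨h', -⟩
        · exact hRCgo hg23 (Or.inl hQ7)
        · exact absurd h' hk
      · exact absurd hktl' hktl
      · exact hRL5go hrl5
    · -- source (3,3)
      have h6 := P.2.2.2.2.2.1 ⟨by omega, by omega⟩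
      exfalso
      rcases h6.1 with h' | ⟨h', -⟩
      · exact h32 h'
      · exact hk h'

lemma keyC53 (K : KeyCtx m n T r c r' c') (h2 : r' = 5) (h3 : c' = 3) :
    ∃ a b, Good m n T r' c' a b := by
  obtain ⟨hm, hn, hLI, hs1, hs2, hs3, hs4, ht1, ht2, ht3, ht4, hTd, hT', hadj, hnr, hnc⟩ := K
  subst h2; subst h3
  have hm9 : 9 ≤ m := by omega
  have main : ∀ a0 b0 : ℕ, (T 5 2 ∨ (a0 = 5 ∧ b0 = 2)) →
      ∀ e f : Bool, LI m n (rr m e 5) (cc n f 3)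
        (fun i j => (rr m e i = a0 ∧ cc n f j = b0) ∨ T (rr m e i) (cc n f j)) := by
    intro a0 b0 hg e f
    have hg' : (5 = a0 ∧ 2 = b0) ∨ T 5 2 := by
      rcases hg with hg | ⟨h1, h2⟩
      · exact Or.inr hg
      · exact Or.inl ⟨h1.symm, h2.symm⟩
    cases e <;> cases f
    · show LI m n 5 3 (fun i j => (i = a0 ∧ j = b0) ∨ T i j)
      exact LI_C53 hm hn hm9 (Or.inl hg')
        (Or.inr (Or.inr (Or.inr (Or.inr ⟨5, le_rfl, by omega, hg'⟩))))
    · exact LI_N (by unfold rr cc; simp; omega)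
    · show LI m n (m+1-5) 3 (fun i j => (m+1-i = a0 ∧ j = b0) ∨ T (m+1-i) j)
      have hgm : (m+1-(m-4) = a0 ∧ 2 = b0) ∨ T (m+1-(m-4)) 2 := by
        rw [show m+1-(m-4) = 5 from by omega]; exact hg'
      by_cases hm9' : m = 9
      · subst hm9'
        refine LI_53g (by omega) hn (fun _ => Or.inl ?_) ?_
        · exact hgm
        · exact Or.inr (Or.inr (Or.inr (Or.inr ⟨5, le_rfl, by omega, hgm⟩)))
      · refine LI_SL hm hn (by omega) (by omega) (Or.inl hgm)
          (fun h => absurd h (by omega)) (fun h => absurd h (by omega))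
    · exact LI_N (by unfold rr cc; simp; omega)
  by_cases hg : T 5 2
  · refine ⟨r, c, by omega, by omega, by omega, by omega, hTd, ?_, ?_⟩
    · rcases hadj with ⟨h5, h6⟩ | ⟨h5, h6⟩ <;> omega
    · exact main r c (Or.inl hg)
  · refine ⟨5, 2, by omega, by omega, by omega, by omega, hg, by omega, ?_⟩
    exact main 5 2 (Or.inr ⟨rfl, rfl⟩)

lemma keySL (K : KeyCtx m n T r c r' c') (h2 : 6 ≤ r') (h3 : c' = 3) :
    ∃ a b, Good m n T r' c' a b := by
  obtain ⟨hm, hn, hLI, hs1, hs2, hs3, hs4, ht1, ht2, ht3, ht4, hTd, hT', hadj, hnr, hnc⟩ := K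
  subst h3
  by_cases hg : T r' 2
  · refine ⟨r, c, by omega, by omega, by omega, by omega, hTd, ?_, ?_⟩
    · rcases hadj with ⟨h5, h6⟩ | ⟨h5, h6⟩ <;> omega
    · intro e f
      cases e <;> cases f <;> simp only [rr, cc] <;> simp
      · exact LI_SL hm hn (by omega) (by omega) (Or.inl (Or.inr hg))
          (fun h => absurd h (by omega)) (fun h => absurd h (by omega))
      · exact LI_N (by omega)
      · refine LI_SL hm hn (by omega) (by omega) (Or.inl (Or.inr ?_))
          (fun h => absurd h (by omega)) (fun h => absurd h (by omega))
        rw [show m+1-(m+1-r') = r' from by omega]; exact hg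
      · exact LI_N (by omega)
  · refine ⟨r', 2, by omega, by omega, by omega, by omega, hg, by omega, ?_⟩
    intro e f
    cases e <;> cases f <;> simp only [rr, cc] <;> simp
    · exact LI_SL hm hn (by omega) (by omega) (Or.inl (Or.inl ⟨rfl, rfl⟩))
        (fun h => absurd h (by omega)) (fun h => absurd h (by omega))
    · exact LI_N (by omega)
    · exact LI_SL hm hn (by omega) (by omega) (Or.inl (Or.inl ⟨by omega, rfl⟩))
        (fun h => absurd h (by omega)) (fun h => absurd h (by omega))
    · exact LI_N (by omega)

lemma keyC44 (K : KeyCtx m n T r c r' c') (h2 : r' = 4) (h3 : c' = 4) :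
    ∃ a b, Good m n T r' c' a b := by
  obtain ⟨hm, hn, hLI, hs1, hs2, hs3, hs4, ht1, ht2, ht3, ht4, hTd, hT', hadj, hnr, hnc⟩ := K
  subst h2; subst h3
  by_cases hk : T 2 2
  · refine ⟨r, c, by omega, by omega, by omega, by omega, hTd, ?_, ?_⟩
    · rcases hadj with ⟨h5, h6⟩ | ⟨h5, h6⟩ <;> omega
    · intro e f
      cases e <;> cases f <;> simp only [rr, cc] <;> simp
      · exact LI_C44 hm hn (Or.inl (Or.inr hk))
      · exact LI_N (by omega)
      · by_cases hm7 : m = 7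
        · subst hm7
          simp only [show (7:ℕ)+1-4 = 4 from rfl]
          exact LI_C44 (by omega) hn (Or.inr (Or.inr (Or.inr (Or.inl (Or.inr hk)))))
        · exact LI_N (by omega)
      · exact LI_N (by omega)
  · refine ⟨2, 2, by omega, by omega, by omega, by omega, hk, by omega, ?_⟩
    intro e f
    cases e <;> cases f <;> simp only [rr, cc] <;> simp
    · exact LI_C44 hm hn (Or.inl (Or.inl ⟨rfl, rfl⟩))
    · exact LI_N (by omega)
    · by_cases hm7 : m = 7
      · subst hm7
        simp only [show (7:ℕ)+1-4 = 4 from rfl]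
        exact LI_C44 (by omega) hn (Or.inr (Or.inr (Or.inr (Or.inl (Or.inl ⟨by omega, rfl⟩)))))
      · exact LI_N (by omega)
    · exact LI_N (by omega)

/-- deep landing: G replies on the square the Duke just left. -/
lemma keyNone (K : KeyCtx m n T r c r' c') (h2 : 4 ≤ r') (h3 : 4 ≤ c')
    (h4 : ¬(r' = 4 ∧ c' = 4)) : ∃ a b, Good m n T r' c' a b := by
  obtain ⟨hm, hn, hLI, hs1, hs2, hs3, hs4, ht1, ht2, ht3, ht4, hTd, hT', hadj, hnr, hnc⟩ := K
  refine ⟨r, c, by omega, by omega, by omega, by omega, hTd, ?_, ?_⟩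
  · rcases hadj with ⟨h5, h6⟩ | ⟨h5, h6⟩ <;> omega
  · intro e f
    cases e <;> cases f <;> (apply LI_N; simp only [rr, cc]; simp; omega)

end KeyCases

end DukegoAux

namespace DukegoAux

/-- The key lemma: in normalized frame coordinates, G always has a good reply. -/
lemma key {m n : ℕ} {T : ℕ → ℕ → Prop} {r c r' c' : ℕ}
    (K : KeyCtx m n T r c r' c') : ∃ a b, Good m n T r' c' a b := by
  have h1 := K.ht1; have h2 := K.ht2; have h3 := K.ht3; have h4 := K.ht4
  by_cases e2 : r' = 2
  · exact keyRB K e2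
  by_cases f2 : c' = 2
  · exact keyRL K f2 e2
  by_cases e3 : r' = 3
  · by_cases f3 : c' = 3
    · exact keyC33 K e3 f3
    by_cases f4 : c' = 4
    · exact keyC34 K e3 f4
    by_cases f5 : c' = 5
    · exact keyC35 K e3 f5
    · exact keySB K e3 (by omega)
  by_cases f3 : c' = 3
  · by_cases e4 : r' = 4
    · exact keyC43 K e4 f3
    by_cases e5 : r' = 5
    · exact keyC53 K e5 f3
    · exact keySL K (by omega) f3
  by_cases e44 : r' = 4 ∧ c' = 4
  · exact keyC44 K e44.1 e44.2
  · exact keyNone K (by omega) (by omega) e44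

end DukegoAux

namespace DukegoAux

lemma xor_cancel_l (e' e0 : Bool) : xor e0 (xor e' e0) = e' := by
  cases e' <;> cases e0 <;> rfl

lemma xor_cancel_r (e' e0 : Bool) : xor (xor e' e0) e0 = e' := by
  cases e' <;> cases e0 <;> rfl

lemma rr_mem {m : ℕ} (e : Bool) {i : ℕ} (h1 : 1 ≤ i) (h2 : i ≤ m) :
    1 ≤ rr m e i ∧ rr m e i ≤ m := by
  unfold rr; split <;> omega

lemma rr_int {m : ℕ} (e : Bool) {i : ℕ} (h1 : 2 ≤ i) (h2 : i ≤ m-1) (hm : 2 ≤ m) :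
    2 ≤ rr m e i ∧ rr m e i ≤ m-1 := by
  unfold rr; split <;> omega

lemma cc_mem {n : ℕ} (f : Bool) {j : ℕ} (h1 : 1 ≤ j) (h2 : j ≤ n) :
    1 ≤ cc n f j ∧ cc n f j ≤ n := by
  unfold cc; split <;> omega

lemma cc_int {n : ℕ} (f : Bool) {j : ℕ} (h1 : 2 ≤ j) (h2 : j ≤ n-1) (hn : 2 ≤ n) :
    2 ≤ cc n f j ∧ cc n f j ≤ n-1 := by
  unfold cc; split <;> omega

theorem pres' (m n : ℕ) (hm : 7 ≤ m) (hn : 9 ≤ n) (p q : Pos)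
    (hp : Inv m n p) (hq : DukeMove m n p q) :
    ∃ u, onBoard m n u ∧ u ∉ q.stones ∧ u ≠ q.duke ∧
      Inv m n ⟨q.duke, insert u q.stones⟩ := by
  obtain ⟨hds, hd1, hd2, hd3, hd4, hLI⟩ := hp
  obtain ⟨hadj, hob, hqs, hst⟩ := hq
  obtain ⟨ho1, ho2, ho3, ho4⟩ := hob
  -- the Duke cannot have landed on the edge (shadow stones)
  have hshadow : ∀ (e : Bool), rr m e p.duke.1 = 2 →
      (rr m e 1, p.duke.2) ∈ p.stones := by
    intro e hr2
    have H := ((hLI e false).2.1 hr2).1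
    unfold Tst at H
    rwa [show cc n false (cc n false p.duke.2) = p.duke.2 from by unfold cc; simp] at H
  have hshadow' : ∀ (f : Bool), cc n f p.duke.2 = 2 →
      (p.duke.1, cc n f 1) ∈ p.stones := by
    intro f hc2
    have H := ((hLI false f).2.2.1 hc2).1
    unfold Tst at H
    rwa [show rr m false (rr m false p.duke.1) = p.duke.1 from by unfold rr; simp] at H
  have h'1 : 2 ≤ q.duke.1 := by
    by_contra hcon
    have hq1 : q.duke.1 = 1 := by omega
    rcases hadj with ⟨h1, h2⟩ | ⟨h1, h2⟩
    · omega
    · have hp12 : p.duke.1 = 2 := by omega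
      have := hshadow false (by unfold rr; simp; omega)
      unfold rr at this; simp at this
      have : q.duke ∈ p.stones := by
        have he : q.duke = (1, p.duke.2) := Prod.ext_iff.2 ⟨by omega, by omega⟩
        rwa [he]
      exact hqs this
  have h'2 : q.duke.1 ≤ m - 1 := by
    by_contra hcon
    have hq1 : q.duke.1 = m := by omega
    rcases hadj with ⟨h1, h2⟩ | ⟨h1, h2⟩
    · omega
    · have hp12 : p.duke.1 = m - 1 := by omega
      have := hshadow true (by unfold rr; simp; omega)
      unfold rr at this; simp at this
      have : q.duke ∈ p.stones := by
        have he : q.duke = (m + 1 - 1, p.duke.2) := Prod.ext_iff.2 ⟨by omega, by omega⟩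
        rwa [he]
      exact hqs this
  have h'3 : 2 ≤ q.duke.2 := by
    by_contra hcon
    have hq1 : q.duke.2 = 1 := by omega
    rcases hadj with ⟨h1, h2⟩ | ⟨h1, h2⟩
    · have hp12 : p.duke.2 = 2 := by omega
      have := hshadow' false (by unfold cc; simp; omega)
      unfold cc at this; simp at this
      have : q.duke ∈ p.stones := by
        have he : q.duke = (p.duke.1, 1) := Prod.ext_iff.2 ⟨by omega, by omega⟩
        rwa [he]
      exact hqs this
    · omega
  have h'4 : q.duke.2 ≤ n - 1 := by
    by_contra hcon
    have hq1 : q.duke.2 = n := by omega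
    rcases hadj with ⟨h1, h2⟩ | ⟨h1, h2⟩
    · have hp12 : p.duke.2 = n - 1 := by omega
      have := hshadow' true (by unfold cc; simp; omega)
      unfold cc at this; simp at this
      have : q.duke ∈ p.stones := by
        have he : q.duke = (p.duke.1, n + 1 - 1) := Prod.ext_iff.2 ⟨by omega, by omega⟩
        rwa [he]
      exact hqs this
    · omega
  -- normalization frame
  obtain ⟨e0, he0⟩ : ∃ e0 : Bool, 2 * rr m e0 q.duke.1 ≤ m + 1 := by
    by_cases h : 2 * q.duke.1 ≤ m + 1
    · exact ⟨false, by unfold rr; simpa using h⟩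
    · exact ⟨true, by unfold rr; simp; omega⟩
  obtain ⟨f0, hf0⟩ : ∃ f0 : Bool, 2 * cc n f0 q.duke.2 ≤ n + 1 := by
    by_cases h : 2 * q.duke.2 ≤ n + 1
    · exact ⟨false, by unfold cc; simpa using h⟩
    · exact ⟨true, by unfold cc; simp; omega⟩
  have hb1 := rr_int e0 hd1 hd2 (by omega)
  have hb2 := cc_int f0 hd3 hd4 (by omega)
  have hb3 := rr_int e0 h'1 h'2 (by omega)
  have hb4 := cc_int f0 h'3 h'4 (by omega)
  have K : KeyCtx m n (Tst m n e0 f0 p.stones) (rr m e0 p.duke.1) (cc n f0 p.duke.2)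
      (rr m e0 q.duke.1) (cc n f0 q.duke.2) := by
    refine ⟨hm, hn, ?_, hb1.1, hb1.2, hb2.1, hb2.2, hb3.1, hb3.2, hb4.1, hb4.2,
      ?_, ?_, ?_, he0, hf0⟩
    · -- transported invariant
      intro e f
      have H := hLI (xor e e0) (xor f f0)
      have hco : rr m (xor e e0) p.duke.1 = rr m e (rr m e0 p.duke.1) := by
        rw [rr_comp e0 e (by omega), Bool.xor_comm]
      have hco2 : cc n (xor f f0) p.duke.2 = cc n f (cc n f0 p.duke.2) := by
        rw [cc_comp f0 f (by omega), Bool.xor_comm]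
      rw [hco, hco2] at H
      refine LI_congr ⟨hm, hn⟩ ?_ (rr_le e (by omega) (rr_le e0 (by omega) (by omega)))
        (cc_le f (by omega) (cc_le f0 (by omega) (by omega))) H
      intro i j hi hj
      unfold Tst
      rw [rr_comp e e0 (by omega), cc_comp f f0 (by omega)]
    · -- duke's old square is not a stone
      unfold Tst
      rw [rr_comp e0 e0 (by omega), cc_comp f0 f0 (by omega)]
      simp only [Bool.xor_self]
      unfold rr cc; simp only [Bool.false_eq_true, if_false]
      intro hcon
      exact hds (by rwa [Prod.mk.eta] at hcon)
    · -- duke's new square is not a stone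
      unfold Tst
      rw [rr_comp e0 e0 (by omega), cc_comp f0 f0 (by omega)]
      simp only [Bool.xor_self]
      unfold rr cc; simp only [Bool.false_eq_true, if_false]
      intro hcon
      exact hqs (by rwa [Prod.mk.eta] at hcon)
    · -- adjacency in frame coordinates
      rcases hadj with ⟨h1, h2⟩ | ⟨h1, h2⟩
      · exact Or.inl ⟨by rw [h1], by unfold cc; split <;> omega⟩
      · exact Or.inr ⟨by rw [h1], by unfold rr; split <;> omega⟩
  obtain ⟨a, b, g1, g2, g3, g4, g5, g6, g7⟩ := key K
  refine ⟨(rr m e0 a, cc n f0 b), ⟨(rr_mem e0 g1 g2).1, (rr_mem e0 g1 g2).2,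
    (cc_mem f0 g3 g4).1, (cc_mem f0 g3 g4).2⟩, ?_, ?_, ?_⟩
  · rw [hst]; exact g5
  · intro hcon
    apply g6
    constructor
    · have := congrArg (fun s : Square => rr m e0 s.1) hcon
      simp only at this
      rwa [rr_comp e0 e0 (by omega), Bool.xor_self, show rr m false a = a from by unfold rr; simp]
        at this
    · have := congrArg (fun s : Square => cc n f0 s.2) hcon
      simp only at this
      rwa [cc_comp f0 f0 (by omega), Bool.xor_self, show cc n false b = b from by unfold cc; simp]
        at this
  · refine ⟨?_, h'1, h'2, h'3, h'4, ?_⟩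
    · show q.duke ∉ insert (rr m e0 a, cc n f0 b) q.stones
      rw [hst]
      simp only [Set.mem_insert_iff]
      rintro (hcon | hcon)
      · apply g6
        refine ⟨?_, ?_⟩
        · have := congrArg (fun s : Square => rr m e0 s.1) hcon
          simp only at this
          rw [rr_comp e0 e0 (by omega), Bool.xor_self,
            show rr m false a = a from by unfold rr; simp] at this
          exact this.symm
        · have := congrArg (fun s : Square => cc n f0 s.2) hcon
          simp only at this
          rw [cc_comp f0 f0 (by omega), Bool.xor_self,
            show cc n false b = b from by unfold cc; simp] at this
          exact this.symm
      · exact hqs hcon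
    · intro e' f'
      show LI m n (rr m e' q.duke.1) (cc n f' q.duke.2)
        (Tst m n e' f' (insert (rr m e0 a, cc n f0 b) q.stones))
      have H := g7 (xor e' e0) (xor f' f0)
      have hco : rr m (xor e' e0) (rr m e0 q.duke.1) = rr m e' q.duke.1 := by
        rw [rr_comp e0 (xor e' e0) (by omega), xor_cancel_l]
      have hco2 : cc n (xor f' f0) (cc n f0 q.duke.2) = cc n f' q.duke.2 := by
        rw [cc_comp f0 (xor f' f0) (by omega), xor_cancel_l]
      rw [hco, hco2] at H
      refine LI_congr ⟨hm, hn⟩ ?_ (rr_le e' (by omega) (by omega))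
        (cc_le f' (by omega) (by omega)) H
      intro i j hi hj
      unfold Tst
      rw [hst]
      simp only [Set.mem_insert_iff]
      constructor
      · rintro (⟨hA, hB⟩ | hmem)
        · left
          refine Prod.ext_iff.2 ⟨?_, ?_⟩
          · have := congrArg (rr m e0) hA
            rwa [rr_comp (xor e' e0) e0 (by omega), xor_cancel_r] at this
          · have := congrArg (cc n f0) hB
            rwa [cc_comp (xor f' f0) f0 (by omega), xor_cancel_r] at this
        · right
          rwa [rr_comp (xor e' e0) e0 (by omega), xor_cancel_r,
            cc_comp (xor f' f0) f0 (by omega), xor_cancel_r] at hmem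
      · rintro (hu | hmem)
        · left
          constructor
          · have := congrArg (fun s : Square => rr m e0 s.1) hu
            simp only at this
            rwa [rr_comp e0 e0 (by omega), Bool.xor_self,
              show rr m false a = a from by unfold rr; simp,
              show rr m e0 (rr m e' i) = rr m (xor e' e0) i from by
                rw [rr_comp e' e0 (by omega)]] at this
          · have := congrArg (fun s : Square => cc n f0 s.2) hu
            simp only at this
            rwa [cc_comp f0 f0 (by omega), Bool.xor_self,
              show cc n false b = b from by unfold cc; simp,
              show cc n f0 (cc n f' j) = cc n (xor f' f0) j from by
                rw [cc_comp f' f0 (by omega)]] at this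
        · right
          show (rr m e0 (rr m (xor e' e0) i), cc n f0 (cc n (xor f' f0) j)) ∈ p.stones
          rwa [rr_comp (xor e' e0) e0 (by omega), xor_cancel_r,
            cc_comp (xor f' f0) f0 (by omega), xor_cancel_r]

end DukegoAux

namespace DukegoAux

/-- Empty board squares (not occupied by a stone). -/
def emp (m n : ℕ) (p : Pos) : Set Square := {s | onBoard m n s ∧ s ∉ p.stones}

lemma emp_finite (m n : ℕ) (p : Pos) : (emp m n p).Finite := by
  apply Set.Finite.subset (Set.finite_Icc ((1,1) : Square) (m,n))
  rintro s ⟨⟨a1, a2, a3, a4⟩, -⟩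
  simp only [Set.mem_Icc, Prod.le_def]
  exact ⟨⟨a1, a3⟩, a2, a4⟩

/-- The main preservation lemma: whatever the Duke does, G has a reply
re-establishing the invariant. -/
theorem pres (m n : ℕ) (hm : 7 ≤ m) (hn : 9 ≤ n) (p q : Pos)
    (hp : Inv m n p) (hq : DukeMove m n p q) :
    ∃ u, onBoard m n u ∧ u ∉ q.stones ∧ u ≠ q.duke ∧
      Inv m n ⟨q.duke, insert u q.stones⟩ :=
  pres' m n hm hn p q hp hq

lemma not_isEdge_of_Inv {m n : ℕ} (hm : 7 ≤ m) (hn : 9 ≤ n) {p : Pos} (h : Inv m n p) :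
    ¬ isEdge m n p.duke := by
  obtain ⟨-, h1, h2, h3, h4, -⟩ := h
  rintro ⟨-, (he | he | he | he)⟩ <;> omega

/-- If the invariant holds, G wins with D to move. -/
lemma winAux (m n : ℕ) (hm : 7 ≤ m) (hn : 9 ≤ n) :
    ∀ k (p : Pos), Inv m n p → (emp m n p).ncard ≤ k → GWins m n true p := by
  intro k
  induction k with
  | zero =>
    intro p hp hc
    refine GWins.dturn p (not_isEdge_of_Inv hm hn hp) (fun q hq => ?_)
    exfalso
    obtain ⟨u, hub, hus, -, -⟩ := pres m n hm hn p q hp hq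
    have hmem : u ∈ emp m n p := ⟨hub, by rwa [← hq.2.2.2]⟩
    have := (Set.ncard_eq_zero (emp_finite m n p)).1 (Nat.le_zero.1 hc)
    rw [this] at hmem
    exact hmem
  | succ k ih =>
    intro p hp hc
    refine GWins.dturn p (not_isEdge_of_Inv hm hn hp) (fun q hq => ?_)
    obtain ⟨u, hub, hus, hud, hinv⟩ := pres m n hm hn p q hp hq
    have hqs : q.stones = p.stones := hq.2.2.2
    have hdq : ¬ isEdge m n q.duke := not_isEdge_of_Inv hm hn (p := ⟨q.duke, insert u q.stones⟩) hinv
    refine GWins.gturn q ⟨q.duke, insert u q.stones⟩ hdq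
      ⟨u, hub, hus, hud, rfl, rfl⟩ (ih _ hinv ?_)
    have hset : emp m n ⟨q.duke, insert u q.stones⟩ = emp m n q \ {u} := by
      ext s
      simp only [emp, Set.mem_setOf_eq, Set.mem_diff, Set.mem_singleton_iff,
        Set.mem_insert_iff, not_or]
      tauto
    have hqp : emp m n q = emp m n p := by
      simp only [emp, hqs]
    have humem : u ∈ emp m n q := ⟨hub, hus⟩
    rw [hset, hqp] at *
    have := Set.ncard_diff_singleton_lt_of_mem humem (by rw [hqp] at *; exact emp_finite m n p)
    omega

/-- The invariant holds whenever the Duke is "deep" and not on a stone. -/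
lemma Inv_deep {m n : ℕ} (hm : 7 ≤ m) (hn : 9 ≤ n) {p : Pos}
    (h0 : p.duke ∉ p.stones)
    (h1 : 4 ≤ p.duke.1) (h2 : p.duke.1 ≤ m-3) (h3 : 5 ≤ p.duke.2) (h4 : p.duke.2 ≤ n-4) :
    Inv m n p := by
  refine ⟨h0, by omega, by omega, by omega, by omega, fun e f => ?_⟩
  cases e <;> cases f <;>
    refine ⟨by simp [rr, cc]; omega, ?_, ?_, ?_, ?_, ?_, ?_, ?_, ?_⟩ <;>
    · simp only [rr, cc, if_true, if_false, Bool.false_eq_true, ite_true, ite_false]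
      intro hg
      exfalso
      omega

lemma Inv_start (m n : ℕ) (hm : 7 ≤ m) (hn : 9 ≤ n) : Inv m n (startPos m n) := by
  apply Inv_deep hm hn
  · simp [startPos]
  all_goals simp only [startPos, startSquare]; omega

end DukegoAux

/-- for 7 ≤ m ≤ n with n ≥ 9, G has a winning strategy in Dukego
on the m×n board even when D has the first move, hence regardless of who moves
first. -/
theorem dukego_G_wins (m n : ℕ) (hm : 7 ≤ m) (hmn : m ≤ n) (hn : 9 ≤ n) :
    ∀ t : Bool, GWins m n t (startPos m n) := by
  have hI := DukegoAux.Inv_start m n hm hn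
  intro t
  cases t with
  | true => exact DukegoAux.winAux m n hm hn _ _ hI le_rfl
  | false =>
    have hne : ((1,1) : Square) ≠ (startPos m n).duke := by
      simp only [startPos, startSquare, ne_eq, Prod.mk.injEq, not_and]
      intro h; omega
    refine GWins.gturn _ ⟨startSquare m n, insert (1,1) ∅⟩
      (DukegoAux.not_isEdge_of_Inv hm hn hI)
      ⟨(1,1), ⟨le_rfl, by omega, le_rfl, by omega⟩, by simp [startPos], hne, rfl, rfl⟩ ?_
    exact DukegoAux.winAux m n hm hn _ _ (DukegoAux.Inv_insert hm hn hI hne) le_rfl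
end

section
/- In Dukego on any m×n board, if a player has a winning strategy when moving second, then that player also has a winning strategy when moving first (moving first is never a disadvantage). -/
private lemma adjacent_ne {s t : Square} (h : Adjacent s t) : s ≠ t := by
  rintro rfl
  rcases h with ⟨_, h | h⟩ | ⟨_, h | h⟩ <;> omega

/-- Removing one stone from the board preserves a win for D, as long as,
whenever it is G's turn, there is still a free square (so D can simulate
the original strategy).  The free square needed is always the square just
vacated by the Duke. -/
private lemma dwins_remove (m n : ℕ) {t : Bool} {p : Pos} (h : DWins m n t p) :
    ∀ a, a ∈ p.stones → onBoard m n p.duke → p.duke ∉ p.stones →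
      (t = false → ∃ x, onBoard m n x ∧ x ∉ p.stones ∧ x ≠ p.duke) →
      DWins m n t ⟨p.duke, p.stones \ {a}⟩ := by
  induction h with
  | edge t p hp =>
      intro a _ _ _ _
      exact DWins.edge _ _ hp
  | dturn p q hmv hw ih =>
      intro a ha hob hds _
      obtain ⟨hadj, hqb, hqs, hst⟩ := hmv
      have hq : DukeMove m n ⟨p.duke, p.stones \ {a}⟩ ⟨q.duke, p.stones \ {a}⟩ :=
        ⟨hadj, hqb, fun hx => hqs hx.1, rfl⟩
      refine DWins.dturn _ _ hq ?_
      have hres := ih a (by rw [hst]; exact ha) hqb (by rw [hst]; exact hqs)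
        (fun _ => ⟨p.duke, hob, (by rw [hst]; exact hds), (adjacent_ne hadj)⟩)
      rw [hst] at hres
      exact hres
  | gturn p h ih =>
      intro a ha hob hds hfree
      refine DWins.gturn _ (fun q' hq' => ?_)
      obtain ⟨s, hsb, hsS, hsd, hqd, hqs⟩ := hq'
      by_cases hs : s ∈ p.stones
      · -- then s = a, and the removed stone is being put back: use a fresh square
        have hsa : s = a := by
          by_contra hne
          exact hsS ⟨hs, hne⟩
        obtain ⟨x, hxb, hxS, hxd⟩ := hfree rfl
        have hgm : GMove m n p ⟨p.duke, insert x p.stones⟩ :=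
          ⟨x, hxb, hxS, hxd, rfl, rfl⟩
        have hres := ih _ hgm x (Set.mem_insert _ _) hob
          (fun hmem => by
            rcases hmem with h1 | h1
            · exact hxd h1.symm
            · exact hds h1)
          (fun hcon => by simp at hcon)
        rw [Set.insert_diff_self_of_notMem hxS] at hres
        have hq'eq : q'.stones = p.stones := by
          rw [hqs, hsa, Set.insert_diff_singleton, Set.insert_eq_self.mpr ha]
        show DWins m n true ⟨q'.duke, q'.stones⟩
        rw [hqd, hq'eq]
        exact hres
      · -- s is a genuinely new stone: mimic
        have hsa : s ≠ a := fun hEq => hs (hEq ▸ ha)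
        have hgm : GMove m n p ⟨p.duke, insert s p.stones⟩ :=
          ⟨s, hsb, hs, hsd, rfl, rfl⟩
        have hres := ih _ hgm a (Set.mem_insert_of_mem _ ha) hob
          (fun hmem => by
            rcases hmem with h1 | h1
            · exact hsd h1.symm
            · exact hds h1)
          (fun hcon => by simp at hcon)
        show DWins m n true ⟨q'.duke, q'.stones⟩
        rw [hqd, hqs, Set.insert_diff_singleton_comm hsa]
        exact hres

/-- Adding one stone to the board preserves a win for G, as long as,
whenever it is G's turn, there is still a free square (the Duke's vacated
square) to use when G's intended move collides with the extra stone. -/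
private lemma gwins_add (m n : ℕ) {t : Bool} {p : Pos} (h : GWins m n t p) :
    ∀ u, onBoard m n u → u ∉ p.stones → u ≠ p.duke →
      onBoard m n p.duke → p.duke ∉ p.stones →
      (t = false → ∃ x, onBoard m n x ∧ x ∉ p.stones ∧ x ≠ u ∧ x ≠ p.duke) →
      GWins m n t ⟨p.duke, insert u p.stones⟩ := by
  induction h with
  | dturn p he h ih =>
      intro u hub huS hud hob hds _
      refine GWins.dturn _ he (fun q' hq' => ?_)
      obtain ⟨hadj, hqb, hqs, hst⟩ := hq'
      have hqd' : q'.duke ∉ p.stones := fun hx => hqs (Set.mem_insert_of_mem _ hx)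
      have hqu : u ≠ q'.duke := fun hEq => hqs (hEq ▸ Set.mem_insert _ _)
      have hmv : DukeMove m n p ⟨q'.duke, p.stones⟩ := ⟨hadj, hqb, hqd', rfl⟩
      have hres := ih _ hmv u hub huS hqu hqb hqd'
        (fun _ => ⟨p.duke, hob, hds, fun hEq => hud hEq.symm, adjacent_ne hadj⟩)
      show GWins m n false ⟨q'.duke, q'.stones⟩
      rw [hst]
      exact hres
  | gturn p q he hmv hw ih =>
      intro u hub huS hud hob hds hfree
      obtain ⟨s, hsb, hsS, hsd, hqd, hqs⟩ := hmv
      by_cases hsu : s = u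
      · -- collision: G's intended square already has the extra stone; play a fresh one
        obtain ⟨x, hxb, hxS, hxu, hxd⟩ := hfree rfl
        refine GWins.gturn _ ⟨p.duke, insert x (insert u p.stones)⟩ he
          ⟨x, hxb, (fun hmem => by
            rcases hmem with h1 | h1
            · exact hxu h1
            · exact hxS h1), hxd, rfl, rfl⟩ ?_
        have hres := ih x hxb
          (by rw [hqs, hsu]; intro hmem
              rcases hmem with h1 | h1
              · exact hxu h1
              · exact hxS h1)
          (by rw [hqd]; exact hxd)
          (by rw [hqd]; exact hob)
          (by rw [hqd, hqs, hsu]; intro hmem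
              rcases hmem with h1 | h1
              · exact hud h1.symm
              · exact hds h1)
          (fun hcon => by simp at hcon)
        rw [hqd, hqs, hsu] at hres
        exact hres
      · -- no collision: mimic G's move
        refine GWins.gturn _ ⟨p.duke, insert s (insert u p.stones)⟩ he
          ⟨s, hsb, (fun hmem => by
            rcases hmem with h1 | h1
            · exact hsu h1
            · exact hsS h1), hsd, rfl, rfl⟩ ?_
        have hres := ih u hub
          (by rw [hqs]; intro hmem
              rcases hmem with h1 | h1
              · exact hsu h1.symm
              · exact huS h1)
          (by rw [hqd]; exact hud)
          (by rw [hqd]; exact hob)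
          (by rw [hqd, hqs]; intro hmem
              rcases hmem with h1 | h1
              · exact hsd h1.symm
              · exact hds h1)
          (fun hcon => by simp at hcon)
        rw [hqd, hqs] at hres
        rw [Set.insert_comm] at hres
        exact hres

private lemma onBoard_start (m n : ℕ) (hm : 1 ≤ m) (hn : 1 ≤ n) :
    onBoard m n (startSquare m n) := by
  refine ⟨?_, ?_, ?_, ?_⟩ <;> simp [startSquare] <;> omega

private lemma onBoard_corner (m n : ℕ) (hm : 1 ≤ m) (hn : 1 ≤ n) :
    onBoard m n ((1, 1) : Square) := ⟨le_refl 1, hm, le_refl 1, hn⟩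

/-- in Dukego on any m×n board, moving first is never a
disadvantage: if a player has a winning strategy when moving second, then
that player also has a winning strategy when moving first.  (At the start
of the game, `t = true` means D moves first and `t = false` means G moves
first.) -/
theorem dukego_first_move_no_disadvantage (m n : ℕ) (hm : 1 ≤ m) (hn : 1 ≤ n) :
    (DWins m n false (startPos m n) → DWins m n true (startPos m n)) ∧
    (GWins m n true (startPos m n) → GWins m n false (startPos m n)) := by
  have hcorner : onBoard m n ((1, 1) : Square) := onBoard_corner m n hm hn
  constructor
  · -- D part
    intro hD
    by_cases hE : isEdge m n (startPos m n).duke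
    · exact DWins.edge _ _ hE
    · have hne : ((1, 1) : Square) ≠ (startPos m n).duke := by
        intro hEq
        exact hE (hEq ▸ ⟨hcorner, Or.inl rfl⟩)
      cases hD with
      | edge _ _ hp => exact absurd hp hE
      | gturn _ h =>
          have hgm : GMove m n (startPos m n)
              ⟨(startPos m n).duke, insert (1, 1) (startPos m n).stones⟩ :=
            ⟨(1, 1), hcorner, Set.notMem_empty _, hne, rfl, rfl⟩
          have h1 := h _ hgm
          have h2 := dwins_remove m n h1 (1, 1) (Set.mem_insert _ _)
            (onBoard_start m n hm hn)
            (fun hmem => by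
              rcases hmem with h1' | h1'
              · exact hne h1'.symm
              · exact Set.notMem_empty _ h1')
            (fun hcon => by simp at hcon)
          dsimp only at h2
          rw [Set.insert_diff_self_of_notMem (show ((1,1) : Square) ∉ (startPos m n).stones from Set.notMem_empty _)] at h2
          exact h2
  · -- G part
    intro hG
    have he : ¬ isEdge m n (startPos m n).duke := by
      cases hG with
      | dturn _ he _ => exact he
    have hne : ((1, 1) : Square) ≠ (startPos m n).duke := by
      intro hEq
      exact he (hEq ▸ ⟨hcorner, Or.inl rfl⟩)
    refine GWins.gturn _ ⟨(startPos m n).duke, insert (1, 1) (startPos m n).stones⟩ he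
      ⟨(1, 1), hcorner, Set.notMem_empty _, hne, rfl, rfl⟩ ?_
    exact gwins_add m n hG (1, 1) hcorner (Set.notMem_empty _) hne
      (onBoard_start m n hm hn) (Set.notMem_empty _) (fun hcon => by simp at hcon)
end

section
/- (Imminent Win) Consider a position of Dukego on an m×n board in which the Duke occupies a non-edge square in row 2 (one row north of the southernmost row), and at most one of G's stones lies in rows 1 and 2 combined. Then D has a winning strategy from this position even when it is G's turn to move. -/
lemma onBoard_mk (m n a b : ℕ) (h : 1 ≤ a ∧ a ≤ m ∧ 1 ≤ b ∧ b ≤ n) :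
    onBoard m n ((a, b) : Square) := h

lemma isEdge_mk (m n a b : ℕ) (h1 : 1 ≤ a ∧ a ≤ m ∧ 1 ≤ b ∧ b ≤ n)
    (h2 : a = 1 ∨ a = m ∨ b = 1 ∨ b = n) : isEdge m n ((a, b) : Square) := ⟨h1, h2⟩


lemma marchW (m n : ℕ) (hm : 3 ≤ m) :
    ∀ c, 2 ≤ c → c ≤ n → ∀ st : Set Square,
      (∀ k, 1 ≤ k → k ≤ c → ((1 : ℕ), k) ∉ st) →
      (∀ k, 1 ≤ k → k < c → ((2 : ℕ), k) ∉ st) →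
      DWins m n false ⟨(2, c), st⟩ := by
  intro c
  induction c with
  | zero => intro h; exact absurd h (by omega)
  | succ c ih =>
    intro hc hcn st h1 h2
    apply DWins.gturn
    rintro ⟨qd, qs⟩ ⟨s, hsb, hsn, hsd, hqd, hqs⟩
    obtain rfl : qd = ((2 : ℕ), c + 1) := hqd
    obtain rfl : qs = insert s st := hqs
    by_cases hblock : s = ((1 : ℕ), c + 1)
    · subst hblock
      refine DWins.dturn _ ⟨(2, c), insert ((1 : ℕ), c + 1) st⟩
        ⟨Or.inl ⟨rfl, Or.inl rfl⟩, (onBoard_mk m n _ _ (by omega)), ?_, rfl⟩ ?_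
      · intro hmem
        rcases Set.mem_insert_iff.1 hmem with h | h
        · exact absurd (show (2 : ℕ) = 1 from congrArg Prod.fst h) (by omega)
        · exact h2 c (by omega) (by omega) h
      · rcases Nat.lt_or_ge c 2 with h | h
        · exact DWins.edge _ _ (isEdge_mk m n _ _ (by omega) (by omega))
        · apply ih h (by omega)
          · intro k hk1 hk2 hmem
            rcases Set.mem_insert_iff.1 hmem with h' | h'
            · exact absurd (congrArg Prod.snd h') (by omega)
            · exact h1 k hk1 (by omega) h'
          · intro k hk1 hk2 hmem
            rcases Set.mem_insert_iff.1 hmem with h' | h'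
            · exact absurd (congrArg Prod.fst h') (by omega)
            · exact h2 k hk1 (by omega) h'
    · refine DWins.dturn _ ⟨(1, c + 1), insert s st⟩
        ⟨Or.inr ⟨rfl, Or.inl rfl⟩, (onBoard_mk m n _ _ (by omega)), ?_, rfl⟩
        (DWins.edge _ _ (isEdge_mk m n _ _ (by omega) (Or.inl rfl)))
      intro hmem
      rcases Set.mem_insert_iff.1 hmem with h | h
      · exact hblock h.symm
      · exact h1 (c + 1) (by omega) le_rfl h

lemma marchE (m n : ℕ) (hm : 3 ≤ m) :
    ∀ d c, n = c + d → 1 ≤ c → c < n → ∀ st : Set Square,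
      (∀ k, c ≤ k → k ≤ n → ((1 : ℕ), k) ∉ st) →
      (∀ k, c < k → k ≤ n → ((2 : ℕ), k) ∉ st) →
      DWins m n false ⟨(2, c), st⟩ := by
  intro d
  induction d with
  | zero => intro c h hc hcn; exact absurd hcn (by omega)
  | succ d ih =>
    intro c hn hc hcn st h1 h2
    apply DWins.gturn
    rintro ⟨qd, qs⟩ ⟨s, hsb, hsn, hsd, hqd, hqs⟩
    obtain rfl : qd = ((2 : ℕ), c) := hqd
    obtain rfl : qs = insert s st := hqs
    by_cases hblock : s = ((1 : ℕ), c)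
    · subst hblock
      refine DWins.dturn _ ⟨(2, c + 1), insert ((1 : ℕ), c) st⟩
        ⟨Or.inl ⟨rfl, Or.inr rfl⟩, (onBoard_mk m n _ _ (by omega)), ?_, rfl⟩ ?_
      · intro hmem
        rcases Set.mem_insert_iff.1 hmem with h | h
        · exact absurd (show (2 : ℕ) = 1 from congrArg Prod.fst h) (by omega)
        · exact h2 (c + 1) (by omega) (by omega) h
      · rcases Nat.eq_or_lt_of_le (show c + 1 ≤ n by omega) with h | h
        · exact DWins.edge _ _ (isEdge_mk m n _ _ (by omega) (by omega))
        · apply ih (c + 1) (by omega) (by omega) h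
          · intro k hk1 hk2 hmem
            rcases Set.mem_insert_iff.1 hmem with h' | h'
            · exact absurd (congrArg Prod.snd h') (by omega)
            · exact h1 k (by omega) hk2 h'
          · intro k hk1 hk2 hmem
            rcases Set.mem_insert_iff.1 hmem with h' | h'
            · exact absurd (congrArg Prod.fst h') (by omega)
            · exact h2 k (by omega) hk2 h'
    · refine DWins.dturn _ ⟨(1, c), insert s st⟩
        ⟨Or.inr ⟨rfl, Or.inl rfl⟩, (onBoard_mk m n _ _ (by omega)), ?_, rfl⟩
        (DWins.edge _ _ (isEdge_mk m n _ _ (by omega) (Or.inl rfl)))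
      intro hmem
      rcases Set.mem_insert_iff.1 hmem with h | h
      · exact hblock h.symm
      · exact h1 c le_rfl (by omega) h

/-- Imminent Win: if, in a position on the m×n board, the Duke
occupies a non-edge square in row 2 (one row north of the southernmost row)
and at most one of G's stones lies in rows 1 and 2 combined, then D has a
winning strategy from this position even when it is G's turn to move. -/
theorem dukego_imminent_win (m n : ℕ) (p : Pos) (hwf : Wellformed m n p)
    (hrow : p.duke.1 = 2) (hne : ¬ isEdge m n p.duke)
    (hstones : ∀ s ∈ p.stones, ∀ t ∈ p.stones,
      (s.1 = 1 ∨ s.1 = 2) → (t.1 = 1 ∨ t.1 = 2) → s = t) :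
    DWins m n false p := by
  obtain ⟨⟨r, c⟩, st⟩ := p
  obtain ⟨⟨hb1, hb2, hb3, hb4⟩, hds, hall⟩ := hwf
  have hr : r = 2 := hrow
  subst hr
  have hb2' : 2 ≤ m := hb2
  have hb3' : 1 ≤ c := hb3
  have hb4' : c ≤ n := hb4
  have hkey : 3 ≤ m ∧ 2 ≤ c ∧ c < n := by
    by_contra hcon
    exact hne ⟨⟨hb1, hb2, hb3, hb4⟩, show 2 = 1 ∨ 2 = m ∨ c = 1 ∨ c = n by omega⟩
  obtain ⟨hm3, hc2, hcn⟩ := hkey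
  apply DWins.gturn
  rintro ⟨qd, qs⟩ ⟨s, hsb, hsn, hsd, hqd, hqs⟩
  obtain rfl : qd = ((2 : ℕ), c) := hqd
  obtain rfl : qs = insert s st := hqs
  by_cases h1c : ((1 : ℕ), c) ∈ insert s st
  · have hdir : (∀ w ∈ insert s st, (w.1 = 1 ∨ w.1 = 2) → ¬ w.2 < c)
              ∨ (∀ w ∈ insert s st, (w.1 = 1 ∨ w.1 = 2) → ¬ c < w.2) := by
      by_contra hcon
      push_neg at hcon
      obtain ⟨⟨w, hw, hwr, hwlt⟩, ⟨e, he, her, helt⟩⟩ := hcon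
      have hwe : w ≠ e := by
        intro h; rw [h] at hwlt; omega
      have hw1 : w ≠ ((1 : ℕ), c) := by
        intro h; rw [h] at hwlt; exact absurd hwlt (by omega)
      have he1 : e ≠ ((1 : ℕ), c) := by
        intro h; rw [h] at helt; exact absurd helt (by omega)
      rcases Set.mem_insert_iff.1 hw with hw' | hw' <;>
        rcases Set.mem_insert_iff.1 he with he' | he' <;>
          rcases Set.mem_insert_iff.1 h1c with h1' | h1'
      · exact hwe (hw'.trans he'.symm)
      · exact hwe (hw'.trans he'.symm)
      · exact hw1 (hw'.trans h1'.symm)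
      · exact he1 (hstones e he' (1, c) h1' her (Or.inl rfl))
      · exact he1 (he'.trans h1'.symm)
      · exact hw1 (hstones w hw' (1, c) h1' hwr (Or.inl rfl))
      · exact hwe (hstones w hw' e he' hwr her)
      · exact hwe (hstones w hw' e he' hwr her)
    rcases hdir with hW | hE
    · obtain ⟨c', rfl⟩ : ∃ c', c = c' + 1 := ⟨c - 1, by omega⟩
      have hfree : ((2 : ℕ), c') ∉ insert s st :=
        fun h => hW _ h (Or.inr rfl) (by omega)
      refine DWins.dturn _ ⟨(2, c'), insert s st⟩
        ⟨Or.inl ⟨rfl, Or.inl rfl⟩, (onBoard_mk m n _ _ (by omega)), hfree, rfl⟩ ?_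
      rcases Nat.lt_or_ge c' 2 with h | h
      · exact DWins.edge _ _ (isEdge_mk m n _ _ (by omega) (by omega))
      · exact marchW m n hm3 c' h (by omega) _
          (fun k hk1 hk2 hmem => absurd (by omega : (k : ℕ) < c' + 1)
            (hW _ hmem (Or.inl rfl)))
          (fun k hk1 hk2 hmem => absurd (by omega : (k : ℕ) < c' + 1)
            (hW _ hmem (Or.inr rfl)))
    · have hfree : ((2 : ℕ), c + 1) ∉ insert s st :=
        fun h => hE _ h (Or.inr rfl) (by omega)
      refine DWins.dturn _ ⟨(2, c + 1), insert s st⟩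
        ⟨Or.inl ⟨rfl, Or.inr rfl⟩, (onBoard_mk m n _ _ (by omega)), hfree, rfl⟩ ?_
      rcases Nat.eq_or_lt_of_le (show c + 1 ≤ n by omega) with h | h
      · exact DWins.edge _ _ (isEdge_mk m n _ _ (by omega) (by omega))
      · exact marchE m n hm3 (n - (c + 1)) (c + 1) (by omega) (by omega) h _
          (fun k hk1 hk2 hmem => absurd (by omega : c < (k : ℕ))
            (hE _ hmem (Or.inl rfl)))
          (fun k hk1 hk2 hmem => absurd (by omega : c < (k : ℕ))
            (hE _ hmem (Or.inr rfl)))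
  · exact DWins.dturn _ ⟨(1, c), insert s st⟩
      ⟨Or.inr ⟨rfl, Or.inl rfl⟩, (onBoard_mk m n _ _ (by omega)), h1c, rfl⟩
      (DWins.edge _ _ (isEdge_mk m n _ _ (by omega) (Or.inl rfl)))
end

section
/- (Corner Win) Consider a position of Dukego on an m×n board in which the Duke occupies the square in row 3 and column n−3 (two rows north of the southernmost row and three columns west of the easternmost column), no stone of G lies in rows 1 or 2, no stone of G lies in columns n−1 or n, and no stone of G lies on the square immediately east of the Duke. Then D has a winning strategy from this position even when it is G's turn to move. -/
lemma ob_mk (m n a b : ℕ) (h1 : 1 ≤ a) (h2 : a ≤ m) (h3 : 1 ≤ b) (h4 : b ≤ n) :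
    onBoard m n (a, b) := ⟨h1, h2, h3, h4⟩

/-- Eastward ladder along row 2. -/
lemma ladderE (m n : ℕ) (hm : 2 ≤ m) :
    ∀ d c (p : Pos), n - c ≤ d → 1 ≤ c → c ≤ n → p.duke = (2, c) →
    (∀ x, c ≤ x → x ≤ n → (1, x) ∉ p.stones) →
    (∀ x, c < x → x ≤ n → (2, x) ∉ p.stones) →
    DWins m n false p := by
  intro d
  induction d with
  | zero =>
    intro c p hd hc1 hcn hduke h1 h2
    have hcn' : c = n := by omega
    exact DWins.edge _ _ ⟨by rw [hduke]; exact ob_mk m n 2 c (by omega) hm hc1 hcn,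
      by rw [hduke]; right; right; right; exact hcn'⟩
  | succ d ih =>
    intro c p hd hc1 hcn hduke h1 h2
    by_cases hce : c = n
    · exact DWins.edge _ _ ⟨by rw [hduke]; exact ob_mk m n 2 c (by omega) hm hc1 hcn,
        by rw [hduke]; right; right; right; exact hce⟩
    have hclt : c < n := lt_of_le_of_ne hcn hce
    apply DWins.gturn
    rintro q ⟨s, hsb, hsn, hsd, hqd, hqs⟩
    by_cases h1c : (1, c) ∈ q.stones
    · -- G blocked (1,c); move east to (2, c+1)
      have hs1c : s = (1, c) := by
        rw [hqs] at h1c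
        rcases h1c with h | h
        · exact h.symm ▸ rfl
        · exact absurd h (h1 c le_rfl hcn)
      refine DWins.dturn _ ⟨(2, c + 1), q.stones⟩ ⟨?_, ?_, ?_, rfl⟩ ?_
      · rw [hqd, hduke]; exact Or.inl ⟨rfl, Or.inr rfl⟩
      · exact ob_mk m n 2 (c+1) (by omega) hm (by omega) (by omega)
      · rw [hqs]
        intro hmem
        rcases hmem with h | h
        · rw [hs1c] at h; exact absurd (congrArg Prod.fst h) (by norm_num)
        · exact h2 (c + 1) (by omega) (by omega) h
      · apply ih (c + 1) _ (by omega) (by omega) (by omega) rfl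
        · intro x hx1 hx2
          rw [hqs, hs1c]
          intro hmem
          rcases hmem with h | h
          · have := congrArg Prod.snd h; simp at this; omega
          · exact h1 x (by omega) hx2 h
        · intro x hx1 hx2
          rw [hqs, hs1c]
          intro hmem
          rcases hmem with h | h
          · exact absurd (congrArg Prod.fst h) (by norm_num)
          · exact h2 x (by omega) hx2 h
    · -- (1,c) still free: move there and win
      refine DWins.dturn _ ⟨(1, c), q.stones⟩ ⟨?_, ?_, h1c, rfl⟩ ?_
      · rw [hqd, hduke]; exact Or.inr ⟨rfl, Or.inl rfl⟩
      · exact ob_mk m n 1 c le_rfl (by omega) hc1 hcn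
      · exact DWins.edge _ _ ⟨ob_mk m n 1 c le_rfl (by omega) hc1 hcn, Or.inl rfl⟩

/-- Westward ladder along row 2. -/
lemma ladderW (m n : ℕ) (hm : 2 ≤ m) :
    ∀ d c (p : Pos), c ≤ d → 1 ≤ c → c ≤ n → p.duke = (2, c) →
    (∀ x, x ≤ c → (1, x) ∉ p.stones) →
    (∀ x, x < c → (2, x) ∉ p.stones) →
    DWins m n false p := by
  intro d
  induction d with
  | zero => intro c p hd hc1; omega
  | succ d ih =>
    intro c p hd hc1 hcn hduke h1 h2
    by_cases hce : c = 1
    · exact DWins.edge _ _ ⟨by rw [hduke]; exact ob_mk m n 2 c (by omega) hm hc1 hcn,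
        by rw [hduke]; right; right; left; exact hce⟩
    have hclt : 2 ≤ c := by omega
    apply DWins.gturn
    rintro q ⟨s, hsb, hsn, hsd, hqd, hqs⟩
    by_cases h1c : (1, c) ∈ q.stones
    · have hs1c : s = (1, c) := by
        rw [hqs] at h1c
        rcases h1c with h | h
        · exact h.symm ▸ rfl
        · exact absurd h (h1 c le_rfl)
      refine DWins.dturn _ ⟨(2, c - 1), q.stones⟩ ⟨?_, ?_, ?_, rfl⟩ ?_
      · rw [hqd, hduke]; exact Or.inl ⟨rfl, Or.inl (by simp; omega)⟩
      · exact ob_mk m n 2 (c - 1) (by omega) hm (by omega) (by omega)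
      · rw [hqs]
        intro hmem
        rcases hmem with h | h
        · rw [hs1c] at h; exact absurd (congrArg Prod.fst h) (by norm_num)
        · exact h2 (c - 1) (by omega) h
      · apply ih (c - 1) _ (by omega) (by omega) (by omega) rfl
        · intro x hx1
          rw [hqs, hs1c]
          intro hmem
          rcases hmem with h | h
          · have := congrArg Prod.snd h; simp at this; omega
          · exact h1 x (by omega) h
        · intro x hx1
          rw [hqs, hs1c]
          intro hmem
          rcases hmem with h | h
          · exact absurd (congrArg Prod.fst h) (by norm_num)
          · exact h2 x (by omega) h
    · refine DWins.dturn _ ⟨(1, c), q.stones⟩ ⟨?_, ?_, h1c, rfl⟩ ?_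
      · rw [hqd, hduke]; exact Or.inr ⟨rfl, Or.inl rfl⟩
      · exact ob_mk m n 1 c le_rfl (by omega) hc1 hcn
      · exact DWins.edge _ _ ⟨ob_mk m n 1 c le_rfl (by omega) hc1 hcn, Or.inl rfl⟩

/-- Northward ladder along column n-1. -/
lemma ladderN (m n : ℕ) (hn : 2 ≤ n) :
    ∀ d k (p : Pos), m - k ≤ d → 1 ≤ k → k ≤ m → p.duke = (k, n - 1) →
    (∀ x, k ≤ x → x ≤ m → (x, n) ∉ p.stones) →
    (∀ x, k < x → x ≤ m → (x, n - 1) ∉ p.stones) →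
    DWins m n false p := by
  intro d
  induction d with
  | zero =>
    intro k p hd hk1 hkm hduke h1 h2
    have hke : k = m := by omega
    exact DWins.edge _ _ ⟨by rw [hduke]; exact ob_mk m n k (n-1) hk1 hkm (by omega) (by omega),
      by rw [hduke]; right; left; exact hke⟩
  | succ d ih =>
    intro k p hd hk1 hkm hduke h1 h2
    by_cases hke : k = m
    · exact DWins.edge _ _ ⟨by rw [hduke]; exact ob_mk m n k (n-1) hk1 hkm (by omega) (by omega),
        by rw [hduke]; right; left; exact hke⟩
    have hklt : k < m := lt_of_le_of_ne hkm hke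
    apply DWins.gturn
    rintro q ⟨s, hsb, hsn, hsd, hqd, hqs⟩
    by_cases h1c : (k, n) ∈ q.stones
    · have hs1c : s = (k, n) := by
        rw [hqs] at h1c
        rcases h1c with h | h
        · exact h.symm ▸ rfl
        · exact absurd h (h1 k le_rfl hkm)
      refine DWins.dturn _ ⟨(k + 1, n - 1), q.stones⟩ ⟨?_, ?_, ?_, rfl⟩ ?_
      · rw [hqd, hduke]; exact Or.inr ⟨rfl, Or.inr rfl⟩
      · exact ob_mk m n (k+1) (n-1) (by omega) (by omega) (by omega) (by omega)
      · rw [hqs]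
        intro hmem
        rcases hmem with h | h
        · rw [hs1c] at h; have := congrArg Prod.snd h; simp at this; omega
        · exact h2 (k + 1) (by omega) (by omega) h
      · apply ih (k + 1) _ (by omega) (by omega) (by omega) rfl
        · intro x hx1 hx2
          rw [hqs, hs1c]
          intro hmem
          rcases hmem with h | h
          · have := congrArg Prod.fst h; simp at this; omega
          · exact h1 x (by omega) hx2 h
        · intro x hx1 hx2
          rw [hqs, hs1c]
          intro hmem
          rcases hmem with h | h
          · have := congrArg Prod.snd h; simp at this; omega
          · exact h2 x (by omega) hx2 h
    · refine DWins.dturn _ ⟨(k, n), q.stones⟩ ⟨?_, ?_, h1c, rfl⟩ ?_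
      · rw [hqd, hduke]; exact Or.inl ⟨rfl, Or.inr (by simp; omega)⟩
      · exact ob_mk m n k n hk1 hkm (by omega) le_rfl
      · exact DWins.edge _ _ ⟨ob_mk m n k n hk1 hkm (by omega) le_rfl,
          Or.inr (Or.inr (Or.inr rfl))⟩

theorem dukego_corner_win' (m n : ℕ) (hm : 3 ≤ m) (hn : 4 ≤ n) (p : Pos)
    (hduke : p.duke = (3, n - 3))
    (hrows : ∀ s ∈ p.stones, ¬ (s.1 = 1 ∨ s.1 = 2))
    (hcols : ∀ s ∈ p.stones, ¬ (s.2 = n - 1 ∨ s.2 = n))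
    (heast : (3, n - 2) ∉ p.stones) :
    DWins m n false p := by
  by_cases hm3 : m = 3
  · exact DWins.edge _ _ ⟨by rw [hduke]; exact ob_mk m n 3 (n-3) (by omega) hm (by omega) (by omega),
      by rw [hduke]; right; left; exact hm3.symm⟩
  by_cases hn4 : n = 4
  · refine DWins.edge _ _ ⟨by rw [hduke]; exact ob_mk m n 3 (n-3) (by omega) hm (by omega) (by omega),
      ?_⟩
    rw [hduke]; right; right; left; simp; omega
  have hm4 : 4 ≤ m := by omega
  have hn5 : 5 ≤ n := by omega
  apply DWins.gturn
  rintro q ⟨s1, hsb1, hsn1, hsd1, hqd, hqs⟩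
  by_cases hE : (s1.1 = 1 ∨ s1.1 = 2) ∧ s1.2 ≤ n - 3
  · -- the stone is in rows 1-2 west of (or at) the Duke's column: run east
    refine DWins.dturn _ ⟨(3, n - 2), q.stones⟩ ⟨?_, ?_, ?_, rfl⟩ ?_
    · rw [hqd, hduke]; exact Or.inl ⟨rfl, Or.inr (by simp; omega)⟩
    · exact ob_mk m n 3 (n-2) (by omega) hm (by omega) (by omega)
    · rw [hqs]
      rintro (h | h)
      · have h1 : (3 : ℕ) = s1.1 := congrArg Prod.fst h
        omega
      · exact heast h
    · apply DWins.gturn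
      rintro q2 ⟨s2, hsb2, hsn2, hsd2, hqd2, hqs2⟩
      by_cases hE2 : (s2.1 = 1 ∨ s2.1 = 2) ∧ n - 2 ≤ s2.2
      · -- second stone is in rows 1-2 east: run north along column n-1
        refine DWins.dturn _ ⟨(3, n - 1), q2.stones⟩ ⟨?_, ?_, ?_, rfl⟩ ?_
        · rw [hqd2]; exact Or.inl ⟨rfl, Or.inr (by simp; omega)⟩
        · exact ob_mk m n 3 (n-1) (by omega) hm (by omega) (by omega)
        · rw [hqs2, hqs]
          rintro (h | h | h)
          · have h1 : (3 : ℕ) = s2.1 := congrArg Prod.fst h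
            omega
          · have h1 : (3 : ℕ) = s1.1 := congrArg Prod.fst h
            omega
          · exact hcols _ h (Or.inl rfl)
        · apply ladderN m n (by omega) m 3 _ (by omega) (by omega) (by omega) rfl
          · intro x hx1 hx2
            rw [hqs2, hqs]
            rintro (h | h | h)
            · have h1 : x = s2.1 := congrArg Prod.fst h
              omega
            · have h1 : x = s1.1 := congrArg Prod.fst h
              omega
            · exact hcols _ h (Or.inr rfl)
          · intro x hx1 hx2
            rw [hqs2, hqs]
            rintro (h | h | h)
            · have h1 : x = s2.1 := congrArg Prod.fst h
              omega
            · have h1 : x = s1.1 := congrArg Prod.fst h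
              omega
            · exact hcols _ h (Or.inl rfl)
      · -- otherwise: drop to row 2 and ladder east
        refine DWins.dturn _ ⟨(2, n - 2), q2.stones⟩ ⟨?_, ?_, ?_, rfl⟩ ?_
        · rw [hqd2]; exact Or.inr ⟨rfl, Or.inl rfl⟩
        · exact ob_mk m n 2 (n-2) (by omega) (by omega) (by omega) (by omega)
        · rw [hqs2, hqs]
          rintro (h | h | h)
          · have h1 : (2 : ℕ) = s2.1 := congrArg Prod.fst h
            have h2 : n - 2 = s2.2 := congrArg Prod.snd h
            omega
          · have h2 : n - 2 = s1.2 := congrArg Prod.snd h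
            omega
          · exact hrows _ h (Or.inr rfl)
        · apply ladderE m n (by omega) n (n - 2) _ (by omega) (by omega) (by omega) rfl
          · intro x hx1 hx2
            rw [hqs2, hqs]
            rintro (h | h | h)
            · have h1 : (1 : ℕ) = s2.1 := congrArg Prod.fst h
              have h2 : x = s2.2 := congrArg Prod.snd h
              omega
            · have h2 : x = s1.2 := congrArg Prod.snd h
              omega
            · exact hrows _ h (Or.inl rfl)
          · intro x hx1 hx2
            rw [hqs2, hqs]
            rintro (h | h | h)
            · have h1 : (2 : ℕ) = s2.1 := congrArg Prod.fst h
              have h2 : x = s2.2 := congrArg Prod.snd h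
              omega
            · have h2 : x = s1.2 := congrArg Prod.snd h
              omega
            · exact hrows _ h (Or.inr rfl)
  · -- otherwise: drop to row 2 and ladder west
    refine DWins.dturn _ ⟨(2, n - 3), q.stones⟩ ⟨?_, ?_, ?_, rfl⟩ ?_
    · rw [hqd, hduke]; exact Or.inr ⟨rfl, Or.inl rfl⟩
    · exact ob_mk m n 2 (n-3) (by omega) (by omega) (by omega) (by omega)
    · rw [hqs]
      rintro (h | h)
      · have h1 : (2 : ℕ) = s1.1 := congrArg Prod.fst h
        have h2 : n - 3 = s1.2 := congrArg Prod.snd h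
        omega
      · exact hrows _ h (Or.inr rfl)
    · apply ladderW m n (by omega) n (n - 3) _ (by omega) (by omega) (by omega) rfl
      · intro x hx1
        rw [hqs]
        rintro (h | h)
        · have h1 : (1 : ℕ) = s1.1 := congrArg Prod.fst h
          have h2 : x = s1.2 := congrArg Prod.snd h
          omega
        · exact hrows _ h (Or.inl rfl)
      · intro x hx1
        rw [hqs]
        rintro (h | h)
        · have h1 : (2 : ℕ) = s1.1 := congrArg Prod.fst h
          have h2 : x = s1.2 := congrArg Prod.snd h
          omega
        · exact hrows _ h (Or.inr rfl)


/-- Corner Win: if, in a position on the m×n board (m ≥ 3,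
n ≥ 4), the Duke occupies the square in row 3 and column n−3, no stone of G
lies in rows 1 or 2, no stone of G lies in columns n−1 or n, and no stone of
G lies on the square immediately east of the Duke, then D has a winning
strategy from this position even when it is G's turn to move. -/
theorem dukego_corner_win (m n : ℕ) (hm : 3 ≤ m) (hn : 4 ≤ n) (p : Pos)
    (hwf : Wellformed m n p) (hduke : p.duke = (3, n - 3))
    (hrows : ∀ s ∈ p.stones, ¬ (s.1 = 1 ∨ s.1 = 2))
    (hcols : ∀ s ∈ p.stones, ¬ (s.2 = n - 1 ∨ s.2 = n))
    (heast : (3, n - 2) ∉ p.stones) :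
    DWins m n false p :=
  dukego_corner_win' m n hm hn p hduke hrows hcols heast
end

section
/- For every n ≥ 5, D has a winning strategy in Dukego on the 5×n board even when G has the first move. -/
lemma chaseSW (n : ℕ) (hn : 5 ≤ n) (c : ℕ) (hc : 2 ≤ c) :
    ∀ st : Set Square, c ≤ n →
      (∀ j, j ≤ c → (1, j) ∉ st) → (∀ j, j < c → (2, j) ∉ st) →
      DWins 5 n false ⟨(2, c), st⟩ := by
  induction c, hc using Nat.le_induction with
  | base =>
    intro st hcn h1 h2
    apply DWins.gturn
    rintro q ⟨s, hon, hnin, hne, hqd, hqs⟩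
    have hqd' : q.duke = (2, 2) := hqd
    by_cases hse : s = (1, 2)
    · refine DWins.dturn _ ⟨(2, 1), q.stones⟩ ⟨?_, ?_, ?_, rfl⟩ (DWins.edge _ _ ?_)
      · rw [hqd']; simp [Adjacent]
      · simp [onBoard]; omega
      · rw [hqs, hse]
        simp only [Set.mem_insert_iff, not_or, Prod.mk.injEq]
        exact ⟨by omega, h2 1 (by omega)⟩
      · simp [isEdge, onBoard]; omega
    · refine DWins.dturn _ ⟨(1, 2), q.stones⟩ ⟨?_, ?_, ?_, rfl⟩ (DWins.edge _ _ ?_)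
      · rw [hqd']; simp [Adjacent]
      · simp [onBoard]; omega
      · rw [hqs]
        simp only [Set.mem_insert_iff, not_or]
        exact ⟨fun h => hse h.symm, h1 2 le_rfl⟩
      · simp [isEdge, onBoard]; omega
  | succ c hc ih =>
    intro st hcn h1 h2
    apply DWins.gturn
    rintro q ⟨s, hon, hnin, hne, hqd, hqs⟩
    have hqd' : q.duke = (2, c + 1) := hqd
    by_cases hse : s = (1, c + 1)
    · refine DWins.dturn _ ⟨(2, c), q.stones⟩ ⟨?_, ?_, ?_, rfl⟩ ?_
      · rw [hqd']; simp [Adjacent]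
      · simp [onBoard]; omega
      · rw [hqs, hse]
        simp only [Set.mem_insert_iff, not_or, Prod.mk.injEq]
        exact ⟨by omega, h2 c (by omega)⟩
      · refine ih q.stones (by omega) ?_ ?_
        · intro j hj
          rw [hqs, hse]
          simp only [Set.mem_insert_iff, not_or, Prod.mk.injEq]
          exact ⟨by omega, h1 j (by omega)⟩
        · intro j hj
          rw [hqs, hse]
          simp only [Set.mem_insert_iff, not_or, Prod.mk.injEq]
          exact ⟨by omega, h2 j (by omega)⟩
    · refine DWins.dturn _ ⟨(1, c + 1), q.stones⟩ ⟨?_, ?_, ?_, rfl⟩ (DWins.edge _ _ ?_)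
      · rw [hqd']; simp [Adjacent]
      · simp [onBoard]; omega
      · rw [hqs]
        simp only [Set.mem_insert_iff, not_or]
        exact ⟨fun h => hse h.symm, h1 (c + 1) le_rfl⟩
      · simp [isEdge, onBoard]; omega

lemma chaseNW (n : ℕ) (hn : 5 ≤ n) (c : ℕ) (hc : 2 ≤ c) :
    ∀ st : Set Square, c ≤ n →
      (∀ j, j ≤ c → (5, j) ∉ st) → (∀ j, j < c → (4, j) ∉ st) →
      DWins 5 n false ⟨(4, c), st⟩ := by
  induction c, hc using Nat.le_induction with
  | base =>
    intro st hcn h1 h2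
    apply DWins.gturn
    rintro q ⟨s, hon, hnin, hne, hqd, hqs⟩
    have hqd' : q.duke = (4, 2) := hqd
    by_cases hse : s = (5, 2)
    · refine DWins.dturn _ ⟨(4, 1), q.stones⟩ ⟨?_, ?_, ?_, rfl⟩ (DWins.edge _ _ ?_)
      · rw [hqd']; simp [Adjacent]
      · simp [onBoard]; omega
      · rw [hqs, hse]
        simp only [Set.mem_insert_iff, not_or, Prod.mk.injEq]
        exact ⟨by omega, h2 1 (by omega)⟩
      · simp [isEdge, onBoard]; omega
    · refine DWins.dturn _ ⟨(5, 2), q.stones⟩ ⟨?_, ?_, ?_, rfl⟩ (DWins.edge _ _ ?_)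
      · rw [hqd']; simp [Adjacent]
      · simp [onBoard]; omega
      · rw [hqs]
        simp only [Set.mem_insert_iff, not_or]
        exact ⟨fun h => hse h.symm, h1 2 le_rfl⟩
      · simp [isEdge, onBoard]; omega
  | succ c hc ih =>
    intro st hcn h1 h2
    apply DWins.gturn
    rintro q ⟨s, hon, hnin, hne, hqd, hqs⟩
    have hqd' : q.duke = (4, c + 1) := hqd
    by_cases hse : s = (5, c + 1)
    · refine DWins.dturn _ ⟨(4, c), q.stones⟩ ⟨?_, ?_, ?_, rfl⟩ ?_
      · rw [hqd']; simp [Adjacent]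
      · simp [onBoard]; omega
      · rw [hqs, hse]
        simp only [Set.mem_insert_iff, not_or, Prod.mk.injEq]
        exact ⟨by omega, h2 c (by omega)⟩
      · refine ih q.stones (by omega) ?_ ?_
        · intro j hj
          rw [hqs, hse]
          simp only [Set.mem_insert_iff, not_or, Prod.mk.injEq]
          exact ⟨by omega, h1 j (by omega)⟩
        · intro j hj
          rw [hqs, hse]
          simp only [Set.mem_insert_iff, not_or, Prod.mk.injEq]
          exact ⟨by omega, h2 j (by omega)⟩
    · refine DWins.dturn _ ⟨(5, c + 1), q.stones⟩ ⟨?_, ?_, ?_, rfl⟩ (DWins.edge _ _ ?_)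
      · rw [hqd']; simp [Adjacent]
      · simp [onBoard]; omega
      · rw [hqs]
        simp only [Set.mem_insert_iff, not_or]
        exact ⟨fun h => hse h.symm, h1 (c + 1) le_rfl⟩
      · simp [isEdge, onBoard]; omega

lemma chaseSE (n : ℕ) (hn : 5 ≤ n) :
    ∀ k c, n ≤ c + k → 1 ≤ c → c + 1 ≤ n → ∀ st : Set Square,
      (∀ j, c ≤ j → j ≤ n → (1, j) ∉ st) →
      (∀ j, c < j → j ≤ n → (2, j) ∉ st) →
      DWins 5 n false ⟨(2, c), st⟩ := by
  intro k
  induction k with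
  | zero => intro c h1 h2 h3 _ _ _; omega
  | succ k ih =>
    intro c hk hc1 hcn st h1 h2
    apply DWins.gturn
    rintro q ⟨s, hon, hnin, hne, hqd, hqs⟩
    have hqd' : q.duke = (2, c) := hqd
    by_cases hse : s = (1, c)
    · by_cases hce : c + 1 = n
      · refine DWins.dturn _ ⟨(2, c + 1), q.stones⟩ ⟨?_, ?_, ?_, rfl⟩ (DWins.edge _ _ ?_)
        · rw [hqd']; simp [Adjacent]
        · simp [onBoard]; omega
        · rw [hqs, hse]
          simp only [Set.mem_insert_iff, not_or, Prod.mk.injEq]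
          exact ⟨by omega, h2 (c + 1) (by omega) (by omega)⟩
        · simp [isEdge, onBoard]; omega
      · refine DWins.dturn _ ⟨(2, c + 1), q.stones⟩ ⟨?_, ?_, ?_, rfl⟩ ?_
        · rw [hqd']; simp [Adjacent]
        · simp [onBoard]; omega
        · rw [hqs, hse]
          simp only [Set.mem_insert_iff, not_or, Prod.mk.injEq]
          exact ⟨by omega, h2 (c + 1) (by omega) (by omega)⟩
        · refine ih (c + 1) (by omega) (by omega) (by omega) q.stones ?_ ?_
          · intro j hj hjn
            rw [hqs, hse]
            simp only [Set.mem_insert_iff, not_or, Prod.mk.injEq]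
            exact ⟨by omega, h1 j (by omega) hjn⟩
          · intro j hj hjn
            rw [hqs, hse]
            simp only [Set.mem_insert_iff, not_or, Prod.mk.injEq]
            exact ⟨by omega, h2 j (by omega) hjn⟩
    · refine DWins.dturn _ ⟨(1, c), q.stones⟩ ⟨?_, ?_, ?_, rfl⟩ (DWins.edge _ _ ?_)
      · rw [hqd']; simp [Adjacent]
      · simp [onBoard]; omega
      · rw [hqs]
        simp only [Set.mem_insert_iff, not_or]
        exact ⟨fun h => hse h.symm, h1 c le_rfl (by omega)⟩
      · simp [isEdge, onBoard]; omega

/-- for every n ≥ 5, D has a winning strategy in Dukego on the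
5×n board even when G has the first move. -/
theorem dukego_5xn_D_wins (n : ℕ) (hn : 5 ≤ n) :
    DWins 5 n false (startPos 5 n) := by
  have hc3 : 3 ≤ n / 2 + 1 := by omega
  have hcn : n / 2 + 1 + 2 ≤ n := by omega
  apply DWins.gturn
  rintro q ⟨s1, hon1, hnin1, hne1, hqd, hqs⟩
  have hqd' : q.duke = (3, n / 2 + 1) := by
    rw [hqd]; simp [startPos, startSquare]
  have hqs' : q.stones = insert s1 (∅ : Set Square) := hqs
  by_cases hs1 : s1 = (1, n / 2 + 1) ∨ s1 = (2, n / 2 + 1)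
  · -- Duke goes north
    refine DWins.dturn _ ⟨(4, n / 2 + 1), q.stones⟩ ⟨?_, ?_, ?_, rfl⟩ ?_
    · rw [hqd']; simp [Adjacent]
    · simp [onBoard]; omega
    · rw [hqs']
      simp only [Set.mem_insert_iff, Set.mem_empty_iff_false, not_or, Prod.mk.injEq]
      rcases hs1 with h | h <;> subst h <;>
        simp only [Prod.mk.injEq, not_and, not_false_iff, and_true] <;> omega
    · apply DWins.gturn
      rintro q2 ⟨s2, hon2, hnin2, hne2, hq2d, hq2s⟩
      have hq2d' : q2.duke = (4, n / 2 + 1) := hq2d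
      have hq2s' : q2.stones = insert s2 (insert s1 ∅) := by rw [hq2s, hqs']
      by_cases hs2 : s2 = (5, n / 2 + 1)
      · -- blocked above: chase west along row 4
        refine DWins.dturn _ ⟨(4, n / 2), q2.stones⟩ ⟨?_, ?_, ?_, rfl⟩ ?_
        · rw [hq2d']; simp [Adjacent]
        · simp [onBoard]; omega
        · rw [hq2s', hs2]
          simp only [Set.mem_insert_iff, Set.mem_empty_iff_false, not_or, Prod.mk.injEq]
          refine ⟨by omega, ?_, not_false⟩
          rcases hs1 with h | h <;> subst h <;> simp only [Prod.mk.injEq] <;> omega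
        · refine chaseNW n hn (n / 2) (by omega) q2.stones (by omega) ?_ ?_
          · intro j hj
            rw [hq2s', hs2]
            simp only [Set.mem_insert_iff, Set.mem_empty_iff_false, not_or, Prod.mk.injEq]
            refine ⟨by omega, ?_, not_false⟩
            rcases hs1 with h | h <;> subst h <;> simp only [Prod.mk.injEq] <;> omega
          · intro j hj
            rw [hq2s', hs2]
            simp only [Set.mem_insert_iff, Set.mem_empty_iff_false, not_or, Prod.mk.injEq]
            refine ⟨by omega, ?_, not_false⟩
            rcases hs1 with h | h <;> subst h <;> simp only [Prod.mk.injEq] <;> omega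
      · -- escape to (5, c)
        refine DWins.dturn _ ⟨(5, n / 2 + 1), q2.stones⟩ ⟨?_, ?_, ?_, rfl⟩ (DWins.edge _ _ ?_)
        · rw [hq2d']; simp [Adjacent]
        · simp [onBoard]; omega
        · rw [hq2s']
          simp only [Set.mem_insert_iff, Set.mem_empty_iff_false, not_or, Prod.mk.injEq]
          refine ⟨fun h => hs2 h.symm, ?_, not_false⟩
          rcases hs1 with h | h <;> subst h <;> simp only [Prod.mk.injEq] <;> omega
        · simp [isEdge, onBoard]; omega
  · -- Duke goes south
    push_neg at hs1
    obtain ⟨hs1a, hs1b⟩ := hs1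
    refine DWins.dturn _ ⟨(2, n / 2 + 1), q.stones⟩ ⟨?_, ?_, ?_, rfl⟩ ?_
    · rw [hqd']; simp [Adjacent]
    · simp [onBoard]; omega
    · rw [hqs']
      simp only [Set.mem_insert_iff, Set.mem_empty_iff_false, not_or]
      exact ⟨fun h => hs1b h.symm, not_false⟩
    · apply DWins.gturn
      rintro q2 ⟨s2, hon2, hnin2, hne2, hq2d, hq2s⟩
      have hq2d' : q2.duke = (2, n / 2 + 1) := hq2d
      have hq2s' : q2.stones = insert s2 (insert s1 ∅) := by rw [hq2s, hqs']
      by_cases hs2 : s2 = (1, n / 2 + 1)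
      · -- blocked below: chase east or west along row 2
        by_cases hw : (s1.1 = 1 ∨ s1.1 = 2) ∧ s1.2 ≤ n / 2
        · -- s1 is in the west corridor: go east
          refine DWins.dturn _ ⟨(2, n / 2 + 2), q2.stones⟩ ⟨?_, ?_, ?_, rfl⟩ ?_
          · rw [hq2d']; simp [Adjacent]
          · simp [onBoard]; omega
          · rw [hq2s', hs2]
            simp only [Set.mem_insert_iff, Set.mem_empty_iff_false, not_or, Prod.mk.injEq]
            refine ⟨by omega, ?_, not_false⟩
            intro h; rw [← h] at hw; simp at hw
          · refine chaseSE n hn n (n / 2 + 2) (by omega) (by omega) (by omega) q2.stones ?_ ?_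
            · intro j hj hjn
              rw [hq2s', hs2]
              simp only [Set.mem_insert_iff, Set.mem_empty_iff_false, not_or, Prod.mk.injEq]
              refine ⟨by omega, ?_, not_false⟩
              intro h; rw [← h] at hw; simp at hw; omega
            · intro j hj hjn
              rw [hq2s', hs2]
              simp only [Set.mem_insert_iff, Set.mem_empty_iff_false, not_or, Prod.mk.injEq]
              refine ⟨by omega, ?_, not_false⟩
              intro h; rw [← h] at hw; simp at hw; omega
        · -- go west
          refine DWins.dturn _ ⟨(2, n / 2), q2.stones⟩ ⟨?_, ?_, ?_, rfl⟩ ?_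
          · rw [hq2d']; simp [Adjacent]
          · simp [onBoard]; omega
          · rw [hq2s', hs2]
            simp only [Set.mem_insert_iff, Set.mem_empty_iff_false, not_or, Prod.mk.injEq]
            refine ⟨by omega, ?_, not_false⟩
            intro h; rw [← h] at hw; simp at hw
          · refine chaseSW n hn (n / 2) (by omega) q2.stones (by omega) ?_ ?_
            · intro j hj
              rw [hq2s', hs2]
              simp only [Set.mem_insert_iff, Set.mem_empty_iff_false, not_or, Prod.mk.injEq]
              refine ⟨by omega, ?_, not_false⟩
              intro h; rw [← h] at hw; simp at hw; omega
            · intro j hj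
              rw [hq2s', hs2]
              simp only [Set.mem_insert_iff, Set.mem_empty_iff_false, not_or, Prod.mk.injEq]
              refine ⟨by omega, ?_, not_false⟩
              intro h; rw [← h] at hw; simp at hw; omega
      · -- escape to (1, c)
        refine DWins.dturn _ ⟨(1, n / 2 + 1), q2.stones⟩ ⟨?_, ?_, ?_, rfl⟩ (DWins.edge _ _ ?_)
        · rw [hq2d']; simp [Adjacent]
        · simp [onBoard]; omega
        · rw [hq2s']
          simp only [Set.mem_insert_iff, Set.mem_empty_iff_false, not_or]
          exact ⟨fun h => hs2 h.symm, fun h => hs1a h.symm, not_false⟩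
        · simp [isEdge, onBoard]; omega
end
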